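/- arXiv:1511.05094 — 7 statements merged into one kernel-verified Lean document; each statement's English description precedes it below -/
import Mathlib

section
/- Consider k ≥ 2 classes of options with n_1, …, n_k ≥ 1 options respectively, all arrival times independent and uniform on [0,1], and let t_k := k^{-1/(k-1)}. Then the strategy σ_{t_k}, which stops at the first arrival time ≥ t_k of a relative record of any class, succeeds (i.e., the option it stops on is the overall best of its class) with probability at least t_k. -/
open MeasureTheory ProbabilityTheory Set

noncomputable def unifM : Measure ℝ := volume.restrict (Icc (0:ℝ) 1)

instance : IsProbabilityMeasure unifM :=
  ⟨by rw [unifM, Measure.restrict_apply_univ, Real.volume_Icc]; norm_num⟩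

theorem unifM_Iio {t : ℝ} (ht : 0 ≤ t) (ht1 : t ≤ 1) : unifM (Iio t) = ENNReal.ofReal t := by
  rw [unifM, Measure.restrict_apply measurableSet_Iio]
  have : Iio t ∩ Icc (0:ℝ) 1 = Ico 0 t := by
    ext u; simp only [mem_inter_iff, mem_Iio, mem_Icc, mem_Ico]
    constructor
    · rintro ⟨h1, h2, _⟩; exact ⟨h2, h1⟩
    · rintro ⟨h1, h2⟩; exact ⟨h2, h1, le_trans h2.le ht1⟩
  rw [this, Real.volume_Ico, sub_zero]

theorem unifM_Ici {s : ℝ} (hs : 0 ≤ s) (hs1 : s ≤ 1) : unifM (Ici s) = ENNReal.ofReal (1 - s) := by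
  rw [unifM, Measure.restrict_apply measurableSet_Ici]
  have : Ici s ∩ Icc (0:ℝ) 1 = Icc s 1 := by
    ext u; simp only [mem_inter_iff, mem_Ici, mem_Icc]
    constructor
    · rintro ⟨h1, _, h3⟩; exact ⟨h1, h3⟩
    · rintro ⟨h1, h2⟩; exact ⟨h1, le_trans hs h1, h2⟩
  rw [this, Real.volume_Icc]

theorem mp_split {ι' : Type} [Fintype ι'] [DecidableEq ι'] (b₀ : ι') (m : Measure ℝ) [SigmaFinite m] :
    MeasurePreserving (fun x : ι' → ℝ => (x b₀, fun b : {b : ι' // b ≠ b₀} => x b.1))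
      (Measure.pi fun _ => m) (m.prod (Measure.pi fun _ : {b : ι' // b ≠ b₀} => m)) := by
  classical
  have h1 := measurePreserving_piEquivPiSubtypeProd (fun _ : ι' => m) (fun b => b = b₀)
  have h2 : MeasurePreserving
      (Prod.map (MeasurableEquiv.piUnique (fun _ : {b : ι' // b = b₀} => ℝ))
        (id : ({b : ι' // ¬ b = b₀} → ℝ) → _))
      ((Measure.pi fun _ : {b : ι' // b = b₀} => m).prod
        (Measure.pi fun _ : {b : ι' // ¬ b = b₀} => m))
      (m.prod (Measure.pi fun _ : {b : ι' // ¬ b = b₀} => m)) :=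
    (measurePreserving_piUnique fun _ => m).prod (MeasurePreserving.id _)
  have hinst : (Subtype.fintype fun b : ι' => b = b₀) = Fintype.subtypeEq b₀ :=
    Subsingleton.elim _ _
  rw [hinst] at h1
  exact h2.comp h1

/-- The event that every coordinate `b` whose class is in `L` and whose value lies in the
window `[t, s)` is "beaten" by a strictly better coordinate of the same class with value `< t`. -/
def InnerSet {κ ι' : Type} (c : ι' → κ) (o : ι' → ℕ) (L : Finset κ) (t s : ℝ) :
    Set (ι' → ℝ) :=
  ⋂ (b : ι') (_ : c b ∈ L),
    ({x : ι' → ℝ | t ≤ x b} ∩ {x | x b < s})ᶜ ∪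
      ⋃ (b' : ι') (_ : c b' = c b ∧ o b < o b'), {x : ι' → ℝ | x b' < t}

theorem mem_innerSet_iff {κ ι' : Type} {c : ι' → κ} {o : ι' → ℕ} {L : Finset κ} {t s : ℝ}
    {x : ι' → ℝ} :
    x ∈ InnerSet c o L t s ↔ ∀ b : ι', c b ∈ L → t ≤ x b → x b < s →
      ∃ b' : ι', c b' = c b ∧ o b < o b' ∧ x b' < t := by
  simp only [InnerSet, mem_iInter, mem_union, mem_compl_iff, mem_inter_iff, mem_setOf_eq,
    mem_iUnion, not_and]
  constructor
  · intro h b hb ht hs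
    rcases h b hb with h' | ⟨b', ⟨h1, h2⟩, h3⟩
    · exact absurd hs (h' ht)
    · exact ⟨b', h1, h2, h3⟩
  · intro h b hb
    by_cases hw : t ≤ x b ∧ x b < s
    · rcases h b hb hw.1 hw.2 with ⟨b', h1, h2, h3⟩
      exact Or.inr ⟨b', ⟨h1, h2⟩, h3⟩
    · exact Or.inl (fun h1 h2 => hw ⟨h1, h2⟩)

theorem measurableSet_innerSet {κ ι' : Type} [Countable ι'] {c : ι' → κ} {o : ι' → ℕ}
    {L : Finset κ} {t s : ℝ} : MeasurableSet (InnerSet c o L t s) := by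
  refine MeasurableSet.iInter fun b => MeasurableSet.iInter fun _ => MeasurableSet.union ?_ ?_
  · exact (((measurable_pi_apply b) measurableSet_Ici).inter
      ((measurable_pi_apply b) measurableSet_Iio)).compl
  · exact MeasurableSet.iUnion fun b' => MeasurableSet.iUnion fun _ =>
      (measurable_pi_apply b') measurableSet_Iio

theorem inner_bound {κ : Type} [DecidableEq κ] (N : ℕ) :
    ∀ (ι' : Type) [Fintype ι'] [DecidableEq ι'], Fintype.card ι' ≤ N →
    ∀ (c : ι' → κ) (o : ι' → ℕ), (∀ b b', c b = c b' → o b = o b' → b = b') →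
    ∀ (L : Finset κ) (t s : ℝ), 0 < t → t ≤ s → s ≤ 1 →
      ENNReal.ofReal (t / s) ^ L.card ≤
        Measure.pi (fun _ : ι' => unifM) (InnerSet c o L t s) := by
  induction N with
  | zero =>
    intro ι' _ _ hcard c o hinj L t s ht hts hs1
    haveI : IsEmpty ι' := Fintype.card_eq_zero_iff.mp (le_antisymm hcard (Nat.zero_le _))
    have : InnerSet c o L t s = univ := by
      rw [eq_univ_iff_forall]; intro x; rw [mem_innerSet_iff]
      intro b; exact (IsEmpty.false b).elim
    rw [this, measure_univ]
    calc ENNReal.ofReal (t / s) ^ L.card ≤ 1 ^ L.card := by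
          refine pow_le_pow_left' ?_ _
          rw [← ENNReal.ofReal_one]
          exact ENNReal.ofReal_le_ofReal (div_le_one_of_le₀ hts (le_trans ht.le hts))
      _ = 1 := one_pow _
  | succ N ih =>
    intro ι' _ _ hcard c o hinj L t s ht hts hs1
    classical
    by_cases hne : ∃ b : ι', c b ∈ L
    · -- pick a coordinate of maximal rank among those whose class is in `L`
      obtain ⟨b₀, hb₀mem, hb₀max⟩ := Finset.exists_max_image
        (Finset.univ.filter fun b => c b ∈ L) o
        (by obtain ⟨b, hb⟩ := hne; exact ⟨b, Finset.mem_filter.mpr ⟨Finset.mem_univ _, hb⟩⟩)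
      have hcb₀ : c b₀ ∈ L := (Finset.mem_filter.mp hb₀mem).2
      have hmax : ∀ b : ι', c b ∈ L → o b ≤ o b₀ := fun b hb =>
        hb₀max b (Finset.mem_filter.mpr ⟨Finset.mem_univ _, hb⟩)
      set ι'' := {b : ι' // b ≠ b₀} with hι''
      have hcard'' : Fintype.card ι'' ≤ N := by
        have hlt : Fintype.card ι'' < Fintype.card ι' := by
          have h0 := Fintype.card_subtype_lt (p := fun b : ι' => b ≠ b₀) (x := b₀) (by simp)
          convert h0 using 2
        omega
      set c'' : ι'' → κ := fun b => c b.1 with hc''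
      set o'' : ι'' → ℕ := fun b => o b.1 with ho''
      have hinj'' : ∀ b b' : ι'', c'' b = c'' b' → o'' b = o'' b' → b = b' :=
        fun b b' h1 h2 => Subtype.ext (hinj _ _ h1 h2)
      have hf := mp_split b₀ unifM
      set f : (ι' → ℝ) → ℝ × (ι'' → ℝ) :=
        fun x => (x b₀, fun b : ι'' => x b.1) with hfdef
      set ν := Measure.pi fun _ : ι'' => unifM with hν
      -- the two disjoint sub-events
      set A : Set (ι' → ℝ) := f ⁻¹' (Iio t ×ˢ InnerSet c'' o'' (L.erase (c b₀)) t s) with hA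
      set B : Set (ι' → ℝ) := f ⁻¹' (Ici s ×ˢ InnerSet c'' o'' L t s) with hB
      have hAB : A ∪ B ⊆ InnerSet c o L t s := by
        rintro x (hx | hx) <;>
          obtain ⟨hx1, hx2⟩ := hx <;> rw [mem_innerSet_iff] <;> intro b hb htb hsb
        · -- x b₀ < t
          by_cases hcc : c b = c b₀
          · refine ⟨b₀, hcc.symm, ?_, hx1⟩
            rcases lt_or_eq_of_le (hmax b hb) with h | h
            · exact h
            · exact absurd (hinj b b₀ hcc h) (by rintro rfl; exact absurd hx1 (not_lt.mpr (le_trans htb (le_refl _))) )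
          · have hbne : b ≠ b₀ := fun h => hcc (by rw [h])
            have := mem_innerSet_iff.mp hx2 ⟨b, hbne⟩
              (Finset.mem_erase.mpr ⟨hcc, hb⟩) htb hsb
            obtain ⟨b', h1, h2, h3⟩ := this
            exact ⟨b'.1, h1, h2, h3⟩
        · -- s ≤ x b₀
          have hbne : b ≠ b₀ := by
            rintro rfl; exact absurd hx1 (not_le.mpr hsb)
          obtain ⟨b', h1, h2, h3⟩ := mem_innerSet_iff.mp hx2 ⟨b, hbne⟩ hb htb hsb
          exact ⟨b'.1, h1, h2, h3⟩
      have hdisj : Disjoint A B := by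
        rw [Set.disjoint_left]
        rintro x ⟨hx1, _⟩ ⟨hx2, _⟩
        exact absurd (lt_of_lt_of_le hx1 (le_trans hts hx2)) (lt_irrefl _)
      have hmeasA : MeasurableSet A :=
        hf.measurable (measurableSet_Iio.prod measurableSet_innerSet)
      have hmeasB : MeasurableSet B :=
        hf.measurable (measurableSet_Ici.prod measurableSet_innerSet)
      have hμA : Measure.pi (fun _ : ι' => unifM) A
          = ENNReal.ofReal t * ν (InnerSet c'' o'' (L.erase (c b₀)) t s) := by
        rw [hA, ← Measure.map_apply hf.measurable
          (measurableSet_Iio.prod measurableSet_innerSet), hf.map_eq,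
          Measure.prod_prod, unifM_Iio ht.le (le_trans hts hs1)]
      have hμB : Measure.pi (fun _ : ι' => unifM) B
          = ENNReal.ofReal (1 - s) * ν (InnerSet c'' o'' L t s) := by
        rw [hB, ← Measure.map_apply hf.measurable
          (measurableSet_Ici.prod measurableSet_innerSet), hf.map_eq,
          Measure.prod_prod, unifM_Ici (le_trans ht.le hts) hs1]
      have hL1 : 1 ≤ L.card := Finset.card_pos.mpr ⟨c b₀, hcb₀⟩
      have hrec : ENNReal.ofReal t * ENNReal.ofReal (t / s) ^ (L.card - 1)
          + ENNReal.ofReal (1 - s) * ENNReal.ofReal (t / s) ^ L.card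
          ≤ Measure.pi (fun _ : ι' => unifM) (InnerSet c o L t s) := by
        calc ENNReal.ofReal t * ENNReal.ofReal (t / s) ^ (L.card - 1)
            + ENNReal.ofReal (1 - s) * ENNReal.ofReal (t / s) ^ L.card
            ≤ Measure.pi (fun _ : ι' => unifM) A + Measure.pi (fun _ : ι' => unifM) B := by
              rw [hμA, hμB]
              refine add_le_add (mul_le_mul_right ?_ _) (mul_le_mul_right ?_ _)
              · rw [← Finset.card_erase_of_mem hcb₀]
                exact ih ι'' hcard'' c'' o'' hinj'' _ t s ht hts hs1
              · exact ih ι'' hcard'' c'' o'' hinj'' L t s ht hts hs1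
          _ = Measure.pi (fun _ : ι' => unifM) (A ∪ B) :=
              (measure_union hdisj hmeasB).symm
          _ ≤ _ := measure_mono hAB
      refine le_trans ?_ hrec
      have hs0 : 0 < s := lt_of_lt_of_le ht hts
      have key : ENNReal.ofReal (t / s)
          ≤ ENNReal.ofReal t + ENNReal.ofReal (1 - s) * ENNReal.ofReal (t / s) := by
        rw [← ENNReal.ofReal_mul (by linarith), ← ENNReal.ofReal_add ht.le
          (mul_nonneg (by linarith) (div_nonneg ht.le hs0.le))]
        refine ENNReal.ofReal_le_ofReal (le_of_eq ?_)
        field_simp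
        ring
      calc ENNReal.ofReal (t / s) ^ L.card
          = ENNReal.ofReal (t / s) * ENNReal.ofReal (t / s) ^ (L.card - 1) := by
            rw [← pow_succ']
            congr 1
            omega
        _ ≤ (ENNReal.ofReal t + ENNReal.ofReal (1 - s) * ENNReal.ofReal (t / s))
              * ENNReal.ofReal (t / s) ^ (L.card - 1) := mul_le_mul_left key _
        _ = ENNReal.ofReal t * ENNReal.ofReal (t / s) ^ (L.card - 1)
              + ENNReal.ofReal (1 - s) * (ENNReal.ofReal (t / s)
                * ENNReal.ofReal (t / s) ^ (L.card - 1)) := by ring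
        _ = ENNReal.ofReal t * ENNReal.ofReal (t / s) ^ (L.card - 1)
              + ENNReal.ofReal (1 - s) * ENNReal.ofReal (t / s) ^ L.card := by
            rw [← pow_succ']
            congr 3
            omega
    · have : InnerSet c o L t s = univ := by
        rw [eq_univ_iff_forall]; intro x; rw [mem_innerSet_iff]
        intro b hb; exact absurd ⟨b, hb⟩ hne
      rw [this, measure_univ]
      calc ENNReal.ofReal (t / s) ^ L.card ≤ 1 ^ L.card := by
            refine pow_le_pow_left' ?_ _
            rw [← ENNReal.ofReal_one]
            exact ENNReal.ofReal_le_ofReal (div_le_one_of_le₀ hts (le_trans ht.le hts))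
        _ = 1 := one_pow _


theorem integral_step {t : ℝ} (ht : 0 < t) (ht1 : t ≤ 1) (k : ℕ) (hk : 2 ≤ k) :
    ENNReal.ofReal ((t - t ^ k) / ((k : ℝ) - 1)) ≤
      ∫⁻ u in Icc t 1, ENNReal.ofReal (t / u) ^ k ∂volume := by
  have hcongr : ∫⁻ u in Icc t 1, ENNReal.ofReal (t / u) ^ k ∂volume
      = ∫⁻ u in Icc t 1, ENNReal.ofReal ((t / u) ^ k) ∂volume := by
    refine setLIntegral_congr_fun measurableSet_Icc (fun u hu => ?_)
    rw [ENNReal.ofReal_pow (div_nonneg ht.le (le_trans ht.le hu.1))]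
  rw [hcongr]
  have hint : IntegrableOn (fun u : ℝ => (t / u) ^ k) (Icc t 1) volume := by
    refine ContinuousOn.integrableOn_Icc ?_
    refine ContinuousOn.pow ?_ _
    exact (continuousOn_const.div continuousOn_id fun u hu => ne_of_gt (lt_of_lt_of_le ht hu.1))
  rw [← ofReal_integral_eq_lintegral_ofReal hint
    (by filter_upwards [ae_restrict_mem measurableSet_Icc] with u hu;
        exact pow_nonneg (div_nonneg ht.le (le_trans ht.le hu.1)) _)]
  refine ENNReal.ofReal_le_ofReal (le_of_eq ?_)
  have h1 : ∫ u in Icc t 1, (t / u) ^ k ∂volume = ∫ u in t..1, (t / u) ^ k := by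
    rw [integral_Icc_eq_integral_Ioc, intervalIntegral.integral_of_le ht1]
  rw [h1]
  have h2 : ∫ u in t..1, (t / u) ^ k = ∫ u in t..1, t ^ k * u ^ (-(k : ℤ)) := by
    refine intervalIntegral.integral_congr fun u hu => ?_
    rw [uIcc_of_le ht1] at hu
    have hu0 : u ≠ 0 := ne_of_gt (lt_of_lt_of_le ht hu.1)
    rw [div_pow, zpow_neg, zpow_natCast, div_eq_mul_inv]
  rw [h2, _root_.intervalIntegral.integral_const_mul, integral_zpow
    (Or.inr ⟨by omega, by rw [uIcc_of_le ht1]; rintro ⟨h0, -⟩; linarith⟩)]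
  have hk0 : (t : ℝ) ≠ 0 := ne_of_gt ht
  have hpow : t ^ k * t ^ (-(k : ℤ) + 1) = t := by
    rw [← zpow_natCast t k, ← zpow_add₀ hk0]
    norm_num
  have hcast : ((-(k : ℤ) : ℤ) : ℝ) + 1 = 1 - (k : ℝ) := by push_cast; ring
  rw [one_zpow, hcast]
  have hkR : (1:ℝ) - (k:ℝ) ≠ 0 := by
    have : (2:ℝ) ≤ (k:ℝ) := by exact_mod_cast hk
    linarith
  have hkR' : (k:ℝ) - 1 ≠ 0 := by
    have : (2:ℝ) ≤ (k:ℝ) := by exact_mod_cast hk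
    linarith
  have expand : t ^ k * (1 - t ^ (-(k : ℤ) + 1)) = t ^ k - t := by
    rw [mul_sub, mul_one, hpow]
  have hr : t ^ k * ((1 - t ^ (-(k : ℤ) + 1)) / (1 - (k:ℝ))) = (t ^ k - t) / (1 - (k:ℝ)) := by
    rw [← expand]; ring
  rw [hr, div_eq_div_iff hkR' hkR]
  ring

/-- Option `(l, i)` is a record (relative maximum within its class) at its arrival
time: every option of the same class arriving strictly earlier has a smaller index
(i.e. is worse). -/
def IsRecord {k : ℕ} {n : Fin k → ℕ} {Ω : Type*}
    (X : (Σ l : Fin k, Fin (n l)) → Ω → ℝ) (ω : Ω) (l : Fin k) (i : Fin (n l)) : Prop :=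
  ∀ j : Fin (n l), X ⟨l, j⟩ ω < X ⟨l, i⟩ ω → j < i

/-- The event that the strategy `σ_t` succeeds: the first record of any class arriving
in `[t, 1]` is the overall best option (`Fin.last (n l)`) of its class.  Class `l` has
`n l + 1 ≥ 1` options. -/
def SuccessSet {k : ℕ} {n : Fin k → ℕ} {Ω : Type*}
    (t : ℝ) (X : (Σ l : Fin k, Fin (n l + 1)) → Ω → ℝ) : Set Ω :=
  {ω | ∃ l : Fin k, X ⟨l, Fin.last (n l)⟩ ω ∈ Icc t 1 ∧
    ∀ (l' : Fin k) (j : Fin (n l' + 1)), IsRecord X ω l' j →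
      X ⟨l', j⟩ ω ∈ Icc t 1 → X ⟨l, Fin.last (n l)⟩ ω ≤ X ⟨l', j⟩ ω}

/-- **Theorem (k-class alternative best-choice, lower bound `t_k`).**
With `k ≥ 2` classes of options of sizes `n l + 1 ≥ 1`, all arrival times independent
and uniform on `[0,1]`, the strategy `σ_{t_k}` with `t_k = k^(-1/(k-1))` succeeds with
probability at least `t_k`. -/
theorem success_prob_ge_tk
    {Ω : Type*} [MeasurableSpace Ω] (μ : Measure Ω) [IsProbabilityMeasure μ]
    (k : ℕ) (hk : 2 ≤ k) (n : Fin k → ℕ)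
    (X : (Σ l : Fin k, Fin (n l + 1)) → Ω → ℝ)
    (hmeas : ∀ idx, Measurable (X idx))
    (hunif : ∀ idx, μ.map (X idx) = volume.restrict (Icc (0 : ℝ) 1))
    (hindep : iIndepFun X μ) :
    ENNReal.ofReal ((k : ℝ) ^ (-(1 : ℝ) / ((k : ℝ) - 1))) ≤
      μ (SuccessSet ((k : ℝ) ^ (-(1 : ℝ) / ((k : ℝ) - 1))) X) := by
  classical
  set t : ℝ := (k : ℝ) ^ (-(1 : ℝ) / ((k : ℝ) - 1)) with htdef
  -- basic facts about t
  have hkR : (2 : ℝ) ≤ (k : ℝ) := by exact_mod_cast hk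
  have hk0 : (0 : ℝ) < k := by linarith
  have hkm1 : (0 : ℝ) < (k : ℝ) - 1 := by linarith
  have ht0 : 0 < t := Real.rpow_pos_of_pos hk0 _
  have ht1 : t ≤ 1 := by
    refine Real.rpow_le_one_of_one_le_of_nonpos (by linarith) ?_
    exact div_nonpos_of_nonpos_of_nonneg (by norm_num) hkm1.le
  have htk : t ^ k = t / k := by
    have h1 : t ^ k = (k : ℝ) ^ ((-(1 : ℝ) / ((k : ℝ) - 1)) * k) := by
      rw [htdef, ← Real.rpow_natCast ((k:ℝ) ^ (-(1 : ℝ) / ((k : ℝ) - 1))) k,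
        ← Real.rpow_mul hk0.le]
    have h2 : (-(1 : ℝ) / ((k : ℝ) - 1)) * k = (-(1 : ℝ) / ((k : ℝ) - 1)) - 1 := by
      field_simp
      ring
    rw [h1, h2, Real.rpow_sub hk0, Real.rpow_one, htdef]
  -- the canonical map into the product space
  set Φ : Ω → ((l : Fin k) × Fin (n l + 1)) → ℝ := fun ω idx => X idx ω with hΦdef
  have hΦ : Measurable Φ := measurable_pi_lambda _ hmeas
  set π : Measure (((l : Fin k) × Fin (n l + 1)) → ℝ) := Measure.pi (fun _ : ((l : Fin k) × Fin (n l + 1)) => unifM) with hπ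
  have hmap : μ.map Φ = π := by
    refine (Measure.pi_eq fun s hs => ?_).symm
    rw [Measure.map_apply hΦ (MeasurableSet.univ_pi hs)]
    have hpre : Φ ⁻¹' (univ.pi s) = ⋂ idx ∈ Finset.univ, X idx ⁻¹' s idx := by
      ext ω
      simp [hΦdef, Set.mem_univ_pi]
    rw [hpre, hindep.measure_inter_preimage_eq_mul Finset.univ (fun idx _ => hs idx)]
    refine Finset.prod_congr rfl fun idx _ => ?_
    rw [unifM, ← hunif idx, Measure.map_apply (hmeas idx) (hs idx)]
  -- the designated "class maximum" coordinates
  set a : Fin k → ((l : Fin k) × Fin (n l + 1)) := fun l => ⟨l, Fin.last (n l)⟩ with hadef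
  -- the favorable events
  set T : Fin k → Set (((l : Fin k) × Fin (n l + 1)) → ℝ) := fun l =>
    ({x : ((l : Fin k) × Fin (n l + 1)) → ℝ | t ≤ x (a l)} ∩ {x | x (a l) ≤ 1}) ∩
    ⋂ (b : ((l : Fin k) × Fin (n l + 1))) (_ : b ≠ a l),
      ({x : ((l : Fin k) × Fin (n l + 1)) → ℝ | t ≤ x b} ∩ {x | x b < x (a l)})ᶜ ∪
        ⋃ (i : Fin (n b.1 + 1)) (_ : b.2 < i), {x : ((l : Fin k) × Fin (n l + 1)) → ℝ | x ⟨b.1, i⟩ < t} with hTdef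
  have hTmem : ∀ (l : Fin k) (x : ((l : Fin k) × Fin (n l + 1)) → ℝ), x ∈ T l ↔
      (t ≤ x (a l) ∧ x (a l) ≤ 1) ∧
        ∀ b : ((l : Fin k) × Fin (n l + 1)), b ≠ a l → t ≤ x b → x b < x (a l) →
          ∃ i : Fin (n b.1 + 1), b.2 < i ∧ x ⟨b.1, i⟩ < t := by
    intro l x
    simp only [hTdef, mem_inter_iff, mem_setOf_eq, mem_iInter, mem_union, mem_compl_iff,
      mem_iUnion, not_and]
    constructor
    · rintro ⟨h12, h3⟩
      refine ⟨h12, fun b hb htb hsb => ?_⟩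
      rcases h3 b hb with h' | ⟨i, hi, hxi⟩
      · exact absurd hsb (h' htb)
      · exact ⟨i, hi, hxi⟩
    · rintro ⟨h12, h3⟩
      refine ⟨h12, fun b hb => ?_⟩
      by_cases hw : t ≤ x b ∧ x b < x (a l)
      · rcases h3 b hb hw.1 hw.2 with ⟨i, hi, hxi⟩
        exact Or.inr ⟨i, hi, hxi⟩
      · exact Or.inl fun h1 h2 => absurd ⟨h1, h2⟩ hw
  have hTmeas : ∀ l, MeasurableSet (T l) := by
    intro l
    refine MeasurableSet.inter (MeasurableSet.inter ?_ ?_) ?_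
    · exact (measurable_pi_apply (a l)) measurableSet_Ici
    · exact (measurable_pi_apply (a l)) measurableSet_Iic
    · refine MeasurableSet.iInter fun b => MeasurableSet.iInter fun _ =>
        MeasurableSet.union ?_ ?_
      · exact (((measurable_pi_apply b) measurableSet_Ici).inter
          (measurableSet_lt (measurable_pi_apply b) (measurable_pi_apply (a l)))).compl
      · exact MeasurableSet.iUnion fun i => MeasurableSet.iUnion fun _ =>
          (measurable_pi_apply _) measurableSet_Iio
  -- the favorable events are contained in the success set
  have hsub : ∀ l, Φ ⁻¹' T l ⊆ SuccessSet t X := by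
    intro l ω hω
    rw [mem_preimage, hTmem] at hω
    obtain ⟨⟨h1, h2⟩, h3⟩ := hω
    refine ⟨l, ⟨h1, h2⟩, fun l' j hrec hmem => ?_⟩
    by_contra hlt
    rw [not_le] at hlt
    by_cases hba : (⟨l', j⟩ : ((l : Fin k) × Fin (n l + 1))) = a l
    · rw [hba] at hlt
      exact lt_irrefl _ hlt
    · obtain ⟨i, hji, hXi⟩ := h3 ⟨l', j⟩ hba hmem.1 hlt
      have : i < j := hrec i (lt_of_lt_of_le hXi hmem.1)
      exact absurd hji (not_lt.mpr this.le)
  -- pairwise a.e. disjointness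
  have hdisj : Pairwise fun l m => μ ((Φ ⁻¹' T l) ∩ (Φ ⁻¹' T m)) = 0 := by
    intro l m hlm
    have hne : a m ≠ a l := by
      intro h
      exact hlm (congrArg Sigma.fst h).symm
    have hsub2 : (Φ ⁻¹' T l) ∩ (Φ ⁻¹' T m) ⊆ Φ ⁻¹' {x : ((l : Fin k) × Fin (n l + 1)) → ℝ | x (a l) = x (a m)} := by
      rintro ω ⟨hl, hm⟩
      rw [mem_preimage, hTmem] at hl hm
      rw [mem_preimage, mem_setOf_eq]
      rcases lt_trichotomy (Φ ω (a l)) (Φ ω (a m)) with h | h | h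
      · obtain ⟨i, hji, -⟩ := hm.2 (a l) hne.symm hl.1.1 h
        exact absurd hji (not_lt.mpr (Fin.le_last i))
      · exact h
      · obtain ⟨i, hji, -⟩ := hl.2 (a m) hne hm.1.1 h
        exact absurd hji (not_lt.mpr (Fin.le_last i))
    refine measure_mono_null hsub2 ?_
    have hf := mp_split (a l) unifM
    have hDpre : Φ ⁻¹' {x : ((l : Fin k) × Fin (n l + 1)) → ℝ | x (a l) = x (a m)} =
        Φ ⁻¹' ((fun x : ((l : Fin k) × Fin (n l + 1)) → ℝ => (x (a l), fun b : {b : ((l : Fin k) × Fin (n l + 1)) // b ≠ a l} => x b.1)) ⁻¹'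
          {p : ℝ × ({b : ((l : Fin k) × Fin (n l + 1)) // b ≠ a l} → ℝ) | p.1 = p.2 ⟨a m, hne⟩}) := rfl
    rw [hDpre, ← Set.preimage_comp]
    have hmeasD : MeasurableSet {p : ℝ × ({b : ((l : Fin k) × Fin (n l + 1)) // b ≠ a l} → ℝ) | p.1 = p.2 ⟨a m, hne⟩} :=
      measurableSet_eq_fun measurable_fst ((measurable_pi_apply _).comp measurable_snd)
    have hcomp : Measurable ((fun x : ((l : Fin k) × Fin (n l + 1)) → ℝ => (x (a l), fun b : {b : ((l : Fin k) × Fin (n l + 1)) // b ≠ a l} => x b.1)) ∘ Φ) :=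
      hf.measurable.comp hΦ
    rw [Set.preimage_comp, ← Measure.map_apply hΦ (hf.measurable hmeasD), hmap,
      ← Measure.map_apply hf.measurable hmeasD, hf.map_eq]
    rw [Measure.prod_apply hmeasD]
    have hzero : ∀ u : ℝ, (Measure.pi fun _ : {b : ((l : Fin k) × Fin (n l + 1)) // b ≠ a l} => unifM) (Prod.mk u ⁻¹' {p : ℝ × ({b : ((l : Fin k) × Fin (n l + 1)) // b ≠ a l} → ℝ) | p.1 = p.2 ⟨a m, hne⟩}) = 0 := by
      intro u
      have : (Prod.mk u ⁻¹' {p : ℝ × ({b : ((l : Fin k) × Fin (n l + 1)) // b ≠ a l} → ℝ) | p.1 = p.2 ⟨a m, hne⟩}) =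
          (Function.eval (⟨a m, hne⟩ : {b : ((l : Fin k) × Fin (n l + 1)) // b ≠ a l}) :
            ({b : ((l : Fin k) × Fin (n l + 1)) // b ≠ a l} → ℝ) → ℝ) ⁻¹' ({u} : Set ℝ) := by
        ext z
        simp [Function.eval, eq_comm]
      rw [this]
      refine Measure.pi_eval_preimage_null
        (μ := fun _ : {b : ((l : Fin k) × Fin (n l + 1)) // b ≠ a l} => unifM)
        (i := ⟨a m, hne⟩) (s := ({u} : Set ℝ)) ?_
      refine le_antisymm ?_ zero_le
      calc unifM {u} ≤ volume {u} := Measure.restrict_le_self _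
        _ = 0 := Real.volume_singleton
    simp only [hzero, lintegral_zero]
  -- lower bound for each favorable event
  have hTl : ∀ l : Fin k, ENNReal.ofReal ((t - t ^ k) / ((k : ℝ) - 1)) ≤ π (T l) := by
    intro l
    have hf := mp_split (a l) unifM
    set ι'' := {b : ((l : Fin k) × Fin (n l + 1)) // b ≠ a l} with hι''
    set ν := Measure.pi fun _ : ι'' => unifM with hν
    set c : ι'' → Fin k := fun b => b.1.1 with hc
    set o : ι'' → ℕ := fun b => (b.1.2 : ℕ) with ho
    have hinj : ∀ b b' : ι'', c b = c b' → o b = o b' → b = b' := by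
      rintro ⟨⟨l₁, j₁⟩, h₁⟩ ⟨⟨l₂, j₂⟩, h₂⟩ hcc hoo
      have hcc' : l₁ = l₂ := hcc
      subst hcc'
      have hoo' : (j₁ : ℕ) = (j₂ : ℕ) := hoo
      have : j₁ = j₂ := Fin.ext hoo'
      subst this
      rfl
    set S : Set (ℝ × (ι'' → ℝ)) := (Icc t 1 ×ˢ (univ : Set (ι'' → ℝ))) ∩
      ⋂ (b : ι''),
        ({p : ℝ × (ι'' → ℝ) | t ≤ p.2 b} ∩ {p | p.2 b < p.1})ᶜ ∪
          ⋃ (b' : ι'') (_ : c b' = c b ∧ o b < o b'), {p : ℝ × (ι'' → ℝ) | p.2 b' < t}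
      with hS
    have hSmem : ∀ p : ℝ × (ι'' → ℝ), p ∈ S ↔
        (t ≤ p.1 ∧ p.1 ≤ 1) ∧ ∀ b : ι'', t ≤ p.2 b → p.2 b < p.1 →
          ∃ b' : ι'', c b' = c b ∧ o b < o b' ∧ p.2 b' < t := by
      intro p
      simp only [hS, mem_inter_iff, mem_prod, mem_Icc, mem_univ, and_true, mem_iInter,
        mem_union, mem_compl_iff, mem_setOf_eq, mem_iUnion, not_and]
      constructor
      · rintro ⟨h12, h3⟩
        refine ⟨h12, fun b htb hsb => ?_⟩
        rcases h3 b with h' | ⟨b', ⟨h1, h2⟩, h3'⟩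
        · exact absurd hsb (h' htb)
        · exact ⟨b', h1, h2, h3'⟩
      · rintro ⟨h12, h3⟩
        refine ⟨h12, fun b => ?_⟩
        by_cases hw : t ≤ p.2 b ∧ p.2 b < p.1
        · rcases h3 b hw.1 hw.2 with ⟨b', h1, h2, h3'⟩
          exact Or.inr ⟨b', ⟨h1, h2⟩, h3'⟩
        · exact Or.inl fun h1 h2 => absurd ⟨h1, h2⟩ hw
    have hSmeas : MeasurableSet S := by
      refine MeasurableSet.inter (measurableSet_Icc.prod MeasurableSet.univ) ?_
      have hsnd : ∀ b : ι'', Measurable fun p : ℝ × (ι'' → ℝ) => p.2 b :=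
        fun b => (measurable_pi_apply b).comp measurable_snd
      refine MeasurableSet.iInter fun b => MeasurableSet.union ?_ ?_
      · exact ((measurableSet_le measurable_const (hsnd b)).inter
          (measurableSet_lt (hsnd b) measurable_fst)).compl
      · exact MeasurableSet.iUnion fun b' => MeasurableSet.iUnion fun _ =>
          measurableSet_lt (hsnd b') measurable_const
    have hpre : T l = (fun x : ((l : Fin k) × Fin (n l + 1)) → ℝ => (x (a l), fun b : ι'' => x b.1)) ⁻¹' S := by
      ext x
      rw [hTmem, mem_preimage, hSmem]
      constructor
      · rintro ⟨⟨h1, h2⟩, h3⟩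
        refine ⟨⟨h1, h2⟩, fun b htb hsb => ?_⟩
        obtain ⟨i, hji, hXi⟩ := h3 b.1 b.2 htb hsb
        have hine : (⟨b.1.1, i⟩ : ((l : Fin k) × Fin (n l + 1))) ≠ a l := by
          intro heq
          rw [heq] at hXi
          linarith
        refine ⟨⟨⟨b.1.1, i⟩, hine⟩, rfl, ?_, hXi⟩
        exact hji
      · rintro ⟨⟨h1, h2⟩, h3⟩
        refine ⟨⟨h1, h2⟩, fun b hb htb hsb => ?_⟩
        obtain ⟨⟨⟨l₂, j₂⟩, hne₂⟩, hcc, hoo, hlt₂⟩ := h3 ⟨b, hb⟩ htb hsb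
        obtain ⟨lb, jb⟩ := b
        have hcc' : l₂ = lb := hcc
        subst hcc'
        have hoo' : (jb : ℕ) < (j₂ : ℕ) := hoo
        exact ⟨j₂, hoo', hlt₂⟩
    -- compute the measure via the product decomposition
    rw [hpre, ← Measure.map_apply hf.measurable hSmeas, hf.map_eq, Measure.prod_apply hSmeas]
    have hbound : ∀ u : ℝ, (Icc t 1).indicator (fun u => ENNReal.ofReal (t / u) ^ k) u ≤
        ν (Prod.mk u ⁻¹' S) := by
      intro u
      by_cases hu : u ∈ Icc t 1
      · rw [indicator_of_mem hu]
        have hsubset : InnerSet c o Finset.univ t u ⊆ Prod.mk u ⁻¹' S := by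
          intro z hz
          rw [mem_preimage, hSmem]
          refine ⟨⟨hu.1, hu.2⟩, fun b htb hsb => ?_⟩
          exact mem_innerSet_iff.mp hz b (Finset.mem_univ _) htb hsb
        refine le_trans ?_ (measure_mono hsubset)
        have := inner_bound (κ := Fin k) (Fintype.card ι'') ι'' le_rfl c o hinj
          Finset.univ t u ht0 hu.1 hu.2
        simpa [Finset.card_univ] using this
      · rw [indicator_of_notMem hu]
        exact zero_le
    calc ENNReal.ofReal ((t - t ^ k) / ((k : ℝ) - 1))
        ≤ ∫⁻ u in Icc t 1, ENNReal.ofReal (t / u) ^ k ∂volume := integral_step ht0 ht1 k hk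
      _ = ∫⁻ u in Icc t 1, ENNReal.ofReal (t / u) ^ k ∂unifM := by
          rw [unifM, Measure.restrict_restrict measurableSet_Icc,
            inter_eq_left.mpr (Icc_subset_Icc ht0.le le_rfl)]
      _ = ∫⁻ u, (Icc t 1).indicator (fun u => ENNReal.ofReal (t / u) ^ k) u ∂unifM := by
          rw [lintegral_indicator measurableSet_Icc]
      _ ≤ ∫⁻ u, ν (Prod.mk u ⁻¹' S) ∂unifM := lintegral_mono hbound
  -- put everything together
  have hμT : ∀ l : Fin k, ENNReal.ofReal ((t - t ^ k) / ((k : ℝ) - 1)) ≤ μ (Φ ⁻¹' T l) := by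
    intro l
    rw [← Measure.map_apply hΦ (hTmeas l), hmap]
    exact hTl l
  have hUnion : μ (⋃ l : Fin k, Φ ⁻¹' T l) = ∑ l : Fin k, μ (Φ ⁻¹' T l) := by
    rw [measure_iUnion₀ (fun l m hlm => hdisj hlm)
      (fun l => ((hTmeas l).preimage hΦ).nullMeasurableSet), tsum_fintype]
  have hconst : (t - t ^ k) / ((k : ℝ) - 1) = t / k := by
    rw [htk]
    field_simp
  calc ENNReal.ofReal t = ∑ _l : Fin k, ENNReal.ofReal (t / k) := by
        rw [Finset.sum_const, Finset.card_univ, Fintype.card_fin, nsmul_eq_mul,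
          ← ENNReal.ofReal_natCast k, ← ENNReal.ofReal_mul (by positivity)]
        congr 1
        field_simp
    _ ≤ ∑ l : Fin k, μ (Φ ⁻¹' T l) := by
        refine Finset.sum_le_sum fun l _ => ?_
        rw [← hconst]
        exact hμT l
    _ = μ (⋃ l : Fin k, Φ ⁻¹' T l) := hUnion.symm
    _ ≤ μ (SuccessSet t X) := measure_mono (Set.iUnion_subset hsub)
end

section
/- Consider two classes of options with n_1, n_2 ≥ 1 options respectively, all arrival times independent and uniform on [0,1]. Then the strategy σ_{1/2}, which stops at the first arrival time ≥ 1/2 of a relative record of either class, succeeds (i.e., the option it stops on is the overall best of its class) with probability at least 1/2, and this holds for any values of n_1 and n_2. -/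
open MeasureTheory ProbabilityTheory Set

noncomputable section
namespace HalfRule

abbrev nu : Measure ℝ := volume.restrict (Icc 0 1)

instance : IsProbabilityMeasure nu :=
  ⟨by rw [Measure.restrict_apply_univ, Real.volume_Icc]; norm_num⟩

abbrev pim (m : ℕ) : Measure (Fin m → ℝ) := Measure.pi fun _ => nu

/-- The "no dangerous record among these coordinates" event: every coordinate arriving
before time `s` is either `< t` or dominated by a later-indexed coordinate `< t`. -/
def Eset (t s : ℝ) (m : ℕ) : Set (Fin m → ℝ) :=
  {y | ∀ i, y i ≤ s → y i < t ∨ ∃ i', i < i' ∧ y i' < t}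

def Dset (t s : ℝ) (m : ℕ) : Set (ℝ × (Fin m → ℝ)) :=
  (Iio t ×ˢ univ) ∪ (Ioi s ×ˢ Eset t s m)

lemma measurableSet_Eset (t s : ℝ) (m : ℕ) : MeasurableSet (Eset t s m) := by
  have h : Eset t s m = ⋂ i, ({y : Fin m → ℝ | y i ≤ s}ᶜ ∪
      ({y | y i < t} ∪ ⋃ i', ⋃ _h : i < i', {y : Fin m → ℝ | y i' < t})) := by
    ext y
    simp only [Eset, mem_setOf_eq, mem_iInter, mem_union, mem_compl_iff, mem_iUnion]
    refine forall_congr' fun i => ?_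
    rw [imp_iff_not_or]
    tauto
  rw [h]
  refine MeasurableSet.iInter fun i => ((measurableSet_le (measurable_pi_apply i)
    measurable_const).compl.union (((measurable_pi_apply i) measurableSet_Iio).union
    (MeasurableSet.iUnion fun i' => MeasurableSet.iUnion fun _ =>
      (measurable_pi_apply i') measurableSet_Iio)))

lemma measurableSet_Dset (t s : ℝ) (m : ℕ) : MeasurableSet (Dset t s m) :=
  ((measurableSet_Iio.prod MeasurableSet.univ).union
    (measurableSet_Ioi.prod (measurableSet_Eset t s m)))

lemma Eset_succ (t s : ℝ) (m : ℕ) :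
    Eset t s (m + 1) =
      (MeasurableEquiv.piFinSuccAbove (fun _ : Fin (m + 1) => ℝ) (Fin.last m)) ⁻¹' Dset t s m := by
  ext y
  have he : (MeasurableEquiv.piFinSuccAbove (fun _ : Fin (m + 1) => ℝ) (Fin.last m)) y
      = (y (Fin.last m), fun j : Fin m => y j.castSucc) := by
    simp [MeasurableEquiv.piFinSuccAbove, Fin.insertNthEquiv, Fin.succAbove_last]
    rfl
  simp only [mem_preimage, he, Dset, mem_union, mem_prod, mem_Iio, mem_Ioi, mem_univ, and_true]
  constructor
  · intro hy
    by_cases hlt : y (Fin.last m) < t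
    · exact Or.inl hlt
    · have hs : s < y (Fin.last m) := by
        by_contra hns
        rcases hy (Fin.last m) (not_lt.mp hns) with h | ⟨i', hi', _⟩
        · exact hlt h
        · exact absurd hi' (not_lt.mpr (Fin.le_last i'))
      refine Or.inr ⟨hs, fun j hj => ?_⟩
      rcases hy j.castSucc hj with h | ⟨i', hi', hit⟩
      · exact Or.inl h
      · have hne : i' ≠ Fin.last m := by
          rintro rfl
          exact hlt hit
        refine Or.inr ⟨i'.castPred hne, ?_, show y ((i'.castPred hne).castSucc) < t by
          rwa [Fin.castSucc_castPred]⟩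
        rw [← Fin.castSucc_lt_castSucc_iff, Fin.castSucc_castPred]
        exact hi'
  · rintro (hlt | ⟨hs, hE⟩) i hi
    · by_cases hi' : i = Fin.last m
      · exact Or.inl (hi' ▸ hlt)
      · exact Or.inr ⟨Fin.last m, Fin.lt_last_iff_ne_last.mpr hi', hlt⟩
    · by_cases hi' : i = Fin.last m
      · exact absurd hi (by rw [hi']; exact not_le.mpr hs)
      · set j := i.castPred hi' with hj
        have hij : i = j.castSucc := (Fin.castSucc_castPred i hi').symm
        rcases hE j (show y j.castSucc ≤ s by rwa [← hij]) with h | ⟨j', hj', hjt⟩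
        · exact Or.inl (by rw [hij]; exact h)
        · exact Or.inr ⟨j'.castSucc, by rw [hij]; exact Fin.castSucc_lt_castSucc_iff.mpr hj', hjt⟩


lemma nu_Iio (t : ℝ) (ht0 : 0 ≤ t) (ht1 : t ≤ 1) : nu (Iio t) = ENNReal.ofReal t := by
  rw [Measure.restrict_apply measurableSet_Iio]
  have h : Iio t ∩ Icc 0 1 = Ico 0 t := by
    ext x
    simp only [mem_inter_iff, mem_Iio, mem_Icc, mem_Ico]
    constructor
    · rintro ⟨h1, h2, _⟩; exact ⟨h2, h1⟩
    · rintro ⟨h1, h2⟩; exact ⟨h2, h1, le_trans h2.le ht1⟩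
  rw [h, Real.volume_Ico, sub_zero]

lemma nu_Ioi (s : ℝ) (hs0 : 0 ≤ s) : nu (Ioi s) = ENNReal.ofReal (1 - s) := by
  rw [Measure.restrict_apply measurableSet_Ioi]
  have h : Ioi s ∩ Icc 0 1 = Ioc s 1 := by
    ext x
    simp only [mem_inter_iff, mem_Ioi, mem_Icc, mem_Ioc]
    constructor
    · rintro ⟨h1, _, h3⟩; exact ⟨h1, h3⟩
    · rintro ⟨h1, h2⟩; exact ⟨h1, le_trans hs0 h1.le, h2⟩
  rw [h, Real.volume_Ioc]

lemma Dset_measure (t s : ℝ) (m : ℕ) (ht0 : 0 ≤ t) (hts : t ≤ s) (hs1 : s ≤ 1) :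
    (nu.prod (pim m)) (Dset t s m)
      = ENNReal.ofReal t + ENNReal.ofReal (1 - s) * pim m (Eset t s m) := by
  rw [Dset, measure_union ?hd (measurableSet_Ioi.prod (measurableSet_Eset t s m)),
    Measure.prod_prod, Measure.prod_prod, measure_univ, mul_one,
    nu_Iio t ht0 (hts.trans hs1), nu_Ioi s (ht0.trans hts)]
  case hd =>
    rw [Set.disjoint_left]
    rintro ⟨a, b⟩ ⟨ha, -⟩ ⟨ha', -⟩
    simp only [mem_Iio] at ha
    simp only [mem_Ioi] at ha'
    linarith

lemma le_aux {t s : ℝ} (ht : 0 < t) (hts : t ≤ s) (hs1 : s ≤ 1) {x : ENNReal}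
    (hx : ENNReal.ofReal (t / s) ≤ x) :
    ENNReal.ofReal (t / s) ≤ ENNReal.ofReal t + ENNReal.ofReal (1 - s) * x := by
  have hs : (0 : ℝ) < s := ht.trans_le hts
  calc ENNReal.ofReal (t / s)
      = ENNReal.ofReal t + ENNReal.ofReal (1 - s) * ENNReal.ofReal (t / s) := by
        rw [← ENNReal.ofReal_mul (by linarith : (0:ℝ) ≤ 1 - s), ← ENNReal.ofReal_add (le_of_lt ht)
          (mul_nonneg (by linarith) (by positivity))]
        congr 1
        field_simp
        ring
    _ ≤ ENNReal.ofReal t + ENNReal.ofReal (1 - s) * x :=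
        add_le_add_right (mul_le_mul_right hx _) _

lemma Eset_ge (t s : ℝ) (ht : 0 < t) (hts : t ≤ s) (hs1 : s ≤ 1) :
    ∀ m, ENNReal.ofReal (t / s) ≤ pim m (Eset t s m) := by
  intro m
  induction m with
  | zero =>
    have h : Eset t s 0 = univ := by
      ext y; simp only [Eset, mem_setOf_eq, mem_univ, iff_true]
      intro i; exact i.elim0
    rw [h, measure_univ]
    exact ENNReal.ofReal_le_one.mpr ((div_le_one (ht.trans_le hts)).mpr hts)
  | succ m ih =>
    rw [Eset_succ,
      (measurePreserving_piFinSuccAbove (fun _ : Fin (m + 1) => nu)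
        (Fin.last m)).measure_preimage (measurableSet_Dset t s m).nullMeasurableSet,
      Dset_measure t s m ht.le hts hs1]
    exact le_aux ht hts hs1 ih

lemma Dset_ge (t s : ℝ) (ht : 0 < t) (hts : t ≤ s) (hs1 : s ≤ 1) (m : ℕ) :
    ENNReal.ofReal (t / s) ≤ (nu.prod (pim m)) (Dset t s m) := by
  rw [Dset_measure t s m ht.le hts hs1]
  exact le_aux ht hts hs1 (Eset_ge t s ht hts hs1 m)


def ERel (t : ℝ) (m : ℕ) : Set (ℝ × (Fin m → ℝ)) := {v | v.2 ∈ Eset t v.1 m}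

def DRel (t : ℝ) (m : ℕ) : Set (ℝ × (ℝ × (Fin m → ℝ))) := {v | v.2 ∈ Dset t v.1 m}

lemma measurableSet_ERel (t : ℝ) (m : ℕ) : MeasurableSet (ERel t m) := by
  have h : ERel t m = ⋂ i, ({v : ℝ × (Fin m → ℝ) | v.2 i ≤ v.1}ᶜ ∪
      ({v | v.2 i < t} ∪ ⋃ i', ⋃ _h : i < i', {v : ℝ × (Fin m → ℝ) | v.2 i' < t})) := by
    ext v
    simp only [ERel, Eset, mem_setOf_eq, mem_iInter, mem_union, mem_compl_iff, mem_iUnion]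
    refine forall_congr' fun i => ?_
    rw [imp_iff_not_or]
    tauto
  rw [h]
  refine MeasurableSet.iInter fun i => ?_
  refine ((measurableSet_le ((measurable_pi_apply i).comp measurable_snd)
    measurable_fst).compl.union ((((measurable_pi_apply i).comp measurable_snd)
      measurableSet_Iio).union (MeasurableSet.iUnion fun i' => MeasurableSet.iUnion fun _ =>
      ((measurable_pi_apply i').comp measurable_snd) measurableSet_Iio)))

lemma mem_DRel {t : ℝ} {m : ℕ} {v : ℝ × (ℝ × (Fin m → ℝ))} :
    v ∈ DRel t m ↔ v.2.1 < t ∨ (v.1 < v.2.1 ∧ (v.1, v.2.2) ∈ ERel t m) := by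
  simp only [DRel, Dset, mem_setOf_eq, mem_union, mem_prod, mem_Iio, mem_Ioi, mem_univ, and_true,
    ERel]

lemma measurableSet_DRel (t : ℝ) (m : ℕ) : MeasurableSet (DRel t m) := by
  have h : DRel t m = {v : ℝ × (ℝ × (Fin m → ℝ)) | v.2.1 < t} ∪
      ({v | v.1 < v.2.1} ∩ ((fun v : ℝ × (ℝ × (Fin m → ℝ)) => (v.1, v.2.2)) ⁻¹' ERel t m)) := by
    ext v
    rw [mem_DRel]
    simp [mem_union, mem_inter_iff, mem_setOf_eq, mem_preimage]
  rw [h]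
  exact ((measurable_fst.comp measurable_snd) measurableSet_Iio).union
    ((measurableSet_lt measurable_fst (measurable_fst.comp measurable_snd)).inter
      ((measurable_fst.prodMk (measurable_snd.comp measurable_snd))
        (measurableSet_ERel t m)))

def Bset (t : ℝ) (p q : ℕ) : Set ((ℝ × (Fin p → ℝ)) × (ℝ × (Fin q → ℝ))) :=
  {w | w.1.1 ∈ Icc t 1 ∧ w.1 ∈ ERel t p ∧ (w.1.1, w.2) ∈ DRel t q}

lemma measurableSet_Bset (t : ℝ) (p q : ℕ) : MeasurableSet (Bset t p q) := by
  refine MeasurableSet.inter ?_ (MeasurableSet.inter ?_ ?_)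
  · exact (measurable_fst.comp measurable_fst) measurableSet_Icc
  · exact measurable_fst (measurableSet_ERel t p)
  · exact ((measurable_fst.comp measurable_fst).prodMk measurable_snd)
      (measurableSet_DRel t q)

lemma integral_final :
    ENNReal.ofReal (1 / 4 : ℝ) ≤
      ∫⁻ s in Icc (1 / 2 : ℝ) 1,
        ENNReal.ofReal ((1 / 2) / s) * ENNReal.ofReal ((1 / 2) / s) ∂volume := by
  have hcong : ∀ s ∈ Icc (1 / 2 : ℝ) 1,
      ENNReal.ofReal ((1 / 2) / s) * ENNReal.ofReal ((1 / 2) / s)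
        = ENNReal.ofReal (((1 / 2) / s) * ((1 / 2) / s)) := by
    intro s hs
    rw [ENNReal.ofReal_mul (div_nonneg (by norm_num) (by linarith [hs.1]))]
  rw [setLIntegral_congr_fun measurableSet_Icc hcong]
  have hnn : (fun _ => (0 : ℝ)) ≤ᵐ[volume.restrict (Icc (1/2:ℝ) 1)]
      fun s => ((1 / 2) / s) * ((1 / 2) / s) :=
    Filter.Eventually.of_forall fun s => by simpa using mul_self_nonneg ((1:ℝ)/2/s)
  have hint : Integrable (fun s : ℝ => ((1 / 2) / s) * ((1 / 2) / s))
      (volume.restrict (Icc (1/2:ℝ) 1)) := by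
    apply ContinuousOn.integrableOn_Icc
    have hc : ContinuousOn (fun s : ℝ => (1 / 2) / s) (Icc (1/2:ℝ) 1) :=
      continuousOn_const.div continuousOn_id fun x hx => by
        have := hx.1; intro h; rw [h] at this; norm_num at this
    exact hc.mul hc
  rw [← ofReal_integral_eq_lintegral_ofReal hint hnn]
  apply ENNReal.ofReal_le_ofReal
  have heq : ∫ s in Icc (1/2:ℝ) 1, ((1 / 2) / s) * ((1 / 2) / s) ∂volume
      = ∫ s in (1/2:ℝ)..1, ((1 / 2) / s) * ((1 / 2) / s) ∂volume := by
    rw [integral_Icc_eq_integral_Ioc, ← intervalIntegral.integral_of_le (by norm_num : (1/2:ℝ) ≤ 1)]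
  rw [heq]
  have hfun : EqOn (fun s : ℝ => ((1 / 2) / s) * ((1 / 2) / s))
      (fun s : ℝ => (1 / 4) * s ^ (-2 : ℤ)) (uIcc (1/2:ℝ) 1) := by
    intro s hs
    rw [uIcc_of_le (by norm_num : (1/2:ℝ) ≤ 1)] at hs
    have hs0 : s ≠ 0 := by intro h; rw [h] at hs; have := hs.1; norm_num at this
    simp only []
    rw [zpow_neg, show ((2:ℤ) : ℤ) = (2:ℕ) by norm_num]
    rw [zpow_natCast]
    field_simp
    ring
  rw [intervalIntegral.integral_congr hfun, intervalIntegral.integral_const_mul,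
    integral_zpow (Or.inr ⟨by norm_num, by
      rw [uIcc_of_le (by norm_num : (1/2:ℝ) ≤ 1)]
      intro h; have := h.1; norm_num at this⟩)]
  norm_num


lemma Bset_ge (p q : ℕ) :
    ENNReal.ofReal (1 / 4 : ℝ) ≤
      ((nu.prod (pim p)).prod (nu.prod (pim q))) (Bset (1 / 2) p q) := by
  set t : ℝ := 1 / 2 with htdef
  have ht0 : (0:ℝ) < t := by norm_num
  set C : Set (ℝ × (Fin p → ℝ)) := {v' : ℝ × (Fin p → ℝ) | v'.1 ∈ Icc t 1} ∩ ERel t p with hCdef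
  have hC : MeasurableSet C :=
    (measurable_fst measurableSet_Icc).inter (measurableSet_ERel t p)
  rw [Measure.prod_apply (measurableSet_Bset t p q)]
  have hsl : ∀ v : ℝ × (Fin p → ℝ),
      (nu.prod (pim q)) (Prod.mk v ⁻¹' Bset t p q)
        = C.indicator (fun v' => (nu.prod (pim q)) (Dset t v'.1 q)) v := by
    intro v
    by_cases h : v.1 ∈ Icc t 1 ∧ v ∈ ERel t p
    · rw [indicator_of_mem (by exact ⟨h.1, h.2⟩)]
      congr 1
      ext r
      simp only [mem_preimage, Bset, mem_setOf_eq]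
      constructor
      · rintro ⟨-, -, hd⟩; exact hd
      · intro hd; exact ⟨h.1, h.2, hd⟩
    · rw [indicator_of_notMem (by simpa [hCdef, mem_inter_iff, mem_setOf_eq] using h)]
      have he : Prod.mk v ⁻¹' Bset t p q = (∅ : Set (ℝ × (Fin q → ℝ))) := by
        ext r
        simp only [mem_preimage, Bset, mem_setOf_eq, mem_empty_iff_false, iff_false]
        rintro ⟨h1, h2, -⟩; exact h ⟨h1, h2⟩
      rw [he, measure_empty]
  rw [lintegral_congr hsl, lintegral_indicator hC]
  have step1 : ∫⁻ v in C, ENNReal.ofReal (t / v.1) ∂(nu.prod (pim p)) ≤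
      ∫⁻ v in C, (nu.prod (pim q)) (Dset t v.1 q) ∂(nu.prod (pim p)) := by
    refine setLIntegral_mono' hC fun v hv => ?_
    exact Dset_ge t v.1 ht0 hv.1.1 hv.1.2 q
  refine le_trans ?_ step1
  have hmeasF : Measurable (C.indicator fun v : ℝ × (Fin p → ℝ) => ENNReal.ofReal (t / v.1)) := by
    refine Measurable.indicator ?_ hC
    exact ENNReal.measurable_ofReal.comp (measurable_const.div measurable_fst)
  rw [← lintegral_indicator hC, lintegral_prod _ hmeasF.aemeasurable]
  have hinner : ∀ s : ℝ, (Icc t 1).indicator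
      (fun s' => ENNReal.ofReal (t / s') * ENNReal.ofReal (t / s')) s ≤
      ∫⁻ y, (C.indicator (fun v => ENNReal.ofReal (t / v.1))) (s, y) ∂(pim p) := by
    intro s
    by_cases hs : s ∈ Icc t 1
    · rw [indicator_of_mem hs]
      have heqf : (fun y => (C.indicator (fun v => ENNReal.ofReal (t / v.1))) (s, y))
          = (Eset t s p).indicator (fun _ => ENNReal.ofReal (t / s)) := by
        funext y
        by_cases hy : y ∈ Eset t s p
        · rw [indicator_of_mem hy, indicator_of_mem]
          exact ⟨hs, hy⟩
        · rw [indicator_of_notMem hy, indicator_of_notMem]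
          rintro ⟨-, h2⟩
          exact hy h2
      rw [heqf, lintegral_indicator_const (measurableSet_Eset t s p)]
      exact mul_le_mul_right (Eset_ge t s ht0 hs.1 hs.2 p) _
    · rw [indicator_of_notMem hs]
      exact zero_le
  refine le_trans ?_ (lintegral_mono hinner)
  rw [lintegral_indicator measurableSet_Icc]
  have hres : nu.restrict (Icc t 1) = volume.restrict (Icc t 1) := by
    rw [Measure.restrict_restrict measurableSet_Icc,
      inter_eq_self_of_subset_left (Icc_subset_Icc (by norm_num) le_rfl)]
  rw [hres]
  exact integral_final


abbrev Iota (n : Fin 2 → ℕ) := Σ l : Fin 2, Fin (n l + 1)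

abbrev Wspace (p q : ℕ) := (ℝ × (Fin p → ℝ)) × (ℝ × (Fin q → ℝ))

lemma fin2_eq_one {l : Fin 2} (h : ¬ l = 0) : l = 1 := by
  have hv : l.val ≠ 0 := fun hv => h (Fin.ext hv)
  have := l.isLt
  exact Fin.ext (by omega)

def eSub0 (n : Fin 2 → ℕ) : Fin (n 0 + 1) ≃ {i : Iota n // i.1 = 0} where
  toFun j := ⟨⟨0, j⟩, rfl⟩
  invFun i := i.2 ▸ i.1.2
  left_inv j := rfl
  right_inv := by
    rintro ⟨⟨l, j⟩, h⟩
    have h' : l = 0 := h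
    subst h'
    rfl

def eSub1 (n : Fin 2 → ℕ) : Fin (n 1 + 1) ≃ {i : Iota n // ¬ i.1 = 0} where
  toFun j := ⟨⟨1, j⟩, by simp⟩
  invFun i := (fin2_eq_one i.2) ▸ i.1.2
  left_inv j := rfl
  right_inv := by
    rintro ⟨⟨l, j⟩, hl⟩
    obtain rfl : l = 1 := fin2_eq_one hl
    rfl

/-- the explicit rearrangement map -/
def em (n : Fin 2 → ℕ) (x : Iota n → ℝ) : Wspace (n 0) (n 1) :=
  ((x ⟨0, Fin.last (n 0)⟩, fun j => x ⟨0, j.castSucc⟩),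
   (x ⟨1, Fin.last (n 1)⟩, fun j => x ⟨1, j.castSucc⟩))

lemma measurable_em (n : Fin 2 → ℕ) : Measurable (em n) := by
  refine Measurable.prodMk (Measurable.prodMk ?_ ?_) (Measurable.prodMk ?_ ?_) <;>
    first
      | exact measurable_pi_apply _
      | exact measurable_pi_lambda _ fun j => measurable_pi_apply _

lemma measurePreserving_em (n : Fin 2 → ℕ) :
    MeasurePreserving (em n) (Measure.pi fun _ : Iota n => nu)
      ((nu.prod (pim (n 0))).prod (nu.prod (pim (n 1)))) := by
  have mpA := measurePreserving_piEquivPiSubtypeProd (fun _ : Iota n => nu)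
    (fun i : Iota n => i.1 = 0)
  have mp0 : MeasurePreserving
      (⇑(MeasurableEquiv.piFinSuccAbove (fun _ : Fin (n 0 + 1) => ℝ) (Fin.last (n 0))) ∘
        ⇑(MeasurableEquiv.piCongrLeft (fun _ : {i : Iota n // i.1 = 0} => ℝ) (eSub0 n)).symm)
      (Measure.pi fun _ : {i : Iota n // i.1 = 0} => nu) (nu.prod (pim (n 0))) := by
    exact (measurePreserving_piFinSuccAbove (fun _ : Fin (n 0 + 1) => nu) (Fin.last (n 0))).comp
      (MeasurePreserving.symm _
        (measurePreserving_piCongrLeft (fun _ : {i : Iota n // i.1 = 0} => nu) (eSub0 n)))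
  have mp1 : MeasurePreserving
      (⇑(MeasurableEquiv.piFinSuccAbove (fun _ : Fin (n 1 + 1) => ℝ) (Fin.last (n 1))) ∘
        ⇑(MeasurableEquiv.piCongrLeft (fun _ : {i : Iota n // ¬ i.1 = 0} => ℝ) (eSub1 n)).symm)
      (Measure.pi fun _ : {i : Iota n // ¬ i.1 = 0} => nu) (nu.prod (pim (n 1))) := by
    exact (measurePreserving_piFinSuccAbove (fun _ : Fin (n 1 + 1) => nu) (Fin.last (n 1))).comp
      (MeasurePreserving.symm _
        (measurePreserving_piCongrLeft (fun _ : {i : Iota n // ¬ i.1 = 0} => nu) (eSub1 n)))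
  have hcomp := (mp0.prod mp1).comp mpA
  have hfun : (Prod.map
      (⇑(MeasurableEquiv.piFinSuccAbove (fun _ : Fin (n 0 + 1) => ℝ) (Fin.last (n 0))) ∘
        ⇑(MeasurableEquiv.piCongrLeft (fun _ : {i : Iota n // i.1 = 0} => ℝ) (eSub0 n)).symm)
      (⇑(MeasurableEquiv.piFinSuccAbove (fun _ : Fin (n 1 + 1) => ℝ) (Fin.last (n 1))) ∘
        ⇑(MeasurableEquiv.piCongrLeft (fun _ : {i : Iota n // ¬ i.1 = 0} => ℝ) (eSub1 n)).symm)) ∘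
      ⇑(MeasurableEquiv.piEquivPiSubtypeProd (fun _ : Iota n => ℝ) (fun i : Iota n => i.1 = 0))
      = em n := by
    funext x
    simp only [Function.comp_apply, MeasurableEquiv.piEquivPiSubtypeProd,
      MeasurableEquiv.coe_mk, Equiv.piEquivPiSubtypeProd_apply, Prod.map,
      MeasurableEquiv.piFinSuccAbove, MeasurableEquiv.piCongrLeft, Fin.insertNthEquiv,
      Fin.succAbove_last, em, MeasurableEquiv.symm_mk, Equiv.coe_fn_symm_mk,
      Equiv.piCongrLeft_symm_apply, Fin.removeNth, Equiv.coe_fn_mk]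
    refine Prod.ext (Prod.ext ?_ (funext fun j => ?_)) (Prod.ext ?_ (funext fun j => ?_)) <;>
      simp [Equiv.piEquivPiSubtypeProd, Equiv.piCongrLeft_symm_apply, Fin.removeNth,
        Fin.succAbove_last, eSub0, eSub1]
  rwa [hfun] at hcomp


lemma success_of_mem_B0 {Ω : Type*} {n : Fin 2 → ℕ} (X : (Σ l : Fin 2, Fin (n l + 1)) → Ω → ℝ)
    (ω : Ω) (hB : em n (fun i => X i ω) ∈ Bset (1 / 2) (n 0) (n 1)) :
    ω ∈ SuccessSet (1 / 2) X := by
  obtain ⟨h1, h2, h3⟩ := hB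
  have hE0 : ∀ i : Fin (n 0), X ⟨0, i.castSucc⟩ ω ≤ X ⟨0, Fin.last (n 0)⟩ ω →
      X ⟨0, i.castSucc⟩ ω < 1 / 2 ∨ ∃ i', i < i' ∧ X ⟨0, i'.castSucc⟩ ω < 1 / 2 := h2
  refine ⟨0, h1, ?_⟩
  intro l' j hrec hj
  by_contra hltc
  push_neg at hltc
  fin_cases l'
  · by_cases hjl : j = Fin.last (n 0)
    · rw [hjl] at hltc
      exact lt_irrefl _ hltc
    · have hjc : (j.castPred hjl).castSucc = j := Fin.castSucc_castPred j hjl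
      rcases hE0 (j.castPred hjl) (by rw [hjc]; exact hltc.le) with h | ⟨i', hii', hi't⟩
      · rw [hjc] at h
        exact absurd hj.1 (not_le.mpr h)
      · have hlt2 : i'.castSucc < j := hrec i'.castSucc (lt_of_lt_of_le hi't hj.1)
        rw [← hjc] at hlt2
        exact absurd hii' (not_lt.mpr (Fin.castSucc_lt_castSucc_iff.mp hlt2).le)
  · rcases mem_DRel.mp h3 with hlt1 | ⟨hgt1, hE1⟩
    · by_cases hjl : j = Fin.last (n 1)
      · rw [hjl] at hj
        exact absurd hj.1 (not_le.mpr hlt1)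
      · have hlast : X ⟨1, Fin.last (n 1)⟩ ω < X ⟨1, j⟩ ω := lt_of_lt_of_le hlt1 hj.1
        exact absurd (hrec (Fin.last (n 1)) hlast) (not_lt.mpr (Fin.le_last j))
    · by_cases hjl : j = Fin.last (n 1)
      · rw [hjl] at hltc
        exact absurd hltc (not_lt.mpr hgt1.le)
      · have hE1' : ∀ i : Fin (n 1), X ⟨1, i.castSucc⟩ ω ≤ X ⟨0, Fin.last (n 0)⟩ ω →
            X ⟨1, i.castSucc⟩ ω < 1 / 2 ∨ ∃ i', i < i' ∧ X ⟨1, i'.castSucc⟩ ω < 1 / 2 := hE1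
        have hjc : (j.castPred hjl).castSucc = j := Fin.castSucc_castPred j hjl
        rcases hE1' (j.castPred hjl) (by rw [hjc]; exact hltc.le) with h | ⟨i', hii', hi't⟩
        · rw [hjc] at h
          exact absurd hj.1 (not_le.mpr h)
        · have hlt2 : i'.castSucc < j := hrec i'.castSucc (lt_of_lt_of_le hi't hj.1)
          rw [← hjc] at hlt2
          exact absurd hii' (not_lt.mpr (Fin.castSucc_lt_castSucc_iff.mp hlt2).le)

lemma success_of_mem_B1 {Ω : Type*} {n : Fin 2 → ℕ} (X : (Σ l : Fin 2, Fin (n l + 1)) → Ω → ℝ)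
    (ω : Ω) (hB : Prod.swap (em n (fun i => X i ω)) ∈ Bset (1 / 2) (n 1) (n 0)) :
    ω ∈ SuccessSet (1 / 2) X := by
  obtain ⟨h1, h2, h3⟩ := hB
  have hE0 : ∀ i : Fin (n 1), X ⟨1, i.castSucc⟩ ω ≤ X ⟨1, Fin.last (n 1)⟩ ω →
      X ⟨1, i.castSucc⟩ ω < 1 / 2 ∨ ∃ i', i < i' ∧ X ⟨1, i'.castSucc⟩ ω < 1 / 2 := h2
  refine ⟨1, h1, ?_⟩
  intro l' j hrec hj
  by_contra hltc
  push_neg at hltc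
  fin_cases l'
  · rcases mem_DRel.mp h3 with hlt1 | ⟨hgt1, hE1⟩
    · by_cases hjl : j = Fin.last (n 0)
      · rw [hjl] at hj
        exact absurd hj.1 (not_le.mpr hlt1)
      · have hlast : X ⟨0, Fin.last (n 0)⟩ ω < X ⟨0, j⟩ ω := lt_of_lt_of_le hlt1 hj.1
        exact absurd (hrec (Fin.last (n 0)) hlast) (not_lt.mpr (Fin.le_last j))
    · by_cases hjl : j = Fin.last (n 0)
      · rw [hjl] at hltc
        exact absurd hltc (not_lt.mpr hgt1.le)
      · have hE1' : ∀ i : Fin (n 0), X ⟨0, i.castSucc⟩ ω ≤ X ⟨1, Fin.last (n 1)⟩ ω →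
            X ⟨0, i.castSucc⟩ ω < 1 / 2 ∨ ∃ i', i < i' ∧ X ⟨0, i'.castSucc⟩ ω < 1 / 2 := hE1
        have hjc : (j.castPred hjl).castSucc = j := Fin.castSucc_castPred j hjl
        rcases hE1' (j.castPred hjl) (by rw [hjc]; exact hltc.le) with h | ⟨i', hii', hi't⟩
        · rw [hjc] at h
          exact absurd hj.1 (not_le.mpr h)
        · have hlt2 : i'.castSucc < j := hrec i'.castSucc (lt_of_lt_of_le hi't hj.1)
          rw [← hjc] at hlt2
          exact absurd hii' (not_lt.mpr (Fin.castSucc_lt_castSucc_iff.mp hlt2).le)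
  · by_cases hjl : j = Fin.last (n 1)
    · rw [hjl] at hltc
      exact lt_irrefl _ hltc
    · have hjc : (j.castPred hjl).castSucc = j := Fin.castSucc_castPred j hjl
      rcases hE0 (j.castPred hjl) (by rw [hjc]; exact hltc.le) with h | ⟨i', hii', hi't⟩
      · rw [hjc] at h
        exact absurd hj.1 (not_le.mpr h)
      · have hlt2 : i'.castSucc < j := hrec i'.castSucc (lt_of_lt_of_le hi't hj.1)
        rw [← hjc] at hlt2
        exact absurd hii' (not_lt.mpr (Fin.castSucc_lt_castSucc_iff.mp hlt2).le)

end HalfRule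
end

open HalfRule

/-- **Theorem (the 1/2-rule).**  With two non-empty classes of options (of sizes
`n l + 1 ≥ 1`), all arrival times independent and uniform on `[0,1]`, the strategy
`σ_{1/2}`, stopping on the first record of either class arriving after time `1/2`,
succeeds with probability at least `1/2`, whatever the class sizes are. -/
theorem success_prob_ge_half
    {Ω : Type*} [MeasurableSpace Ω] (μ : Measure Ω) [IsProbabilityMeasure μ]
    (n : Fin 2 → ℕ)
    (X : (Σ l : Fin 2, Fin (n l + 1)) → Ω → ℝ)
    (hmeas : ∀ idx, Measurable (X idx))
    (hunif : ∀ idx, μ.map (X idx) = volume.restrict (Icc (0 : ℝ) 1))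
    (hindep : iIndepFun X μ) :
    ENNReal.ofReal (1 / 2 : ℝ) ≤ μ (SuccessSet (1 / 2 : ℝ) X) := by
  classical
  have hΦ : Measurable fun ω (i : Iota n) => X i ω := measurable_pi_lambda _ hmeas
  have hmap : μ.map (fun ω (i : Iota n) => X i ω) = Measure.pi (fun _ : Iota n => nu) := by
    refine (Measure.pi_eq (μ := fun _ : Iota n => nu) fun s hs => ?_).symm
    rw [Measure.map_apply hΦ (MeasurableSet.univ_pi hs)]
    have hpre : (fun ω (i : Iota n) => X i ω) ⁻¹' (Set.univ.pi s)
        = ⋂ i ∈ Finset.univ, X i ⁻¹' s i := by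
      ext ω
      simp [Set.mem_univ_pi]
    rw [hpre, hindep.measure_inter_preimage_eq_mul Finset.univ fun i _ => hs i]
    exact Finset.prod_congr rfl fun i _ => by
      rw [← Measure.map_apply (hmeas i) (hs i), hunif i]
  set BU : Set (Wspace (n 0) (n 1)) :=
    Bset (1 / 2) (n 0) (n 1) ∪ Prod.swap ⁻¹' Bset (1 / 2) (n 1) (n 0) with hBUdef
  have hBsw : MeasurableSet (Prod.swap ⁻¹' Bset (1 / 2 : ℝ) (n 1) (n 0)) :=
    measurable_swap (measurableSet_Bset _ _ _)
  have hBU : MeasurableSet BU := (measurableSet_Bset _ _ _).union hBsw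
  have hdisj : Disjoint (Bset (1 / 2 : ℝ) (n 0) (n 1))
      (Prod.swap ⁻¹' Bset (1 / 2 : ℝ) (n 1) (n 0)) := by
    rw [Set.disjoint_left]
    rintro w ⟨hw1, -, hw3⟩ ⟨hs1, -, hs3⟩
    rcases mem_DRel.mp hw3 with h | h
    · exact absurd hs1.1 (not_le.mpr h)
    · rcases mem_DRel.mp hs3 with h' | h'
      · exact absurd hw1.1 (not_le.mpr h')
      · exact absurd h'.1 (not_lt.mpr h.1.le)
  have key : ENNReal.ofReal (1 / 2 : ℝ)
      ≤ ((nu.prod (pim (n 0))).prod (nu.prod (pim (n 1)))) BU := by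
    rw [hBUdef, measure_union hdisj hBsw]
    have hswap : ((nu.prod (pim (n 1))).prod (nu.prod (pim (n 0)))) (Bset (1 / 2 : ℝ) (n 1) (n 0))
        = ((nu.prod (pim (n 0))).prod (nu.prod (pim (n 1))))
          (Prod.swap ⁻¹' Bset (1 / 2 : ℝ) (n 1) (n 0)) := by
      rw [← Measure.prod_swap, Measure.map_apply measurable_swap (measurableSet_Bset _ _ _)]
    rw [← hswap]
    calc ENNReal.ofReal (1 / 2 : ℝ)
        = ENNReal.ofReal (1 / 4 : ℝ) + ENNReal.ofReal (1 / 4 : ℝ) := by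
          rw [← ENNReal.ofReal_add (by norm_num) (by norm_num)]
          norm_num
      _ ≤ _ := add_le_add (Bset_ge (n 0) (n 1)) (Bset_ge (n 1) (n 0))
  have hsub : (fun ω (i : Iota n) => X i ω) ⁻¹' (em n ⁻¹' BU) ⊆ SuccessSet (1 / 2 : ℝ) X := by
    intro ω hω
    rcases hω with h | h
    · exact success_of_mem_B0 X ω h
    · exact success_of_mem_B1 X ω h
  calc ENNReal.ofReal (1 / 2 : ℝ)
      ≤ ((nu.prod (pim (n 0))).prod (nu.prod (pim (n 1)))) BU := key
    _ = (Measure.pi fun _ : Iota n => nu) (em n ⁻¹' BU) :=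
        ((measurePreserving_em n).measure_preimage hBU.nullMeasurableSet).symm
    _ = (μ.map (fun ω (i : Iota n) => X i ω)) (em n ⁻¹' BU) := by rw [hmap]
    _ = μ ((fun ω (i : Iota n) => X i ω) ⁻¹' (em n ⁻¹' BU)) :=
        Measure.map_apply hΦ (measurable_em n hBU)
    _ ≤ μ (SuccessSet (1 / 2 : ℝ) X) := measure_mono hsub
end

section
/- Consider k ≥ 2 classes of options with n_1, …, n_k ≥ 1 options respectively, all arrival times independent and uniform on [0,1]. For every t ∈ (0,1), the success probability p(t) of the strategy σ_t satisfies p(t) ≥ h_k(t) := (k/(k-1))·(t − t^k). -/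
open MeasureTheory ProbabilityTheory Set
open scoped ENNReal

namespace SecretaryAux

noncomputable def unif : Measure ℝ := volume.restrict (Icc 0 1)

instance : IsProbabilityMeasure unif := ⟨by simp [unif, Real.volume_Icc]⟩

variable {k : ℕ} {n : Fin k → ℕ}

abbrev Idx (n : Fin k → ℕ) : Type := Σ l : Fin k, Fin (n l + 1)

def m0 (n : Fin k → ℕ) (l : Fin k) : Idx n := ⟨l, Fin.last (n l)⟩

def tag1 (n : Fin k → ℕ) (l l'' : Fin k) (o : Option (Fin (n l'' + 1)))
    (j : Fin (n l'' + 1)) : ℕ :=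
  if (⟨l'', j⟩ : Idx n) = m0 n l then 2
  else Option.elim o 1 fun p => if j = p then 0 else if p < j then 1 else 2

def tagOf (n : Fin k → ℕ) (l : Fin k) (c : ∀ l'', Option (Fin (n l'' + 1))) (i : Idx n) : ℕ :=
  tag1 n l i.1 (c i.1) i.2

def Cnd (t : ℝ) (r : ℕ) (x v : ℝ) : Prop :=
  if r = 0 then v < t else if r = 1 then x < v else True

def CndSet (t : ℝ) (r : ℕ) (x : ℝ) : Set ℝ :=
  if r = 0 then Iio t else if r = 1 then Ioi x else univ

noncomputable def uVal (t : ℝ) (r : ℕ) (x : ℝ) : ℝ≥0∞ :=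
  if r = 0 then ENNReal.ofReal t else if r = 1 then ENNReal.ofReal (1 - x) else 1

def DSet (n : Fin k → ℕ) (t : ℝ) (l : Fin k) (c : ∀ l'', Option (Fin (n l'' + 1))) :
    Set (Idx n → ℝ) :=
  {f | f (m0 n l) ∈ Icc t 1 ∧ ∀ i : Idx n, Cnd t (tagOf n l c i) (f (m0 n l)) (f i)}

def Jf (n : Fin k → ℕ) (l l'' : Fin k) : Finset (Fin (n l'' + 1)) :=
  Finset.univ.filter fun j => ¬((⟨l'', j⟩ : Idx n) = m0 n l)

def Bf (n : Fin k → ℕ) (l l'' : Fin k) : Finset (Option (Fin (n l'' + 1))) :=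
  insert none ((Jf n l l'').image some)

def Af (n : Fin k → ℕ) (l : Fin k) : Finset (∀ l'', Option (Fin (n l'' + 1))) :=
  Fintype.piFinset (Bf n l)

lemma mem_CndSet {t : ℝ} {r : ℕ} {x v : ℝ} : v ∈ CndSet t r x ↔ Cnd t r x v := by
  unfold CndSet Cnd; split_ifs <;> simp

lemma tagOf_m0 (l : Fin k) (c : ∀ l'', Option (Fin (n l'' + 1))) :
    tagOf n l c (m0 n l) = 2 := by
  unfold tagOf tag1
  rw [if_pos rfl]

lemma tag_none {l l'' : Fin k} {c : ∀ l', Option (Fin (n l' + 1))} {j : Fin (n l'' + 1)}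
    (hcl : c l'' = none) (hj : ¬((⟨l'', j⟩ : Idx n) = m0 n l)) :
    tagOf n l c ⟨l'', j⟩ = 1 := by
  unfold tagOf tag1
  rw [if_neg hj, hcl]
  rfl

lemma tag_pivot {l l'' : Fin k} {c : ∀ l', Option (Fin (n l' + 1))} {p : Fin (n l'' + 1)}
    (hcl : c l'' = some p) (hp : ¬((⟨l'', p⟩ : Idx n) = m0 n l)) :
    tagOf n l c ⟨l'', p⟩ = 0 := by
  unfold tagOf tag1
  rw [if_neg hp, hcl]
  simp

lemma tag_tail {l l'' : Fin k} {c : ∀ l', Option (Fin (n l' + 1))} {p j : Fin (n l'' + 1)}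
    (hcl : c l'' = some p) (hj : ¬((⟨l'', j⟩ : Idx n) = m0 n l)) (hlt : p < j) :
    tagOf n l c ⟨l'', j⟩ = 1 := by
  unfold tagOf tag1
  rw [if_neg hj, hcl]
  simp [hlt.ne', hlt]

lemma DSet_lt_of_tag1 {t : ℝ} {l : Fin k} {c : ∀ l', Option (Fin (n l' + 1))}
    {f : Idx n → ℝ} (hf : f ∈ DSet n t l c) {i : Idx n} (htag : tagOf n l c i = 1) :
    f (m0 n l) < f i := by
  have h := hf.2 i
  rw [htag] at h
  simpa [Cnd] using h

lemma DSet_pivot_lt {t : ℝ} {l : Fin k} {c : ∀ l', Option (Fin (n l' + 1))}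
    {f : Idx n → ℝ} (hf : f ∈ DSet n t l c) {i : Idx n} (htag : tagOf n l c i = 0) :
    f i < t := by
  have h := hf.2 i
  rw [htag] at h
  simpa [Cnd] using h

lemma uVal_measurable (t : ℝ) (r : ℕ) : Measurable (uVal t r) := by
  match r with
  | 0 =>
    have h : uVal t 0 = fun _ => ENNReal.ofReal t := by funext x; simp [uVal]
    rw [h]; exact measurable_const
  | 1 =>
    have h : uVal t 1 = fun x => ENNReal.ofReal (1 - x) := by funext x; simp [uVal]
    rw [h]; exact (measurable_const.sub measurable_id).ennreal_ofReal
  | (r + 2) =>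
    have h : uVal t (r + 2) = fun _ => 1 := by funext x; simp [uVal]
    rw [h]; exact measurable_const

lemma unif_CndSet (r : ℕ) {t x : ℝ} (ht0 : 0 ≤ t) (ht1 : t ≤ 1) (hx0 : 0 ≤ x) :
    unif (CndSet t r x) = uVal t r x := by
  unfold CndSet uVal
  split_ifs
  · rw [unif, Measure.restrict_apply measurableSet_Iio]
    have h : Iio t ∩ Icc 0 1 = Ico 0 t := by
      ext y
      simp only [mem_inter_iff, mem_Iio, mem_Icc, mem_Ico]
      constructor
      · rintro ⟨h1, h2, _⟩; exact ⟨h2, h1⟩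
      · rintro ⟨h1, h2⟩; exact ⟨h2, h1, le_trans h2.le ht1⟩
    rw [h, Real.volume_Ico, sub_zero]
  · rw [unif, Measure.restrict_apply measurableSet_Ioi]
    have h : Ioi x ∩ Icc 0 1 = Ioc x 1 := by
      ext y
      simp only [mem_inter_iff, mem_Ioi, mem_Icc, mem_Ioc]
      constructor
      · rintro ⟨h1, _, h3⟩; exact ⟨h1, h3⟩
      · rintro ⟨h1, h2⟩; exact ⟨h1, le_trans hx0 h1.le, h2⟩
    rw [h, Real.volume_Ioc]
  · exact measure_univ

lemma prod_subtype_full {M : Type*} [CommMonoid M] (l : Fin k) (F : Idx n → M)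
    (hF : F (m0 n l) = 1) :
    ∏ i : {i : Idx n // ¬(i = m0 n l)}, F i.1 = ∏ i : Idx n, F i := by
  rw [← Finset.prod_subtype (Finset.univ.erase (m0 n l))
    (fun x => by simp [Finset.mem_erase]) F]
  exact Finset.prod_erase _ hF

lemma sum_pow_filter_lt {α : Type*} [LinearOrder α] (J : Finset α) (y : ℝ≥0∞) :
    ∑ p ∈ J, y ^ (J.filter fun q => p < q).card = ∑ r ∈ Finset.range J.card, y ^ r := by
  generalize hN : J.card = N
  induction N generalizing J with
  | zero =>
    rw [Finset.card_eq_zero] at hN; subst hN; simp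
  | succ N ih =>
    have hne : J.Nonempty := Finset.card_pos.mp (by omega)
    have hMJ : J.max' hne ∈ J := J.max'_mem hne
    set M := J.max' hne with hM
    have hcard : (J.erase M).card = N := by rw [Finset.card_erase_of_mem hMJ, hN]; omega
    have key : ∀ p ∈ J.erase M,
        (J.filter fun q => p < q).card = ((J.erase M).filter fun q => p < q).card + 1 := by
      intro p hp
      have hpJ := Finset.mem_of_mem_erase hp
      have hpM : p < M := lt_of_le_of_ne (J.le_max' p hpJ) (Finset.ne_of_mem_erase hp)
      have hins : (J.filter fun q => p < q) = insert M ((J.erase M).filter fun q => p < q) := by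
        ext j
        simp only [Finset.mem_filter, Finset.mem_insert, Finset.mem_erase]
        constructor
        · rintro ⟨hj, hpj⟩
          by_cases hjM : j = M
          · exact Or.inl hjM
          · exact Or.inr ⟨⟨hjM, hj⟩, hpj⟩
        · rintro (rfl | ⟨⟨hjM, hj⟩, hpj⟩)
          · exact ⟨hMJ, hpM⟩
          · exact ⟨hj, hpj⟩
      rw [hins, Finset.card_insert_of_notMem]
      simp [Finset.mem_filter, Finset.mem_erase]
    rw [← Finset.add_sum_erase _ _ hMJ]
    have hMterm : (J.filter fun q => M < q).card = 0 := by
      rw [Finset.card_eq_zero, Finset.filter_eq_empty_iff]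
      intro j hj
      exact not_lt.mpr (J.le_max' j hj)
    rw [hMterm, pow_zero]
    have hstep : ∑ p ∈ J.erase M, y ^ (J.filter fun q => p < q).card
        = y * ∑ p ∈ J.erase M, y ^ ((J.erase M).filter fun q => p < q).card := by
      rw [Finset.mul_sum]
      refine Finset.sum_congr rfl fun p hp => ?_
      rw [key p hp, pow_succ]
      ring
    rw [hstep, ih _ hcard, geom_sum_succ]
    ring

lemma real_key (m : ℕ) {t x : ℝ} (ht0 : 0 < t) (htx : t ≤ x) (hx1 : x ≤ 1) :
    t / x ≤ (1 - x) ^ m + t * ∑ r ∈ Finset.range m, (1 - x) ^ r := by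
  have hx0 : 0 < x := lt_of_lt_of_le ht0 htx
  have hgeom : (∑ r ∈ Finset.range m, (1 - x) ^ r) * x = 1 - (1 - x) ^ m := by
    have h := geom_sum_mul (1 - x) m
    have h2 : (∑ i ∈ Finset.range m, (1 - x) ^ i) * (1 - x - 1)
        = -((∑ i ∈ Finset.range m, (1 - x) ^ i) * x) := by ring
    rw [h2] at h
    linarith
  rw [div_le_iff₀ hx0]
  have hpow : 0 ≤ (1 - x) ^ m := pow_nonneg (by linarith) m
  nlinarith [mul_nonneg hpow (by linarith : (0:ℝ) ≤ x - t)]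


lemma tag1_none (l l'' : Fin k) (j : Fin (n l'' + 1)) :
    tag1 n l l'' none j = if (⟨l'', j⟩ : Idx n) = m0 n l then 2 else 1 := by
  unfold tag1; split_ifs <;> rfl

lemma tag1_some (l l'' : Fin k) (p j : Fin (n l'' + 1)) :
    tag1 n l l'' (some p) j = if (⟨l'', j⟩ : Idx n) = m0 n l then 2
      else if j = p then 0 else if p < j then 1 else 2 := rfl

lemma prod_uVal_none (t x : ℝ) (l l'' : Fin k) :
    ∏ j, uVal t (tag1 n l l'' none j) x = ENNReal.ofReal (1 - x) ^ (Jf n l l'').card := by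
  rw [← Finset.prod_filter_mul_prod_filter_not Finset.univ
    (fun j : Fin (n l'' + 1) => ¬((⟨l'', j⟩ : Idx n) = m0 n l))
    (fun j => uVal t (tag1 n l l'' none j) x)]
  have h1 : ∀ j ∈ Finset.univ.filter
      (fun j : Fin (n l'' + 1) => ¬((⟨l'', j⟩ : Idx n) = m0 n l)),
      uVal t (tag1 n l l'' none j) x = ENNReal.ofReal (1 - x) := by
    intro j hj
    rw [tag1_none, if_neg (Finset.mem_filter.mp hj).2]
    simp [uVal]
  have h2 : ∀ j ∈ Finset.univ.filter
      (fun j : Fin (n l'' + 1) => ¬¬((⟨l'', j⟩ : Idx n) = m0 n l)),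
      uVal t (tag1 n l l'' none j) x = 1 := by
    intro j hj
    rw [tag1_none, if_pos (not_not.mp (Finset.mem_filter.mp hj).2)]
    simp [uVal]
  rw [Finset.prod_congr rfl h1, Finset.prod_congr rfl h2, Finset.prod_const,
    Finset.prod_const_one, mul_one]
  rfl

lemma prod_uVal_some (t x : ℝ) (l l'' : Fin k) {p : Fin (n l'' + 1)} (hp : p ∈ Jf n l l'') :
    ∏ j, uVal t (tag1 n l l'' (some p) j) x
      = ENNReal.ofReal t * ENNReal.ofReal (1 - x) ^ ((Jf n l l'').filter fun q => p < q).card := by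
  have hpne : ¬((⟨l'', p⟩ : Idx n) = m0 n l) := (Finset.mem_filter.mp hp).2
  rw [← Finset.prod_filter_mul_prod_filter_not Finset.univ
    (fun j : Fin (n l'' + 1) => ¬((⟨l'', j⟩ : Idx n) = m0 n l))
    (fun j => uVal t (tag1 n l l'' (some p) j) x)]
  have h2 : ∀ j ∈ Finset.univ.filter
      (fun j : Fin (n l'' + 1) => ¬¬((⟨l'', j⟩ : Idx n) = m0 n l)),
      uVal t (tag1 n l l'' (some p) j) x = 1 := by
    intro j hj
    rw [tag1_some, if_pos (not_not.mp (Finset.mem_filter.mp hj).2)]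
    simp [uVal]
  rw [Finset.prod_congr rfl h2, Finset.prod_const_one, mul_one]
  have hJf : Finset.univ.filter
      (fun j : Fin (n l'' + 1) => ¬((⟨l'', j⟩ : Idx n) = m0 n l)) = Jf n l l'' := rfl
  rw [hJf, ← Finset.mul_prod_erase _ _ hp]
  congr 1
  · rw [tag1_some, if_neg hpne, if_pos rfl]
    simp [uVal]
  · have h3 : ∀ j ∈ (Jf n l l'').erase p, uVal t (tag1 n l l'' (some p) j) x
        = if p < j then ENNReal.ofReal (1 - x) else 1 := by
      intro j hj
      have hjne := (Finset.mem_filter.mp (Finset.mem_of_mem_erase hj)).2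
      have hjp : ¬(j = p) := Finset.ne_of_mem_erase hj
      rw [tag1_some, if_neg hjne, if_neg hjp]
      by_cases hlt : p < j
      · rw [if_pos hlt, if_pos hlt]; simp [uVal]
      · rw [if_neg hlt, if_neg hlt]; simp [uVal]
    rw [Finset.prod_congr rfl h3, Finset.prod_ite, Finset.prod_const, Finset.prod_const_one,
      mul_one]
    congr 2
    ext q
    simp only [Finset.mem_filter, Finset.mem_erase]
    constructor
    · rintro ⟨⟨_, hq⟩, hlt⟩; exact ⟨hq, hlt⟩
    · rintro ⟨hq, hlt⟩; exact ⟨⟨hlt.ne', hq⟩, hlt⟩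

lemma class_sum (l l'' : Fin k) {t x : ℝ} (ht0 : 0 < t) (htx : t ≤ x) (hx1 : x ≤ 1) :
    ENNReal.ofReal (t / x) ≤ ∑ o ∈ Bf n l l'', ∏ j, uVal t (tag1 n l l'' o j) x := by
  have h1x : (0:ℝ) ≤ 1 - x := by linarith
  rw [Bf, Finset.sum_insert (by simp),
    Finset.sum_image (fun a _ b _ h => Option.some_injective _ h), prod_uVal_none]
  have e0 : ∑ p ∈ Jf n l l'', ∏ j, uVal t (tag1 n l l'' (some p) j) x
      = ∑ p ∈ Jf n l l'',
        ENNReal.ofReal t * ENNReal.ofReal (1 - x) ^ ((Jf n l l'').filter fun q => p < q).card :=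
    Finset.sum_congr rfl fun p hp => prod_uVal_some t x l l'' hp
  rw [e0, ← Finset.mul_sum, sum_pow_filter_lt]
  have e1 : ENNReal.ofReal (1 - x) ^ (Jf n l l'').card
      = ENNReal.ofReal ((1 - x) ^ (Jf n l l'').card) := (ENNReal.ofReal_pow h1x _).symm
  have e2 : ∑ r ∈ Finset.range (Jf n l l'').card, ENNReal.ofReal (1 - x) ^ r
      = ENNReal.ofReal (∑ r ∈ Finset.range (Jf n l l'').card, (1 - x) ^ r) := by
    rw [ENNReal.ofReal_sum_of_nonneg (fun r _ => pow_nonneg h1x r)]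
    exact Finset.sum_congr rfl fun r _ => (ENNReal.ofReal_pow h1x r).symm
  rw [e1, e2, ← ENNReal.ofReal_mul ht0.le,
    ← ENNReal.ofReal_add (pow_nonneg h1x _)
      (mul_nonneg ht0.le (Finset.sum_nonneg fun r _ => pow_nonneg h1x r))]
  exact ENNReal.ofReal_le_ofReal (real_key _ ht0 htx hx1)

lemma sum_Af_ge (l : Fin k) {t x : ℝ} (ht0 : 0 < t) (htx : t ≤ x) (hx1 : x ≤ 1) :
    ENNReal.ofReal ((t / x) ^ k) ≤ ∑ c ∈ Af n l, ∏ i : Idx n, uVal t (tagOf n l c i) x := by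
  have hstep : ∀ c : ∀ l'', Option (Fin (n l'' + 1)),
      ∏ i : Idx n, uVal t (tagOf n l c i) x
        = ∏ l'' : Fin k, ∏ j, uVal t (tag1 n l l'' (c l'') j) x := by
    intro c
    rw [← Finset.univ_sigma_univ, Finset.prod_sigma]
    rfl
  rw [Finset.sum_congr rfl fun c _ => hstep c, Af,
    ← Finset.prod_univ_sum (Bf n l) (fun l'' o => ∏ j, uVal t (tag1 n l l'' o j) x)]
  have hxpos : 0 < x := lt_of_lt_of_le ht0 htx
  calc ENNReal.ofReal ((t / x) ^ k) = ∏ _l'' : Fin k, ENNReal.ofReal (t / x) := by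
        rw [Finset.prod_const, Finset.card_univ, Fintype.card_fin,
          ENNReal.ofReal_pow (div_nonneg ht0.le hxpos.le)]
    _ ≤ _ := Finset.prod_le_prod' fun l'' _ => class_sum l l'' ht0 htx hx1


lemma measurable_cnd_prod {t : ℝ} {α : Type*} [MeasurableSpace α] (r : ℕ) (g : α → ℝ)
    (hg : Measurable g) : MeasurableSet {q : ℝ × α | Cnd t r q.1 (g q.2)} := by
  match r with
  | 0 => exact measurableSet_lt (hg.comp measurable_snd) measurable_const
  | 1 => exact measurableSet_lt measurable_fst (hg.comp measurable_snd)
  | (r + 2) => exact MeasurableSet.univ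

lemma measurable_cnd_pi (t : ℝ) (r : ℕ) (i₀ i : Idx n) :
    MeasurableSet {f : Idx n → ℝ | Cnd t r (f i₀) (f i)} := by
  match r with
  | 0 => exact measurableSet_lt (measurable_pi_apply i) measurable_const
  | 1 => exact measurableSet_lt (measurable_pi_apply i₀) (measurable_pi_apply i)
  | (r + 2) => exact MeasurableSet.univ

lemma DSet_measurableSet (t : ℝ) (l : Fin k) (c : ∀ l'', Option (Fin (n l'' + 1))) :
    MeasurableSet (DSet n t l c) := by
  have h : DSet n t l c = {f : Idx n → ℝ | f (m0 n l) ∈ Icc t 1}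
      ∩ ⋂ i : Idx n, {f | Cnd t (tagOf n l c i) (f (m0 n l)) (f i)} := by
    ext f; simp [DSet, Set.mem_iInter]
  rw [h]
  exact ((measurable_pi_apply (m0 n l)) measurableSet_Icc).inter
    (MeasurableSet.iInter fun i => measurable_cnd_pi t _ _ _)

lemma DSet_measure {t : ℝ} (ht0 : 0 < t) (ht1 : t ≤ 1) (l : Fin k)
    (c : ∀ l'', Option (Fin (n l'' + 1))) :
    Measure.pi (fun _ : Idx n => unif) (DSet n t l c)
      = ∫⁻ x in Icc t 1, ∏ i : Idx n, uVal t (tagOf n l c i) x ∂unif := by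
  set T : Set (ℝ × ({i : Idx n // ¬(i = m0 n l)} → ℝ)) :=
    {q | q.1 ∈ Icc t 1} ∩ ⋂ i : {i : Idx n // ¬(i = m0 n l)},
      {q | Cnd t (tagOf n l c i.1) q.1 (q.2 i)} with hTdef
  have hT : MeasurableSet T := by
    rw [hTdef]
    exact (measurable_fst measurableSet_Icc).inter (MeasurableSet.iInter fun i =>
      measurable_cnd_prod (t := t) (tagOf n l c i.1) (fun g : {i : Idx n // ¬(i = m0 n l)} → ℝ => g i) (measurable_pi_apply i))
  have hχ : MeasurePreserving
      (fun f : Idx n → ℝ => ((f (m0 n l), fun i : {i : Idx n // ¬(i = m0 n l)} => f i.1)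
        : ℝ × ({i : Idx n // ¬(i = m0 n l)} → ℝ)))
      (Measure.pi fun _ : Idx n => unif)
      (unif.prod (Measure.pi fun _ : {i : Idx n // ¬(i = m0 n l)} => unif)) := by
    have h1 := measurePreserving_piEquivPiSubtypeProd (fun _ : Idx n => unif)
      (fun i => i = m0 n l)
    have hinst : (Subtype.fintype (fun i : Idx n => i = m0 n l)
        : Fintype {i : Idx n // i = m0 n l}) = Unique.fintype := Subsingleton.elim _ _
    rw [hinst] at h1
    have h2 := (measurePreserving_funUnique unif {i : Idx n // i = m0 n l}).prod
      (MeasurePreserving.id (Measure.pi fun _ : {i : Idx n // ¬(i = m0 n l)} => unif))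
    exact h2.comp h1
  have hpre : DSet n t l c = (fun f : Idx n → ℝ =>
      ((f (m0 n l), fun i : {i : Idx n // ¬(i = m0 n l)} => f i.1)
        : ℝ × ({i : Idx n // ¬(i = m0 n l)} → ℝ))) ⁻¹' T := by
    rw [hTdef]
    ext f
    simp only [DSet, mem_setOf_eq, mem_preimage, mem_inter_iff, Set.mem_iInter]
    constructor
    · rintro ⟨h1, h2⟩; exact ⟨h1, fun i => h2 i.1⟩
    · rintro ⟨h1, h2⟩
      refine ⟨h1, fun i => ?_⟩
      by_cases hi : i = m0 n l
      · rw [hi, tagOf_m0]; trivial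
      · exact h2 ⟨i, hi⟩
  rw [hpre, hχ.measure_preimage hT.nullMeasurableSet, Measure.prod_apply hT]
  have hsec : ∀ x : ℝ,
      (Measure.pi fun _ : {i : Idx n // ¬(i = m0 n l)} => unif) (Prod.mk x ⁻¹' T)
        = (Icc t 1).indicator (fun y => ∏ i : Idx n, uVal t (tagOf n l c i) y) x := by
    intro x
    by_cases hx : x ∈ Icc t 1
    · rw [indicator_of_mem hx]
      have hxy : (Prod.mk x ⁻¹' T) = univ.pi
          (fun i : {i : Idx n // ¬(i = m0 n l)} => CndSet t (tagOf n l c i.1) x) := by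
        rw [hTdef]
        ext g
        simp only [mem_preimage, mem_setOf_eq, mem_univ_pi, mem_CndSet, mem_inter_iff,
          Set.mem_iInter]
        exact and_iff_right hx
      rw [hxy, Measure.pi_pi]
      have hval : ∀ i : {i : Idx n // ¬(i = m0 n l)},
          unif (CndSet t (tagOf n l c i.1) x) = uVal t (tagOf n l c i.1) x :=
        fun i => unif_CndSet _ ht0.le ht1 (le_trans ht0.le hx.1)
      rw [Finset.prod_congr rfl fun i _ => hval i]
      exact prod_subtype_full l (fun i => uVal t (tagOf n l c i) x)
        (by show uVal t (tagOf n l c (m0 n l)) x = 1; rw [tagOf_m0]; rfl)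
    · rw [indicator_of_notMem hx]
      have hemp : (Prod.mk x ⁻¹' T) = ∅ := by
        rw [hTdef]
        ext g
        simp only [mem_preimage, mem_setOf_eq, mem_empty_iff_false, iff_false, not_and,
          mem_inter_iff, Set.mem_iInter]
        intro h1
        exact absurd h1 hx
      rw [hemp]; exact measure_empty
  rw [lintegral_congr hsec, lintegral_indicator measurableSet_Icc]


lemma integral_part {t : ℝ} (hk : 2 ≤ k) (ht0 : 0 < t) (ht1 : t < 1) :
    ENNReal.ofReal ((t - t ^ k) / ((k : ℝ) - 1))
      ≤ ∫⁻ x in Icc t 1, ENNReal.ofReal ((t / x) ^ k) ∂unif := by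
  have hsub : Icc t 1 ⊆ Icc (0:ℝ) 1 := Icc_subset_Icc ht0.le le_rfl
  rw [unif, Measure.restrict_restrict measurableSet_Icc, inter_eq_left.mpr hsub]
  have hcont : ContinuousOn (fun x : ℝ => (t / x) ^ k) (Icc t 1) := by
    apply ContinuousOn.pow
    exact continuousOn_const.div continuousOn_id
      (fun x hx => ne_of_gt (lt_of_lt_of_le ht0 hx.1))
  have hint : IntegrableOn (fun x : ℝ => (t / x) ^ k) (Icc t 1) volume :=
    hcont.integrableOn_compact isCompact_Icc
  have hnn : 0 ≤ᵐ[volume.restrict (Icc t 1)] fun x => (t / x) ^ k :=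
    (ae_restrict_iff' measurableSet_Icc).mpr (Filter.Eventually.of_forall fun x hx =>
      pow_nonneg (div_nonneg ht0.le (le_trans ht0.le hx.1)) k)
  rw [← ofReal_integral_eq_lintegral_ofReal hint hnn]
  apply ENNReal.ofReal_le_ofReal
  refine le_of_eq ?_
  rw [MeasureTheory.integral_Icc_eq_integral_Ioc, ← intervalIntegral.integral_of_le ht1.le]
  have hrw : ∀ x : ℝ, (t / x) ^ k = t ^ k * x ^ (-(k:ℤ)) := by
    intro x
    rw [div_pow, zpow_neg, zpow_natCast, div_eq_mul_inv]
  simp_rw [hrw]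
  rw [intervalIntegral.integral_const_mul]
  rw [integral_zpow (Or.inr ⟨by omega, by
      rw [Set.uIcc_of_le ht1.le]
      intro h0
      exact absurd h0.1 (not_le.mpr ht0)⟩)]
  have hone : (1:ℝ) ^ (-(k:ℤ) + 1) = 1 := one_zpow _
  have ht' : t ≠ 0 := ne_of_gt ht0
  have htk : t ^ (-(k:ℤ) + 1) = t / t ^ k := by
    rw [zpow_add₀ ht', zpow_neg, zpow_natCast, zpow_one]
    ring
  rw [hone, htk]
  have hkR : (2:ℝ) ≤ (k:ℝ) := by exact_mod_cast hk
  have hk1 : (k:ℝ) - 1 ≠ 0 := by linarith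
  have htkne : t ^ k ≠ 0 := pow_ne_zero _ ht'
  have hcast : ((-(k:ℤ) : ℤ) : ℝ) + 1 = 1 - (k:ℝ) := by push_cast; ring
  rw [hcast]
  have h1k : (1:ℝ) - k ≠ 0 := by linarith
  field_simp
  ring

lemma map_eq_pi {Ω : Type*} [MeasurableSpace Ω] (μ : Measure Ω) [IsProbabilityMeasure μ]
    (X : Idx n → Ω → ℝ) (hmeas : ∀ i, Measurable (X i))
    (hunif : ∀ i, μ.map (X i) = volume.restrict (Icc (0:ℝ) 1))
    (hindep : iIndepFun X μ) :
    μ.map (fun ω i => X i ω) = Measure.pi (fun _ : Idx n => unif) := by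
  refine (Measure.pi_eq (μ := fun _ : Idx n => unif) fun s hs => ?_).symm
  rw [Measure.map_apply (measurable_pi_lambda _ hmeas) (MeasurableSet.univ_pi hs)]
  have hpre : (fun ω i => X i ω) ⁻¹' (univ.pi s) = ⋂ i, X i ⁻¹' s i := by
    ext ω; simp [Set.mem_univ_pi, Set.mem_iInter]
  rw [hpre]
  have h := (iIndepFun_iff_measure_inter_preimage_eq_mul.mp hindep) Finset.univ
    (fun i _ => hs i)
  rw [show (⋂ i ∈ Finset.univ, X i ⁻¹' s i) = ⋂ i, X i ⁻¹' s i from by simp] at h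
  rw [h]
  exact Finset.prod_congr rfl fun i _ => by
    rw [← Measure.map_apply (hmeas i) (hs i), hunif i]; rfl

lemma cross {t : ℝ} {l lb : Fin k} {c : ∀ l', Option (Fin (n l' + 1))} {f : Idx n → ℝ}
    (hll : ¬(lb = l)) (hf : f ∈ DSet n t l c) (hxb : t ≤ f (m0 n lb)) :
    f (m0 n l) < f (m0 n lb) := by
  have hne : ¬((⟨lb, Fin.last (n lb)⟩ : Idx n) = m0 n l) := by
    intro h
    exact hll (congrArg Sigma.fst h)
  rcases hcl : c lb with _ | p
  · exact DSet_lt_of_tag1 hf (tag_none hcl hne)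
  · by_cases hpl : Fin.last (n lb) = p
    · exfalso
      rw [← hpl] at hcl
      have hlt := DSet_pivot_lt hf (tag_pivot hcl hne)
      exact absurd hxb (not_le.mpr hlt)
    · have hplt : p < Fin.last (n lb) := lt_of_le_of_ne (Fin.le_last p) (fun h => hpl h.symm)
      exact DSet_lt_of_tag1 hf (tag_tail hcl hne hplt)

lemma dis1 {t : ℝ} {l lb : Fin k} {c cb : ∀ l', Option (Fin (n l' + 1))} {f : Idx n → ℝ}
    (hll : ¬(l = lb)) (hf : f ∈ DSet n t l c) (hfb : f ∈ DSet n t lb cb) : False := by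
  have h1 := cross (fun h => hll h.symm) hf hfb.1.1
  have h2 := cross hll hfb hf.1.1
  exact lt_asymm h1 h2

lemma some_mem_Jf {l l'' : Fin k} {c : ∀ l', Option (Fin (n l' + 1))} (hc : c ∈ Af n l)
    {p : Fin (n l'' + 1)} (hcl : c l'' = some p) : p ∈ Jf n l l'' := by
  have h := Fintype.mem_piFinset.mp hc l''
  rw [hcl, Bf] at h
  rcases Finset.mem_insert.mp h with h | h
  · exact absurd h (by simp)
  · rcases Finset.mem_image.mp h with ⟨q, hq, hqe⟩
    obtain rfl : q = p := Option.some_injective _ hqe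
    exact hq

lemma dis2 {t : ℝ} {l : Fin k} {c cb : ∀ l', Option (Fin (n l' + 1))} {f : Idx n → ℝ}
    (hc : c ∈ Af n l) (hcb : cb ∈ Af n l) (hne : c ≠ cb)
    (hf : f ∈ DSet n t l c) (hfb : f ∈ DSet n t l cb) : False := by
  obtain ⟨l'', hl''⟩ := Function.ne_iff.mp hne
  have htf : t ≤ f (m0 n l) := hf.1.1
  rcases hco : c l'' with _ | p <;> rcases hcbo : cb l'' with _ | q
  · exact hl'' (hco.trans hcbo.symm)
  · have hqJ := some_mem_Jf hcb hcbo
    have hqne : ¬((⟨l'', q⟩ : Idx n) = m0 n l) := (Finset.mem_filter.mp hqJ).2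
    have hlt := DSet_lt_of_tag1 hf (tag_none hco hqne)
    have hpv := DSet_pivot_lt hfb (tag_pivot hcbo hqne)
    linarith
  · have hpJ := some_mem_Jf hc hco
    have hpne : ¬((⟨l'', p⟩ : Idx n) = m0 n l) := (Finset.mem_filter.mp hpJ).2
    have hlt := DSet_lt_of_tag1 hfb (tag_none hcbo hpne)
    have hpv := DSet_pivot_lt hf (tag_pivot hco hpne)
    linarith
  · have hpq : ¬(p = q) := fun h => hl'' (by rw [hco, hcbo, h])
    have hpJ := some_mem_Jf hc hco
    have hqJ := some_mem_Jf hcb hcbo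
    have hpne : ¬((⟨l'', p⟩ : Idx n) = m0 n l) := (Finset.mem_filter.mp hpJ).2
    have hqne : ¬((⟨l'', q⟩ : Idx n) = m0 n l) := (Finset.mem_filter.mp hqJ).2
    rcases lt_or_gt_of_ne hpq with hlt | hlt
    · have h1 := DSet_lt_of_tag1 hf (tag_tail hco hqne hlt)
      have h2 := DSet_pivot_lt hfb (tag_pivot hcbo hqne)
      linarith
    · have h1 := DSet_lt_of_tag1 hfb (tag_tail hcbo hpne hlt)
      have h2 := DSet_pivot_lt hf (tag_pivot hco hpne)
      linarith

lemma l_bound {t : ℝ} (hk : 2 ≤ k) (ht0 : 0 < t) (ht1 : t < 1) (l : Fin k) :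
    ENNReal.ofReal ((t - t ^ k) / ((k:ℝ) - 1))
      ≤ ∑ c ∈ Af n l, Measure.pi (fun _ : Idx n => unif) (DSet n t l c) := by
  have hmeasInt : ∀ c : ∀ l', Option (Fin (n l' + 1)),
      Measurable fun x => ∏ i : Idx n, uVal t (tagOf n l c i) x :=
    fun c => Finset.measurable_prod _ fun i _ => uVal_measurable t _
  calc ENNReal.ofReal ((t - t ^ k) / ((k:ℝ) - 1))
      ≤ ∫⁻ x in Icc t 1, ENNReal.ofReal ((t / x) ^ k) ∂unif := integral_part hk ht0 ht1
    _ ≤ ∫⁻ x in Icc t 1, ∑ c ∈ Af n l, ∏ i : Idx n, uVal t (tagOf n l c i) x ∂unif := by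
        refine setLIntegral_mono (Finset.measurable_sum _ fun c _ => hmeasInt c) ?_
        intro x hx
        exact sum_Af_ge l ht0 hx.1 hx.2
    _ = ∑ c ∈ Af n l, ∫⁻ x in Icc t 1, ∏ i : Idx n, uVal t (tagOf n l c i) x ∂unif := by
        rw [lintegral_finset_sum _ fun c _ => hmeasInt c]
    _ = _ := Finset.sum_congr rfl fun c _ => (DSet_measure ht0 ht1.le l c).symm



lemma sound {Ω : Type*} (t : ℝ) (X : Idx n → Ω → ℝ) {l : Fin k}
    {c : ∀ l', Option (Fin (n l' + 1))} (hc : c ∈ Af n l) {ω : Ω}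
    (hf : (fun i => X i ω) ∈ DSet n t l c) : ω ∈ SuccessSet t X := by
  refine ⟨l, hf.1, ?_⟩
  intro l' j hrec hj
  by_cases hm : (⟨l', j⟩ : Idx n) = m0 n l
  · exact le_of_eq (congrArg (fun i : Idx n => X i ω) hm.symm)
  · rcases hcl : c l' with _ | p
    · exact (DSet_lt_of_tag1 hf (tag_none hcl hm)).le
    · have hpJ := some_mem_Jf hc hcl
      have hpne : ¬((⟨l', p⟩ : Idx n) = m0 n l) := (Finset.mem_filter.mp hpJ).2
      by_cases hjp : j = p
      · exfalso
        have hpv := DSet_pivot_lt hf (tag_pivot hcl hpne)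
        rw [hjp] at hj
        exact absurd hj.1 (not_le.mpr hpv)
      · by_cases hpj : p < j
        · exact (DSet_lt_of_tag1 hf (tag_tail hcl hm hpj)).le
        · exfalso
          have hjlt : j < p := lt_of_le_of_ne (le_of_not_gt hpj) hjp
          have hpv : X ⟨l', p⟩ ω < t := DSet_pivot_lt hf (tag_pivot hcl hpne)
          have hrp : p < j := hrec p (lt_of_lt_of_le hpv hj.1)
          exact lt_asymm hjlt hrp

end SecretaryAux

open SecretaryAux in
/-- **Theorem.** With `k ≥ 2` classes of options of sizes `n l + 1 ≥ 1`, all arrival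
times independent and uniform on `[0,1]`, for every threshold `t ∈ (0,1)` the success
probability `p(t)` of the strategy `σ_t` satisfies
`p(t) ≥ h_k(t) = (k/(k-1)) (t - t^k)`. -/
theorem success_prob_ge_hk
    {Ω : Type*} [MeasurableSpace Ω] (μ : Measure Ω) [IsProbabilityMeasure μ]
    (k : ℕ) (hk : 2 ≤ k) (n : Fin k → ℕ)
    (X : (Σ l : Fin k, Fin (n l + 1)) → Ω → ℝ)
    (hmeas : ∀ idx, Measurable (X idx))
    (hunif : ∀ idx, μ.map (X idx) = volume.restrict (Icc (0 : ℝ) 1))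
    (hindep : iIndepFun X μ)
    (t : ℝ) (ht : t ∈ Ioo (0 : ℝ) 1) :
    ENNReal.ofReal ((k : ℝ) / ((k : ℝ) - 1) * (t - t ^ k)) ≤ μ (SuccessSet t X) := by
  obtain ⟨ht0, ht1⟩ := ht
  have hΦ : Measurable (fun ω (i : Idx n) => X i ω) := measurable_pi_lambda _ hmeas
  have hlaw : μ.map (fun ω (i : Idx n) => X i ω)
      = Measure.pi (fun _ : Idx n => unif) :=
    map_eq_pi μ X hmeas hunif hindep
  set U : Set (Idx n → ℝ) := ⋃ l : Fin k, ⋃ c ∈ Af n l, DSet n t l c with hUdef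
  have hUmeas : MeasurableSet U := MeasurableSet.iUnion fun l =>
    (Af n l).measurableSet_biUnion fun c _ => DSet_measurableSet t l c
  have hsub : (fun ω (i : Idx n) => X i ω) ⁻¹' U ⊆ SuccessSet t X := by
    intro ω hω
    simp only [hUdef, mem_preimage, Set.mem_iUnion] at hω
    obtain ⟨l, c, hc, hf⟩ := hω
    exact sound t X hc hf
  have step1 : μ ((fun ω (i : Idx n) => X i ω) ⁻¹' U) ≤ μ (SuccessSet t X) :=
    measure_mono hsub
  have step2 : μ ((fun ω (i : Idx n) => X i ω) ⁻¹' U)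
      = Measure.pi (fun _ : Idx n => unif) U := by
    rw [← hlaw, Measure.map_apply hΦ hUmeas]
  have hPU : Measure.pi (fun _ : Idx n => unif) U
      = ∑ l : Fin k, ∑ c ∈ Af n l,
          Measure.pi (fun _ : Idx n => unif) (DSet n t l c) := by
    rw [hUdef, measure_iUnion ?_ ?_]
    · rw [tsum_fintype]
      refine Finset.sum_congr rfl fun l _ => ?_
      refine measure_biUnion_finset ?_ (fun c _ => DSet_measurableSet t l c)
      intro c hcmem cb hcbmem hne
      refine Set.disjoint_left.mpr fun {f} hf hfb => ?_
      exact absurd (dis2 hcmem hcbmem hne hf hfb) not_false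
    · intro l lb hll
      refine Set.disjoint_left.mpr fun {f} hf hfb => ?_
      simp only [Set.mem_iUnion] at hf hfb
      obtain ⟨c, -, hfc⟩ := hf
      obtain ⟨cb, -, hfcb⟩ := hfb
      exact absurd (dis1 hll hfc hfcb) not_false
    · intro l
      exact (Af n l).measurableSet_biUnion fun c _ => DSet_measurableSet t l c
  have hsum : ∑ l : Fin k, ENNReal.ofReal ((t - t ^ k) / ((k:ℝ) - 1))
      ≤ ∑ l : Fin k, ∑ c ∈ Af n l,
          Measure.pi (fun _ : Idx n => unif) (DSet n t l c) :=
    Finset.sum_le_sum fun l _ => l_bound hk ht0 ht1 l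
  have hconst : ENNReal.ofReal ((k : ℝ) / ((k : ℝ) - 1) * (t - t ^ k))
      = ∑ _l : Fin k, ENNReal.ofReal ((t - t ^ k) / ((k:ℝ) - 1)) := by
    rw [Finset.sum_const, Finset.card_univ, Fintype.card_fin, nsmul_eq_mul,
      ← ENNReal.ofReal_natCast k, ← ENNReal.ofReal_mul (Nat.cast_nonneg k)]
    congr 1
    ring
  calc ENNReal.ofReal ((k : ℝ) / ((k : ℝ) - 1) * (t - t ^ k))
      = ∑ _l : Fin k, ENNReal.ofReal ((t - t ^ k) / ((k:ℝ) - 1)) := hconst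
    _ ≤ ∑ l : Fin k, ∑ c ∈ Af n l,
          Measure.pi (fun _ : Idx n => unif) (DSet n t l c) := hsum
    _ = Measure.pi (fun _ : Idx n => unif) U := hPU.symm
    _ = μ ((fun ω (i : Idx n) => X i ω) ⁻¹' U) := step2.symm
    _ ≤ μ (SuccessSet t X) := step1
end

section
/- Consider k ≥ 2 classes of options with n_1, …, n_k ≥ 1 options respectively, all arrival times independent and uniform on [0,1], and let t_k := k^{-1/(k-1)}. Seen as a function of (n_1, …, n_k), the success probability of the strategy σ_{t_k} is monotonically non-increasing in each n_j. -/
open MeasureTheory ProbabilityTheory Set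

/-- The canonical evaluation process on the function space. -/
def evalP (k : ℕ) (n : Fin k → ℕ) :
    (Σ l : Fin k, Fin (n l + 1)) → ((Σ l : Fin k, Fin (n l + 1)) → ℝ) → ℝ :=
  fun idx f => f idx

lemma success_preimage {k : ℕ} {n : Fin k → ℕ} {Ω : Type*} (t : ℝ)
    (X : (Σ l : Fin k, Fin (n l + 1)) → Ω → ℝ) :
    SuccessSet t X = (fun ω idx => X idx ω) ⁻¹' SuccessSet t (evalP k n) := rfl

lemma measurableSet_record {k : ℕ} {n : Fin k → ℕ} (l : Fin k) (i : Fin (n l + 1)) :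
    MeasurableSet {f : (Σ l : Fin k, Fin (n l + 1)) → ℝ | IsRecord (evalP k n) f l i} := by
  have : {f : (Σ l : Fin k, Fin (n l + 1)) → ℝ | IsRecord (evalP k n) f l i} =
      ⋂ j : Fin (n l + 1), {f | f ⟨l, j⟩ < f ⟨l, i⟩ → j < i} := by
    ext f; simp [IsRecord, evalP, Set.mem_iInter]
  rw [this]
  refine MeasurableSet.iInter fun j => ?_
  by_cases hj : j < i
  · have : {f : (Σ l : Fin k, Fin (n l + 1)) → ℝ | f ⟨l, j⟩ < f ⟨l, i⟩ → j < i} = univ := by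
      ext f; simp [hj]
    rw [this]; exact MeasurableSet.univ
  · have : {f : (Σ l : Fin k, Fin (n l + 1)) → ℝ | f ⟨l, j⟩ < f ⟨l, i⟩ → j < i} =
        {f | f ⟨l, j⟩ < f ⟨l, i⟩}ᶜ := by
      ext f; simp [hj]
    rw [this]
    have h1 : Measurable fun f : (Σ l : Fin k, Fin (n l + 1)) → ℝ => f ⟨l, j⟩ :=
      measurable_pi_apply _
    have h2 : Measurable fun f : (Σ l : Fin k, Fin (n l + 1)) → ℝ => f ⟨l, i⟩ :=
      measurable_pi_apply _
    exact (measurableSet_lt h1 h2).compl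

lemma measurableSet_success {k : ℕ} {n : Fin k → ℕ} (t : ℝ) :
    MeasurableSet (SuccessSet t (evalP k n)) := by
  have : SuccessSet t (evalP k n) =
      ⋃ l : Fin k, ({f : (Σ l : Fin k, Fin (n l + 1)) → ℝ | f ⟨l, Fin.last (n l)⟩ ∈ Icc t 1} ∩
        ⋂ (l' : Fin k) (j : Fin (n l' + 1)),
          ({f : (Σ l : Fin k, Fin (n l + 1)) → ℝ | IsRecord (evalP k n) f l' j} ∩
            {f | f ⟨l', j⟩ ∈ Icc t 1})ᶜ ∪ {f | f ⟨l, Fin.last (n l)⟩ ≤ f ⟨l', j⟩}) := by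
    ext f
    simp only [SuccessSet, evalP, mem_setOf_eq, mem_iUnion, mem_inter_iff, mem_iInter,
      mem_union, mem_compl_iff, not_and]
    constructor
    · rintro ⟨l, h1, h2⟩
      refine ⟨l, h1, fun l' j => ?_⟩
      by_cases hr : IsRecord (evalP k n) f l' j
      · by_cases hb : f ⟨l', j⟩ ∈ Icc t 1
        · exact Or.inr (h2 l' j hr hb)
        · exact Or.inl fun _ => hb
      · exact Or.inl fun h => absurd h hr
    · rintro ⟨l, h1, h2⟩
      refine ⟨l, h1, fun l' j hr hb => ?_⟩
      rcases h2 l' j with h | h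
      · exact absurd hb (h hr)
      · exact h
  rw [this]
  refine MeasurableSet.iUnion fun l => ?_
  have hl : Measurable fun f : (Σ l : Fin k, Fin (n l + 1)) → ℝ => f ⟨l, Fin.last (n l)⟩ :=
    measurable_pi_apply _
  refine (hl measurableSet_Icc).inter ?_
  refine MeasurableSet.iInter fun l' => MeasurableSet.iInter fun j => ?_
  have hj : Measurable fun f : (Σ l : Fin k, Fin (n l + 1)) → ℝ => f ⟨l', j⟩ :=
    measurable_pi_apply _
  exact (((measurableSet_record l' j).inter (hj measurableSet_Icc)).compl).union
    (measurableSet_le hl hj)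

lemma indep_reindex {ι₁ ι₂ : Type*} {Ω : Type*} [MeasurableSpace Ω]
    {μ : Measure Ω} [IsProbabilityMeasure μ] (E : ι₁ → ι₂) (hE : Function.Injective E)
    {Y : ι₂ → Ω → ℝ} (h : iIndepFun Y μ) :
    iIndepFun (fun i => Y (E i)) μ := by
  classical
  rw [iIndepFun_iff_measure_inter_preimage_eq_mul] at h ⊢
  intro S sets hsets
  rcases isEmpty_or_nonempty ι₁ with hempty | hne
  · have : S = ∅ := Finset.eq_empty_of_isEmpty S
    simp [this]
  · set r := Function.invFun E with hr_def
    have hr : ∀ i, r (E i) = i := Function.leftInverse_invFun hE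
    have h1 : (⋂ i ∈ S, (fun i => Y (E i)) i ⁻¹' sets i) =
        ⋂ j ∈ S.image E, Y j ⁻¹' sets (r j) := by
      ext x
      simp only [Set.mem_iInter, Finset.mem_image]
      constructor
      · rintro hx j ⟨i, hi, rfl⟩
        rw [hr]; exact hx i hi
      · intro hx i hi
        have := hx (E i) ⟨i, hi, rfl⟩
        rwa [hr] at this
    have h2 := h (S.image E) (sets := fun j => sets (r j)) (fun j hj => by
      obtain ⟨i, hi, rfl⟩ := Finset.mem_image.mp hj
      simpa only [hr] using hsets i hi)
    rw [h1, h2, Finset.prod_image (fun i _ j _ hij => hE hij)]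
    exact Finset.prod_congr rfl fun i _ => by simp only [hr]

lemma map_eq_pi {ι : Type*} [Fintype ι] {Ω : Type*} [MeasurableSpace Ω]
    (μ : Measure Ω) [IsProbabilityMeasure μ] (X : ι → Ω → ℝ)
    (hmeas : ∀ i, Measurable (X i))
    (hunif : ∀ i, μ.map (X i) = volume.restrict (Icc (0 : ℝ) 1))
    (hindep : iIndepFun X μ) :
    μ.map (fun ω i => X i ω) =
      Measure.pi (fun _ : ι => volume.restrict (Icc (0 : ℝ) 1)) := by
  have hF : Measurable fun ω (i : ι) => X i ω := measurable_pi_lambda _ hmeas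
  refine (Measure.pi_eq fun s hs => ?_).symm
  rw [Measure.map_apply hF (MeasurableSet.univ_pi fun i => hs i)]
  have h1 : (fun ω (i : ι) => X i ω) ⁻¹' (univ.pi s) = ⋂ i, X i ⁻¹' s i := by
    ext ω; simp [Set.mem_pi]
  rw [h1, hindep.meas_iInter fun i => ⟨s i, hs i, rfl⟩]
  exact Finset.prod_congr rfl fun i _ => by
    rw [← hunif i, Measure.map_apply (hmeas i) (hs i)]

/-- Embedding of `Fin (n+1)` onto the top `n+1` indices of `Fin (m+1)`. -/
def embF {n m : ℕ} (h : n ≤ m) : Fin (n + 1) → Fin (m + 1) :=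
  fun i => ⟨i + (m - n), by omega⟩

lemma embF_lt_iff {n m : ℕ} (h : n ≤ m) {i j : Fin (n + 1)} :
    embF h i < embF h j ↔ i < j := by
  simp only [embF, Fin.lt_def]; omega

lemma embF_last {n m : ℕ} (h : n ≤ m) : embF h (Fin.last n) = Fin.last m := by
  apply Fin.ext; simp only [embF, Fin.last]; omega

lemma embF_injective {n m : ℕ} (h : n ≤ m) : Function.Injective (embF h) := by
  intro i j hij
  have := congrArg Fin.val hij
  simp only [embF] at this
  exact Fin.ext (by omega)

/-- The key pointwise coupling: the success set for the full family is contained in the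
success set for the subfamily consisting of the top `n l + 1` options of each class. -/
lemma success_subset {k : ℕ} {n m : Fin k → ℕ} (hnm : ∀ l, n l ≤ m l) {Ω : Type*} (t : ℝ)
    (Y : (Σ l : Fin k, Fin (m l + 1)) → Ω → ℝ) :
    SuccessSet t Y ⊆
      SuccessSet t (fun idx : Σ l : Fin k, Fin (n l + 1) =>
        Y ⟨idx.1, embF (hnm idx.1) idx.2⟩) := by
  rintro ω ⟨l, h1, h2⟩
  have hlast : ∀ l : Fin k,
      Y ⟨l, embF (hnm l) (Fin.last (n l))⟩ ω = Y ⟨l, Fin.last (m l)⟩ ω := by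
    intro l; rw [embF_last]
  refine ⟨l, ?_, ?_⟩
  · show Y ⟨l, embF (hnm l) (Fin.last (n l))⟩ ω ∈ Icc t 1
    rw [hlast l]; exact h1
  intro l' j hrec hmem
  -- transfer the record property to the full family
  have hrec' : IsRecord Y ω l' (embF (hnm l') j) := by
    intro J hJ
    by_cases hc : (m l' - n l') ≤ J.val
    · obtain ⟨j', rfl⟩ : ∃ j' : Fin (n l' + 1), embF (hnm l') j' = J := by
        have hJlt : (J : ℕ) < m l' + 1 := J.isLt
        refine ⟨⟨J.val - (m l' - n l'), by omega⟩, Fin.ext ?_⟩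
        show (J.val - (m l' - n l')) + (m l' - n l') = J.val
        omega
      exact (embF_lt_iff (hnm l')).mpr (hrec j' hJ)
    · simp only [Fin.lt_def, embF]; omega
  have := h2 l' (embF (hnm l') j) hrec' hmem
  show Y ⟨l, embF (hnm l) (Fin.last (n l))⟩ ω ≤ Y ⟨l', embF (hnm l') j⟩ ω
  rw [hlast l]; exact this

/-- **Theorem (monotonicity in the class sizes).**  With `k ≥ 2` classes and
`t_k = k^(-1/(k-1))`, the success probability of the strategy `σ_{t_k}`, seen as a
function of the class sizes, is monotonically non-increasing in each class size:
if class sizes `m l + 1` dominate class sizes `n l + 1` componentwise, then the success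
probability for sizes `m` is at most the success probability for sizes `n` (for any two
models, i.e. probability spaces carrying independent uniform-`[0,1]` arrival times with
the respective class sizes). -/
theorem success_prob_antitone
    {Ω₁ : Type*} [MeasurableSpace Ω₁] (μ₁ : Measure Ω₁) [IsProbabilityMeasure μ₁]
    {Ω₂ : Type*} [MeasurableSpace Ω₂] (μ₂ : Measure Ω₂) [IsProbabilityMeasure μ₂]
    (k : ℕ) (hk : 2 ≤ k) (n m : Fin k → ℕ) (hnm : ∀ l, n l ≤ m l)
    (X : (Σ l : Fin k, Fin (n l + 1)) → Ω₁ → ℝ)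
    (hXmeas : ∀ idx, Measurable (X idx))
    (hXunif : ∀ idx, μ₁.map (X idx) = volume.restrict (Icc (0 : ℝ) 1))
    (hXindep : iIndepFun X μ₁)
    (Y : (Σ l : Fin k, Fin (m l + 1)) → Ω₂ → ℝ)
    (hYmeas : ∀ idx, Measurable (Y idx))
    (hYunif : ∀ idx, μ₂.map (Y idx) = volume.restrict (Icc (0 : ℝ) 1))
    (hYindep : iIndepFun Y μ₂) :
    μ₂ (SuccessSet ((k : ℝ) ^ (-(1 : ℝ) / ((k : ℝ) - 1))) Y) ≤
      μ₁ (SuccessSet ((k : ℝ) ^ (-(1 : ℝ) / ((k : ℝ) - 1))) X) := by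
  set t : ℝ := (k : ℝ) ^ (-(1 : ℝ) / ((k : ℝ) - 1)) with ht
  -- the reindexing map picking out the top `n l + 1` options of each class
  set E : (Σ l : Fin k, Fin (n l + 1)) → (Σ l : Fin k, Fin (m l + 1)) :=
    fun idx => ⟨idx.1, embF (hnm idx.1) idx.2⟩ with hE_def
  have hE : Function.Injective E := by
    rintro ⟨l, i⟩ ⟨l', i'⟩ h
    obtain ⟨rfl, h2⟩ := Sigma.mk.inj_iff.mp h
    exact Sigma.mk.inj_iff.mpr ⟨rfl, heq_of_eq (embF_injective (hnm l) (eq_of_heq h2))⟩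
  set X' : (Σ l : Fin k, Fin (n l + 1)) → Ω₂ → ℝ := fun idx => Y (E idx) with hX'_def
  have hX'meas : ∀ idx, Measurable (X' idx) := fun idx => hYmeas (E idx)
  have hX'unif : ∀ idx, μ₂.map (X' idx) = volume.restrict (Icc (0 : ℝ) 1) :=
    fun idx => hYunif (E idx)
  have hX'indep : iIndepFun X' μ₂ := indep_reindex E hE hYindep
  have step1 : μ₂ (SuccessSet t Y) ≤ μ₂ (SuccessSet t X') :=
    measure_mono (success_subset hnm t Y)
  have hFX : Measurable fun ω (idx : Σ l : Fin k, Fin (n l + 1)) => X idx ω :=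
    measurable_pi_lambda _ hXmeas
  have hFX' : Measurable fun ω (idx : Σ l : Fin k, Fin (n l + 1)) => X' idx ω :=
    measurable_pi_lambda _ hX'meas
  have step2 : μ₂ (SuccessSet t X') = μ₁ (SuccessSet t X) := by
    rw [success_preimage t X', success_preimage t X,
      ← Measure.map_apply hFX' (measurableSet_success t),
      ← Measure.map_apply hFX (measurableSet_success t),
      map_eq_pi μ₂ X' hX'meas hX'unif hX'indep,
      map_eq_pi μ₁ X hXmeas hXunif hXindep]
  exact step1.trans_eq step2
end

section
/- Consider k ≥ 2 classes of options with n_1, …, n_k ≥ 1 options respectively, all arrival times independent and uniform on [0,1], and let t_k := k^{-1/(k-1)}. Then the success probability of the strategy σ_{t_k}, seen as a function of (n_1, …, n_k), converges to t_k as min_{1 ≤ j ≤ k} n_j → ∞. In particular, the lower bound t_k for the success probability of σ_{t_k} is sharp. -/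
open MeasureTheory ProbabilityTheory Set

namespace SP


noncomputable def phi (t : ℝ) (m : ℕ) (s : ℝ) : ℝ :=
  (1-s)^m + t * ∑ u ∈ Finset.range m, (1-s)^u

lemma phi_eq {t s : ℝ} (hs : 0 < s) (m : ℕ) :
    phi t m s = t/s + (1-s)^m * (1 - t/s) := by
  have h1 : (1-s) ≠ 1 := by intro h; rw [sub_eq_self] at h; exact hs.ne' h
  have hd : (1:ℝ)-s-1 = -s := by ring
  rw [phi, geom_sum_eq h1, hd]
  rw [div_neg, mul_neg]
  field_simp
  ring

lemma continuous_phi (t : ℝ) (m : ℕ) : Continuous (phi t m) := by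
  unfold phi
  exact ((continuous_const.sub continuous_id).pow m).add
    (continuous_const.mul (continuous_finset_sum _ fun u _ =>
      (continuous_const.sub continuous_id).pow u))

variable {t s : ℝ}

lemma phi_lb (ht : 0 < t) (hts : t ≤ s) (hs1 : s ≤ 1) (m : ℕ) : t/s ≤ phi t m s := by
  have hs : 0 < s := lt_of_lt_of_le ht hts
  rw [phi_eq hs]
  have h1 : 0 ≤ (1-s)^m := pow_nonneg (by linarith) m
  have h2 : t/s ≤ 1 := (div_le_one hs).2 hts
  nlinarith

lemma phi_ub_one (ht : 0 < t) (hts : t ≤ s) (hs1 : s ≤ 1) (m : ℕ) : phi t m s ≤ 1 := by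
  have hs : 0 < s := lt_of_lt_of_le ht hts
  rw [phi_eq hs]
  have h1 : (1-s)^m ≤ 1 := pow_le_one₀ (by linarith) (by linarith)
  have h1' : 0 ≤ (1-s)^m := pow_nonneg (by linarith) m
  have h2 : t/s ≤ 1 := (div_le_one hs).2 hts
  nlinarith

lemma phi_ub (ht : 0 < t) (hts : t ≤ s) (hs1 : s ≤ 1) {N m : ℕ} (hm : N ≤ m) (ht1 : t ≤ 1) :
    phi t m s ≤ t/s + (1-t)^N := by
  have hs : 0 < s := lt_of_lt_of_le ht hts
  rw [phi_eq hs]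
  have h2 : t/s ≤ 1 := (div_le_one hs).2 hts
  have h3 : (1-s)^m ≤ (1-t)^N := by
    calc (1-s)^m ≤ (1-s)^N := pow_le_pow_of_le_one (by linarith) (by linarith) hm
    _ ≤ (1-t)^N := pow_le_pow_left₀ (by linarith) (by linarith) N
  have h4 : 0 ≤ (1-s)^m := pow_nonneg (by linarith) m
  have h5 : (1-s)^m * (1 - t/s) ≤ (1-s)^m := mul_le_of_le_one_right h4 (by have := div_nonneg ht.le hs.le; linarith)
  linarith

/-- product bound by induction -/
lemma prod_le_pow_add {α : Type*} (F : Finset α) {A e : ℝ} (hA0 : 0 ≤ A) (hA1 : A ≤ 1)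
    (he : 0 ≤ e) {f : α → ℝ} (h0 : ∀ c ∈ F, 0 ≤ f c) (h1 : ∀ c ∈ F, f c ≤ 1)
    (h2 : ∀ c ∈ F, f c ≤ A + e) :
    ∏ c ∈ F, f c ≤ A ^ F.card + F.card * e := by
  classical
  induction F using Finset.induction_on with
  | empty => simp
  | @insert a F' hx ih =>
    rw [Finset.prod_insert hx, Finset.card_insert_of_notMem hx]
    have hprodle : ∏ c ∈ F', f c ≤ A ^ F'.card + F'.card * e :=
      ih (fun c hc => h0 c (Finset.mem_insert_of_mem hc))
        (fun c hc => h1 c (Finset.mem_insert_of_mem hc))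
        (fun c hc => h2 c (Finset.mem_insert_of_mem hc))
    have hprod0 : 0 ≤ ∏ c ∈ F', f c :=
      Finset.prod_nonneg (fun c hc => h0 c (Finset.mem_insert_of_mem hc))
    have hprod1 : ∏ c ∈ F', f c ≤ 1 :=
      Finset.prod_le_one (fun c hc => h0 c (Finset.mem_insert_of_mem hc))
        (fun c hc => h1 c (Finset.mem_insert_of_mem hc))
    have hfa0 : 0 ≤ f a := h0 a (Finset.mem_insert_self _ _)
    have hfa1 : f a ≤ 1 := h1 a (Finset.mem_insert_self _ _)
    have hfa2 : f a ≤ A + e := h2 a (Finset.mem_insert_self _ _)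
    have hApow : A ^ F'.card ≤ 1 := pow_le_one₀ hA0 hA1
    calc f a * ∏ c ∈ F', f c ≤ f a * (A ^ F'.card + F'.card * e) := by
          apply mul_le_mul_of_nonneg_left hprodle hfa0
      _ = f a * A ^ F'.card + f a * (F'.card * e) := by ring
      _ ≤ (A + e) * A ^ F'.card + 1 * (F'.card * e) := by
          apply add_le_add
          · exact mul_le_mul_of_nonneg_right hfa2 (pow_nonneg hA0 _)
          · exact mul_le_mul_of_nonneg_right hfa1 (by positivity)
      _ = A ^ (F'.card + 1) + (A ^ F'.card * e + F'.card * e) := by ring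
      _ ≤ A ^ (F'.card + 1) + (1 * e + F'.card * e) := by
          apply add_le_add_right; apply add_le_add_left
          exact mul_le_mul_of_nonneg_right hApow he
      _ = A ^ (F'.card + 1) + ((F'.card : ℝ) + 1) * e := by ring
      _ = A ^ (F'.card + 1) + (↑(F'.card + 1) : ℝ) * e := by push_cast; ring



lemma tk_facts (k : ℕ) (hk : 2 ≤ k) :
    0 < (k:ℝ) ^ (-(1:ℝ) / ((k:ℝ) - 1)) ∧ (k:ℝ) ^ (-(1:ℝ) / ((k:ℝ) - 1)) < 1 ∧
      ((k:ℝ) ^ (-(1:ℝ) / ((k:ℝ) - 1))) ^ (k - 1) = (k:ℝ)⁻¹ := by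
  have hk1 : (1:ℝ) < (k:ℝ) := by exact_mod_cast hk.trans_lt' one_lt_two
  have hkpos : (0:ℝ) < k := by linarith
  have hden : (0:ℝ) < (k:ℝ) - 1 := by linarith
  have hexp : -(1:ℝ) / ((k:ℝ) - 1) < 0 := div_neg_of_neg_of_pos (by norm_num) hden
  refine ⟨Real.rpow_pos_of_pos hkpos _, Real.rpow_lt_one_of_one_lt_of_neg hk1 hexp, ?_⟩
  have hcast : ((k - 1 : ℕ) : ℝ) = (k:ℝ) - 1 := by
    have := Nat.cast_sub (le_trans one_le_two hk) (R := ℝ) (m := 1) (n := k)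
    simpa using this
  rw [← Real.rpow_natCast ((k:ℝ) ^ (-(1:ℝ) / ((k:ℝ) - 1))) (k-1), ← Real.rpow_mul hkpos.le,
    hcast]
  rw [div_mul_cancel₀ _ hden.ne']
  rw [Real.rpow_neg_one]

lemma integral_main (k : ℕ) (hk : 2 ≤ k) {t : ℝ} (ht : 0 < t) (ht1 : t < 1)
    (htk : t ^ (k - 1) = (k:ℝ)⁻¹) :
    ∫ s in Icc t 1, (k:ℝ) * (t/s)^k = t := by
  have hkpos : (0:ℝ) < k := by positivity
  rw [integral_Icc_eq_integral_Ioc, ← intervalIntegral.integral_of_le ht1.le]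
  have hcong : EqOn (fun s => (k:ℝ) * (t/s)^k) (fun s => ((k:ℝ) * t^k) * s ^ (-(k:ℤ)))
      (uIcc t 1) := by
    intro s hs
    rw [uIcc_of_le ht1.le] at hs
    have hs0 : 0 < s := lt_of_lt_of_le ht hs.1
    simp only
    rw [div_pow, zpow_neg, zpow_natCast, div_eq_mul_inv]
    ring
  rw [intervalIntegral.integral_congr hcong, intervalIntegral.integral_const_mul,
    integral_zpow]
  · have h1k : t ^ ((-(k:ℤ)) + 1) = (k:ℝ) := by
      have : (-(k:ℤ)) + 1 = -((k:ℤ) - 1) := by ring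
      rw [this, zpow_neg]
      have hc : ((k - 1 : ℕ) : ℤ) = (k:ℤ) - 1 := by
        have := Nat.cast_sub (le_trans one_le_two hk) (R := ℤ) (m := 1) (n := k)
        simpa using this
      rw [← hc, zpow_natCast, htk]
      simp
    rw [one_zpow, h1k]
    have hne : ((-(k:ℤ) : ℝ)) + 1 ≠ 0 := by
      push_cast
      have : (2:ℝ) ≤ k := by exact_mod_cast hk
      intro h; linarith
    have htkk : t ^ k = t / k := by
      have : k = (k-1) + 1 := by omega
      rw [this, pow_succ, htk]
      field_simp
      exact congrArg Nat.cast this.symm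
    rw [htkk]
    have h2 : (2:ℝ) ≤ k := by exact_mod_cast hk
    have h1K : (1:ℝ) - (k:ℝ) ≠ 0 := by intro h; linarith
    push_cast
    rw [show (-(k:ℝ) + 1) = 1 - (k:ℝ) by ring, div_self h1K, mul_one,
      mul_div_cancel₀ _ (by linarith : (k:ℝ) ≠ 0)]
  · refine Or.inr ⟨by omega, ?_⟩
    rw [uIcc_of_le ht1.le]
    rintro ⟨h0, _⟩
    exact absurd h0 (not_le.2 ht)

lemma integrable_flow (k : ℕ) {t : ℝ} (ht : 0 < t) (C : ℝ) :
    IntegrableOn (fun s => (k:ℝ) * (t/s)^k + C) (Icc t 1) volume := by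
  apply ContinuousOn.integrableOn_compact isCompact_Icc
  apply ContinuousOn.add _ continuousOn_const
  apply ContinuousOn.mul continuousOn_const
  apply ContinuousOn.pow
  exact ContinuousOn.div continuousOn_const continuousOn_id
    (fun s hs => (lt_of_lt_of_le ht hs.1).ne')

lemma integral_const_Icc {t : ℝ} (ht1 : t ≤ 1) (C : ℝ) :
    ∫ _ in Icc t 1, C = C * (1 - t) := by
  rw [setIntegral_const, Measure.real, Real.volume_Icc, ENNReal.toReal_ofReal (by linarith), smul_eq_mul]
  ring


variable {k : ℕ} {n : Fin k → ℕ} {Ω : Type}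

noncomputable def unif : Measure ℝ := volume.restrict (Icc 0 1)

instance : IsProbabilityMeasure (unif) := by
  constructor; simp [unif, Real.volume_Icc]

lemma unif_Iio {t : ℝ} (ht : 0 ≤ t) (h1 : t ≤ 1) : unif (Iio t) = ENNReal.ofReal t := by
  rw [unif, Measure.restrict_apply measurableSet_Iio]
  have h : Iio t ∩ Icc (0:ℝ) 1 = Ico 0 t := by
    ext x; simp only [mem_inter_iff, Set.mem_Iio, Set.mem_Icc, Set.mem_Ico]
    constructor
    · rintro ⟨h, h0, _⟩; exact ⟨h0, h⟩
    · rintro ⟨h0, h⟩; exact ⟨h, h0, le_trans (le_of_lt h) h1⟩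
  rw [h, Real.volume_Ico, sub_zero]

lemma unif_Ici {s : ℝ} (h0 : 0 ≤ s) (h1 : s ≤ 1) : unif (Ici s) = ENNReal.ofReal (1 - s) := by
  rw [unif, Measure.restrict_apply measurableSet_Ici]
  have h : Ici s ∩ Icc (0:ℝ) 1 = Icc s 1 := by
    ext x; simp only [mem_inter_iff, Set.mem_Ici, Set.mem_Icc]
    constructor
    · rintro ⟨hs, _, hx1⟩; exact ⟨hs, hx1⟩
    · rintro ⟨hs, hx1⟩; exact ⟨hs, le_trans h0 hs, hx1⟩
  rw [h, Real.volume_Icc]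

lemma unif_singleton (x : ℝ) : unif {x} = 0 := by
  have h1 : unif {x} ≤ volume {x} := by
    rw [unif]
    exact Measure.restrict_apply_le _ _
  rw [Real.volume_singleton] at h1
  exact le_antisymm h1 (zero_le)

variable [MeasurableSpace Ω] {μ : Measure Ω} [IsProbabilityMeasure μ]
  {X : (Σ l : Fin k, Fin (n l + 1)) → Ω → ℝ}

lemma tie_null (hXm : ∀ idx, Measurable (X idx))
    (hXd : ∀ idx, μ.map (X idx) = volume.restrict (Icc (0 : ℝ) 1))
    (hXi : iIndepFun X μ)
    {a b : (Σ l : Fin k, Fin (n l + 1))} (hab : a ≠ b) :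
    μ {ω | X a ω = X b ω} = 0 := by
  have hind : IndepFun (X a) (X b) μ := hXi.indepFun hab
  have hmap : μ.map (fun ω => (X a ω, X b ω)) = (μ.map (X a)).prod (μ.map (X b)) :=
    (indepFun_iff_map_prod_eq_prod_map_map (hXm a).aemeasurable (hXm b).aemeasurable).mp hind
  have hdiag : MeasurableSet {q : ℝ × ℝ | q.1 = q.2} :=
    measurableSet_eq_fun measurable_fst measurable_snd
  have : {ω | X a ω = X b ω} = (fun ω => (X a ω, X b ω)) ⁻¹' {q : ℝ × ℝ | q.1 = q.2} := rfl
  rw [this, ← Measure.map_apply ((hXm a).prodMk (hXm b)) hdiag, hmap, hXd a, hXd b]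
  have : (volume.restrict (Icc (0:ℝ) 1)) = unif := rfl
  rw [this, Measure.prod_apply hdiag]
  have hz : ∀ x : ℝ, unif (Prod.mk x ⁻¹' {q : ℝ × ℝ | q.1 = q.2}) = 0 := by
    intro x
    have : Prod.mk x ⁻¹' {q : ℝ × ℝ | q.1 = q.2} = {x} := by
      ext y; simp [eq_comm]
    rw [this, unif_singleton]
  simp only [hz]
  simp


variable {k : ℕ} {n : Fin k → ℕ} {Ω : Type}

abbrev Idx (n : Fin k → ℕ) : Type := Σ l : Fin k, Fin (n l + 1)
@[reducible] def pp (n : Fin k → ℕ) (l : Fin k) : Idx n := ⟨l, Fin.last (n l)⟩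
def TT (n : Fin k → ℕ) (l : Fin k) : Finset (Idx n) := Finset.univ.erase (pp n l)
lemma mem_TT {l : Fin k} {idx : Idx n} : idx ∈ TT n l ↔ idx ≠ pp n l := by
  simp [TT, Finset.mem_erase]
lemma idx_eq_pp_iff {l c : Fin k} {i : Fin (n c + 1)} :
    (⟨c, i⟩ : Idx n) = pp n l ↔ c = l ∧ (i : ℕ) = n l := by
  constructor
  · intro h
    obtain ⟨h1, h2⟩ := Sigma.mk.inj_iff.mp h
    subst h1
    refine ⟨rfl, ?_⟩
    rw [heq_iff_eq] at h2; rw [h2]; simp [Fin.last]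
  · rintro ⟨rfl, hv⟩
    unfold pp
    congr 1
    apply Fin.ext; simp [Fin.last, hv]

def mm (n : Fin k → ℕ) (l c : Fin k) : ℕ := if c = l then n c else n c + 1

lemma mm_le {l c : Fin k} : mm n l c ≤ n c + 1 := by
  unfold mm; split <;> omega

lemma mem_TT_iff_val {l c : Fin k} {i : Fin (n c + 1)} :
    (⟨c, i⟩ : Idx n) ∈ TT n l ↔ (i : ℕ) < mm n l c := by
  rw [mem_TT]
  rcases eq_or_ne c l with rfl | hcl
  · have hmmeq : mm n c c = n c := by simp [mm]
    rw [hmmeq, Ne, idx_eq_pp_iff]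
    have := i.isLt
    constructor
    · intro h
      by_contra hlt
      exact h ⟨rfl, by omega⟩
    · rintro h ⟨-, hv⟩; omega
  · have hmmeq : mm n l c = n c + 1 := by simp [mm, hcl]
    rw [hmmeq]
    have := i.isLt
    constructor
    · intro _; omega
    · intro _ hEq
      exact hcl (idx_eq_pp_iff.mp hEq).1

def Bs (t s : ℝ) (n : Fin k → ℕ) (l : Fin k) (σ : Fin k → ℕ) (idx : Idx n) : Set ℝ :=
  if idx = pp n l then univ
  else if σ idx.1 ≤ (idx.2 : ℕ) then Ici s
  else if (idx.2 : ℕ) + 1 = σ idx.1 then Iio t else univ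

lemma measurableSet_Bs {t s : ℝ} {l : Fin k} {σ : Fin k → ℕ} (idx : Idx n) :
    MeasurableSet (Bs t s n l σ idx) := by
  unfold Bs
  split
  · exact MeasurableSet.univ
  split
  · exact measurableSet_Ici
  split
  · exact measurableSet_Iio
  · exact MeasurableSet.univ

def piece (t s : ℝ) (X : Idx n → Ω → ℝ) (l : Fin k) (σ : Fin k → ℕ) : Set Ω :=
  ⋂ idx, X idx ⁻¹' (Bs t s n l σ idx)

def choices (n : Fin k → ℕ) (l : Fin k) : Finset (Fin k → ℕ) :=
  Fintype.piFinset (fun c => Finset.range (mm n l c + 1))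

def ES (t s : ℝ) (X : Idx n → Ω → ℝ) (l : Fin k) : Set Ω :=
  {ω | ∀ u : ↥(TT n l), t ≤ X u.1 ω → X u.1 ω < s →
    ∃ v : ↥(TT n l), v.1.1 = u.1.1 ∧ (u.1.2 : ℕ) ≤ (v.1.2 : ℕ) ∧ X v.1 ω < X u.1 ω}

lemma ES_eq_biUnion (t s : ℝ) (X : Idx n → Ω → ℝ) (l : Fin k) :
    ES t s X l = ⋃ σ ∈ choices n l, piece t s X l σ := by
  classical
  ext ω
  simp only [ES, mem_setOf_eq, mem_iUnion, choices, Fintype.mem_piFinset, Finset.mem_range,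
    exists_prop]
  constructor
  · intro hω
    set σ : Fin k → ℕ := fun c => (Finset.univ.filter (fun i : Fin (n c + 1) =>
        (⟨c, i⟩ : Idx n) ∈ TT n l ∧ X ⟨c, i⟩ ω < s)).sup (fun i => (i : ℕ) + 1) with hσdef
    have hσle : ∀ c, σ c ≤ mm n l c := by
      intro c
      apply Finset.sup_le
      intro i hi
      rw [Finset.mem_filter] at hi
      have := mem_TT_iff_val.mp hi.2.1
      omega
    refine ⟨σ, fun c => by have := hσle c; omega, ?_⟩
    rw [piece, mem_iInter]
    rintro ⟨c, i⟩
    rw [mem_preimage]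
    unfold Bs
    split
    · exact mem_univ _
    · rename_i hnp
      have hiT : (⟨c, i⟩ : Idx n) ∈ TT n l := mem_TT.mpr hnp
      split
      · rename_i hle
        -- goal : X ⟨c,i⟩ ω ∈ Ici s
        rw [mem_Ici]
        by_contra hlt
        push_neg at hlt
        have hmemf : i ∈ Finset.univ.filter (fun i : Fin (n c + 1) =>
            (⟨c, i⟩ : Idx n) ∈ TT n l ∧ X ⟨c, i⟩ ω < s) := by
          rw [Finset.mem_filter]; exact ⟨Finset.mem_univ _, hiT, hlt⟩
        have h' : (i : ℕ) + 1 ≤ σ c :=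
          Finset.le_sup (f := fun i : Fin (n c + 1) => (i : ℕ) + 1) hmemf
        dsimp at hle
        omega
      · split
        · rename_i hnle heq
          -- goal : X ⟨c,i⟩ ω ∈ Iio t; know i.val + 1 = σ c, so i attains the sup
          rw [mem_Iio]
          -- first, i is in the filter set: show X ⟨c,i⟩ ω < s
          -- the sup is attained by some i₀
          have hne : (Finset.univ.filter (fun j : Fin (n c + 1) =>
              (⟨c, j⟩ : Idx n) ∈ TT n l ∧ X ⟨c, j⟩ ω < s)).Nonempty := by
            by_contra hemp
            rw [Finset.not_nonempty_iff_eq_empty] at hemp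
            have h0 : σ c = 0 := by show Finset.sup _ _ = 0; rw [hemp]; rfl
            dsimp at heq; omega
          obtain ⟨i₀, hi₀mem, hi₀⟩ := Finset.exists_mem_eq_sup _ hne
            (fun j : Fin (n c + 1) => (j : ℕ) + 1)
          have hσi0 : σ c = (i₀ : ℕ) + 1 := hi₀
          have hi₀eq : i₀ = i := by
            apply Fin.ext
            dsimp at heq; omega
          subst hi₀eq
          rw [Finset.mem_filter] at hi₀mem
          obtain ⟨-, hi₀T, hi₀lt⟩ := hi₀mem
          by_contra hts'
          push_neg at hts'
          obtain ⟨⟨⟨c', j⟩, hv⟩, hc', hjle, hjlt⟩ := hω ⟨⟨c, i₀⟩, hi₀T⟩ hts' hi₀lt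
          dsimp only at hc' hjle hjlt
          subst hc'
          have hjmem : j ∈ Finset.univ.filter (fun j : Fin (n c' + 1) =>
              (⟨c', j⟩ : Idx n) ∈ TT n l ∧ X ⟨c', j⟩ ω < s) := by
            rw [Finset.mem_filter]
            exact ⟨Finset.mem_univ _, hv, lt_trans hjlt hi₀lt⟩
          have h'' : (j : ℕ) + 1 ≤ σ c' :=
            Finset.le_sup (f := fun j : Fin (n c' + 1) => (j : ℕ) + 1) hjmem
          have heq2 : j = i₀ := by apply Fin.ext; omega
          subst heq2
          exact absurd hjlt (lt_irrefl _)
        · exact mem_univ _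
  · rintro ⟨σ, hσb, hpiece⟩
    rintro ⟨⟨c, i⟩, hu⟩ hut hus
    dsimp only at hut hus ⊢
    have havail : (i : ℕ) < mm n l c := mem_TT_iff_val.mp hu
    have hBi := mem_iInter.mp hpiece ⟨c, i⟩
    rw [mem_preimage] at hBi
    unfold Bs at hBi
    rw [if_neg (mem_TT.mp hu)] at hBi
    have h1 : ¬ (σ c ≤ (i : ℕ)) := by
      intro hle
      rw [if_pos hle, mem_Ici] at hBi
      exact absurd hus (not_lt.2 hBi)
    have h2 : ¬ ((i : ℕ) + 1 = σ c) := by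
      intro heq
      rw [if_neg h1, if_pos heq, mem_Iio] at hBi
      exact absurd hut (not_le.2 hBi)
    push_neg at h1
    have hσle : σ c ≤ mm n l c := by have := hσb c; omega
    have hmle : mm n l c ≤ n c + 1 := mm_le
    have hjlt : σ c - 1 < n c + 1 := by omega
    set j : Fin (n c + 1) := ⟨σ c - 1, hjlt⟩ with hjdef
    have hjT : (⟨c, j⟩ : Idx n) ∈ TT n l := mem_TT_iff_val.mpr (by
      show σ c - 1 < mm n l c; omega)
    have hBj := mem_iInter.mp hpiece ⟨c, j⟩
    rw [mem_preimage] at hBj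
    unfold Bs at hBj
    rw [if_neg (mem_TT.mp hjT), if_neg (by show ¬ (σ c ≤ σ c - 1); omega),
      if_pos (by show σ c - 1 + 1 = σ c; omega), mem_Iio] at hBj
    exact ⟨⟨⟨c, j⟩, hjT⟩, rfl, by show (i:ℕ) ≤ σ c - 1; omega, lt_of_lt_of_le hBj hut⟩

lemma piece_disjoint_aux {t s : ℝ} (hts : t ≤ s) (X : Idx n → Ω → ℝ) (l : Fin k)
    {σ σ' : Fin k → ℕ} (hσ' : σ' ∈ choices n l) {c : Fin k} (hlt : σ c < σ' c)
    {ω : Ω} (h1 : ω ∈ piece t s X l σ) (h2 : ω ∈ piece t s X l σ') : False := by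
  have hσ'le : σ' c ≤ mm n l c := by
    rw [choices, Fintype.mem_piFinset] at hσ'
    have := hσ' c; rw [Finset.mem_range] at this; omega
  have hmle : mm n l c ≤ n c + 1 := mm_le
  have hjlt : σ' c - 1 < n c + 1 := by omega
  set j : Fin (n c + 1) := ⟨σ' c - 1, hjlt⟩ with hjdef
  have hjT : (⟨c, j⟩ : Idx n) ∈ TT n l := mem_TT_iff_val.mpr (by
    show σ' c - 1 < mm n l c; omega)
  have hB2 := mem_iInter.mp h2 ⟨c, j⟩
  have hB1 := mem_iInter.mp h1 ⟨c, j⟩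
  rw [mem_preimage] at hB1 hB2
  unfold Bs at hB1 hB2
  rw [if_neg (mem_TT.mp hjT), if_neg (by show ¬ (σ' c ≤ σ' c - 1); omega),
    if_pos (by show σ' c - 1 + 1 = σ' c; omega), mem_Iio] at hB2
  rw [if_neg (mem_TT.mp hjT), if_pos (by show σ c ≤ σ' c - 1; omega), mem_Ici] at hB1
  linarith

lemma piece_disjoint {t s : ℝ} (hts : t ≤ s) (X : Idx n → Ω → ℝ) (l : Fin k) :
    Set.PairwiseDisjoint (choices n l : Set (Fin k → ℕ)) (piece t s X l) := by
  intro σ hσ σ' hσ' hne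
  rw [Function.onFun, Set.disjoint_left]
  intro ω h1 h2
  obtain ⟨c, hc⟩ := Function.ne_iff.mp hne
  rcases lt_or_gt_of_ne hc with h | h
  · exact piece_disjoint_aux hts X l hσ' h h1 h2
  · exact piece_disjoint_aux hts X l hσ h h2 h1



lemma card_filter_Ico {M a b : ℕ} (hb : b ≤ M) :
    (Finset.univ.filter (fun i : Fin M => a ≤ (i : ℕ) ∧ (i : ℕ) < b)).card = b - a := by
  classical
  rw [← Nat.card_Ico]
  refine Finset.card_bij' (fun (i : Fin M) (_ : i ∈ Finset.univ.filter
      (fun i : Fin M => a ≤ (i : ℕ) ∧ (i : ℕ) < b)) => (i : ℕ))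
    (fun (j : ℕ) (hj : j ∈ Finset.Ico a b) =>
      (⟨j, by have := (Finset.mem_Ico.mp hj).2; omega⟩ : Fin M)) ?_ ?_ ?_ ?_
  · intro i hi
    rw [Finset.mem_filter] at hi
    rw [Finset.mem_Ico]
    exact hi.2
  · intro j hj
    rw [Finset.mem_filter]
    refine ⟨Finset.mem_univ _, ?_⟩
    have := Finset.mem_Ico.mp hj
    simpa using this
  · intro i _; rfl
  · intro j _; rfl

lemma card_filter_single {M b r : ℕ} (hr : 1 ≤ r) (hrb : r ≤ b) (hb : b ≤ M) :
    (Finset.univ.filter (fun i : Fin M => (i : ℕ) < b ∧ (i : ℕ) + 1 = r)).card = 1 := by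
  classical
  have hlt : r - 1 < M := by omega
  rw [show (Finset.univ.filter (fun i : Fin M => (i : ℕ) < b ∧ (i : ℕ) + 1 = r)) =
      {(⟨r - 1, hlt⟩ : Fin M)} from ?_]
  · exact Finset.card_singleton _
  · ext i
    rw [Finset.mem_filter, Finset.mem_singleton]
    constructor
    · rintro ⟨-, -, h2⟩
      apply Fin.ext; simp; omega
    · rintro rfl
      simp; omega

lemma card_filter_empty {M b : ℕ} :
    (Finset.univ.filter (fun i : Fin M => (i : ℕ) < b ∧ (i : ℕ) + 1 = 0)).card = 0 := by
  rw [Finset.card_eq_zero, Finset.filter_eq_empty_iff]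
  intro i _
  simp


section AAdef
variable {k : ℕ} {n : Fin k → ℕ} {Ω : Type}
/-- strategy events -/
def AA (t : ℝ) (X : Idx n → Ω → ℝ) (l : Fin k) : Set Ω :=
  {ω | X (pp n l) ω ∈ Icc t 1 ∧ ∀ u : ↥(TT n l), t ≤ X u.1 ω → X u.1 ω < X (pp n l) ω →
    ∃ v : ↥(TT n l), v.1.1 = u.1.1 ∧ (u.1.2 : ℕ) ≤ (v.1.2 : ℕ) ∧ X v.1 ω < X u.1 ω}

lemma success_eq_iUnion (t : ℝ) (X : Idx n → Ω → ℝ) :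
    SuccessSet t X = ⋃ l, AA t X l := by
  ext ω
  simp only [SuccessSet, AA, mem_setOf_eq, mem_iUnion]
  constructor
  · rintro ⟨l, hmem, hmin⟩
    refine ⟨l, hmem, ?_⟩
    rintro ⟨⟨c, i⟩, hu⟩ hti his
    -- u is in class c with index i, t ≤ X u < s where s = X (pp n l)
    by_cases hrec : ∃ j : Fin (n c + 1), X ⟨c, j⟩ ω < X ⟨c, i⟩ ω ∧ ¬ (j < i)
    · obtain ⟨j, hj1, hj2⟩ := hrec
      have hjT : (⟨c, j⟩ : Idx n) ∈ TT n l := by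
        rw [mem_TT]
        intro hEq
        obtain ⟨rfl, hv⟩ := idx_eq_pp_iff.mp hEq
        -- then X ⟨c,j⟩ = X (pp n c) = s, but X ⟨c,j⟩ < X ⟨c,i⟩ < s
        have : (⟨c, j⟩ : Idx n) = pp n c := idx_eq_pp_iff.mpr ⟨rfl, hv⟩
        rw [this] at hj1
        exact absurd (hj1.trans his) (lt_irrefl _)
      exact ⟨⟨⟨c, j⟩, hjT⟩, rfl, by simpa [Fin.lt_def] using Fin.not_lt.mp hj2, hj1⟩
    · push_neg at hrec
      have hIsRec : IsRecord X ω c i := hrec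
      have h2 : X ⟨l, Fin.last (n l)⟩ ω ≤ X ⟨c, i⟩ ω :=
        hmin c i hIsRec ⟨hti, le_trans his.le hmem.2⟩
      exact absurd (lt_of_le_of_lt h2 his) (lt_irrefl _)
  · rintro ⟨l, hmem, hno⟩
    refine ⟨l, hmem, ?_⟩
    intro l' j hrec hj
    by_contra hlt
    push_neg at hlt
    have htj : t ≤ X ⟨l', j⟩ ω := hj.1
    by_cases hup : (⟨l', j⟩ : Idx n) = pp n l
    · rw [hup] at hlt; exact absurd hlt (lt_irrefl _)
    · obtain ⟨⟨⟨c', i'⟩, hv⟩, hcl, hile, hvlt⟩ := hno ⟨⟨l', j⟩, mem_TT.mpr hup⟩ htj hlt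
      simp only at hcl
      subst hcl
      have h3 := hrec i' hvlt
      rw [Fin.lt_def] at h3
      dsimp only at hile h3
      omega
end AAdef

section L78
variable {k : ℕ} {n : Fin k → ℕ} {Ω : Type}

lemma unif_Bs {t s : ℝ} (h0t : 0 ≤ t) (hts : t ≤ s) (hs1 : s ≤ 1) (l : Fin k)
    (σ : Fin k → ℕ) (c : Fin k) (i : Fin (n c + 1)) :
    unif (Bs t s n l σ ⟨c, i⟩) =
      (if (σ c ≤ (i : ℕ) ∧ (i : ℕ) < mm n l c) then ENNReal.ofReal (1 - s) else 1) *
      (if ((i : ℕ) < mm n l c ∧ (i : ℕ) + 1 = σ c) then ENNReal.ofReal t else 1) := by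
  unfold Bs
  by_cases hp : (⟨c, i⟩ : Idx n) = pp n l
  · have hval : ¬ ((i : ℕ) < mm n l c) := fun hlt =>
      (mem_TT.mp (mem_TT_iff_val.mpr hlt)) hp
    rw [if_pos hp, if_neg (by tauto), if_neg (by tauto)]
    simp
  · have hval : (i : ℕ) < mm n l c := mem_TT_iff_val.mp (mem_TT.mpr hp)
    rw [if_neg hp]
    by_cases h1 : σ c ≤ (i : ℕ)
    · rw [if_pos h1, unif_Ici (le_trans h0t hts) hs1, if_pos ⟨h1, hval⟩,
        if_neg (by omega), mul_one]
    · rw [if_neg h1]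
      by_cases h2 : (i : ℕ) + 1 = σ c
      · rw [if_pos h2, unif_Iio h0t (le_trans hts hs1), if_neg (by tauto),
          if_pos ⟨hval, h2⟩, one_mul]
      · rw [if_neg h2, if_neg (by tauto), if_neg (by tauto)]
        simp

lemma prod_class {t s : ℝ} (h0t : 0 ≤ t) (hts : t ≤ s) (hs1 : s ≤ 1) (l : Fin k)
    (σ : Fin k → ℕ) (c : Fin k) (hσ : σ c ≤ mm n l c) :
    ∏ i : Fin (n c + 1), unif (Bs t s n l σ ⟨c, i⟩) =
      ENNReal.ofReal (1 - s) ^ (mm n l c - σ c) *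
        (if σ c = 0 then 1 else ENNReal.ofReal t) := by
  classical
  rw [Finset.prod_congr rfl (fun i _ => unif_Bs h0t hts hs1 l σ c i)]
  rw [Finset.prod_mul_distrib]
  congr 1
  · rw [← Finset.prod_filter, Finset.prod_const, card_filter_Ico mm_le]
  · rw [← Finset.prod_filter, Finset.prod_const]
    by_cases h0 : σ c = 0
    · rw [if_pos h0, h0, card_filter_empty, pow_zero]
    · rw [if_neg h0, card_filter_single (by omega) hσ mm_le, pow_one]

lemma sum_w {t s : ℝ} (h0t : 0 ≤ t) (hs1 : s ≤ 1) (m : ℕ) :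
    ∑ r ∈ Finset.range (m + 1),
        ENNReal.ofReal (1 - s) ^ (m - r) * (if r = 0 then 1 else ENNReal.ofReal t)
      = ENNReal.ofReal (phi t m s) := by
  rw [Finset.sum_range_succ']
  have hterm : ∀ r ∈ Finset.range m,
      ENNReal.ofReal (1 - s) ^ (m - (r + 1)) * (if r + 1 = 0 then 1 else ENNReal.ofReal t)
        = ENNReal.ofReal t * ENNReal.ofReal (1 - s) ^ (m - 1 - r) := by
    intro r _
    rw [if_neg (Nat.succ_ne_zero r), mul_comm]
    congr 2
    omega
  rw [Finset.sum_congr rfl hterm, ← Finset.mul_sum,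
    Finset.sum_range_reflect (fun u => ENNReal.ofReal (1 - s) ^ u) m]
  have h1s : (0:ℝ) ≤ 1 - s := by linarith
  rw [if_pos rfl, mul_one, Nat.sub_zero, phi,
    ENNReal.ofReal_add (pow_nonneg h1s m) (mul_nonneg h0t (Finset.sum_nonneg
      (fun u _ => pow_nonneg h1s u))),
    ENNReal.ofReal_pow h1s, ENNReal.ofReal_mul h0t,
    ENNReal.ofReal_sum_of_nonneg (fun u _ => pow_nonneg h1s u)]
  have : ∀ u ∈ Finset.range m, ENNReal.ofReal ((1-s)^u) = ENNReal.ofReal (1-s) ^ u :=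
    fun u _ => ENNReal.ofReal_pow h1s u
  rw [Finset.sum_congr rfl this, add_comm]

lemma sum_choices {t s : ℝ} (h0t : 0 ≤ t) (hts : t ≤ s) (hs1 : s ≤ 1) (l : Fin k) :
    ∑ σ ∈ choices n l, ∏ idx : Idx n, unif (Bs t s n l σ idx)
      = ∏ c, ENNReal.ofReal (phi t (mm n l c) s) := by
  classical
  have hre : ∀ σ ∈ choices n l, ∏ idx : Idx n, unif (Bs t s n l σ idx)
      = ∏ c, (ENNReal.ofReal (1 - s) ^ (mm n l c - σ c) *
          (if σ c = 0 then 1 else ENNReal.ofReal t)) := by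
    intro σ hσ
    rw [← Finset.univ_sigma_univ, Finset.prod_sigma]
    apply Finset.prod_congr rfl
    intro c _
    apply prod_class h0t hts hs1 l σ c
    rw [choices, Fintype.mem_piFinset] at hσ
    have := hσ c
    rw [Finset.mem_range] at this
    omega
  rw [Finset.sum_congr rfl hre, choices,
    ← Finset.prod_univ_sum (fun c => Finset.range (mm n l c + 1))
      (fun c r => ENNReal.ofReal (1 - s) ^ (mm n l c - r) *
        (if r = 0 then 1 else ENNReal.ofReal t))]
  apply Finset.prod_congr rfl
  intro c _
  exact sum_w h0t hs1 (mm n l c)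

variable [MeasurableSpace Ω] {μ : Measure Ω} [IsProbabilityMeasure μ]
  {X : Idx n → Ω → ℝ}

lemma piece_meas (hXm : ∀ idx, Measurable (X idx))
    (hXd : ∀ idx, μ.map (X idx) = volume.restrict (Icc (0 : ℝ) 1))
    (hXi : iIndepFun X μ)
    (t s : ℝ) (l : Fin k) (σ : Fin k → ℕ) :
    μ (piece t s X l σ) = ∏ idx : Idx n, unif (Bs t s n l σ idx) := by
  rw [piece, hXi.meas_iInter (fun idx => ⟨Bs t s n l σ idx, measurableSet_Bs idx, rfl⟩)]
  apply Finset.prod_congr rfl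
  intro idx _
  rw [← Measure.map_apply (hXm idx) (measurableSet_Bs idx), hXd idx]
  rfl

lemma ES_measure (hXm : ∀ idx, Measurable (X idx))
    (hXd : ∀ idx, μ.map (X idx) = volume.restrict (Icc (0 : ℝ) 1))
    (hXi : iIndepFun X μ)
    {t s : ℝ} (h0t : 0 ≤ t) (hts : t ≤ s) (hs1 : s ≤ 1) (l : Fin k) :
    μ (ES t s X l) = ∏ c, ENNReal.ofReal (phi t (mm n l c) s) := by
  rw [ES_eq_biUnion, measure_biUnion_finset (piece_disjoint hts X l)
    (fun σ _ => MeasurableSet.iInter (fun idx => (hXm idx) (measurableSet_Bs idx)))]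
  rw [Finset.sum_congr rfl (fun σ _ => piece_meas hXm hXd hXi t s l σ)]
  exact sum_choices h0t hts hs1 l

end L78

section L9
variable {k : ℕ} {n : Fin k → ℕ} {Ω : Type}

def DD (t s : ℝ) (n : Fin k → ℕ) (l : Fin k) : Set (↥(TT n l) → ℝ) :=
  {z | ∀ u : ↥(TT n l), t ≤ z u → z u < s → ∃ v : ↥(TT n l),
    v.1.1 = u.1.1 ∧ (u.1.2 : ℕ) ≤ (v.1.2 : ℕ) ∧ z v < z u}

def CC (t : ℝ) (n : Fin k → ℕ) (l : Fin k) : Set (ℝ × (↥(TT n l) → ℝ)) :=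
  {q | q.1 ∈ Icc t 1 ∧ ∀ u : ↥(TT n l), t ≤ q.2 u → q.2 u < q.1 → ∃ v : ↥(TT n l),
    v.1.1 = u.1.1 ∧ (u.1.2 : ℕ) ≤ (v.1.2 : ℕ) ∧ q.2 v < q.2 u}

def ZZ (X : Idx n → Ω → ℝ) (l : Fin k) : Ω → ↥(TT n l) → ℝ := fun ω u => X u.1 ω

lemma measurableSet_DD (t s : ℝ) (l : Fin k) : MeasurableSet (DD t s n l) := by
  have hD : DD t s n l = ⋂ u : ↥(TT n l),
      (({z : ↥(TT n l) → ℝ | t ≤ z u} ∩ {z | z u < s}) ∩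
        (⋃ v : ↥(TT n l), ⋃ (_ : v.1.1 = u.1.1 ∧ (u.1.2 : ℕ) ≤ (v.1.2 : ℕ)),
          {z : ↥(TT n l) → ℝ | z v < z u})ᶜ)ᶜ := by
    ext z
    simp only [DD, mem_setOf_eq, mem_iInter, mem_compl_iff, mem_inter_iff, mem_iUnion,
      not_and, not_not, exists_prop]
    constructor
    · intro h u hu
      obtain ⟨v, hv1, hv2, hv3⟩ := h u hu.1 hu.2
      exact ⟨v, ⟨hv1, hv2⟩, hv3⟩
    · intro h u h1 h2
      obtain ⟨v, ⟨hv1, hv2⟩, hv3⟩ := h u ⟨h1, h2⟩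
      exact ⟨v, hv1, hv2, hv3⟩
  rw [hD]
  apply MeasurableSet.iInter
  intro u
  apply MeasurableSet.compl
  apply MeasurableSet.inter
  · exact (measurableSet_le measurable_const (measurable_pi_apply u)).inter
      (measurableSet_lt (measurable_pi_apply u) measurable_const)
  · apply MeasurableSet.compl
    apply MeasurableSet.iUnion
    intro v
    apply MeasurableSet.iUnion
    intro _
    exact measurableSet_lt (measurable_pi_apply v) (measurable_pi_apply u)

lemma measurableSet_CC (t : ℝ) (l : Fin k) : MeasurableSet (CC t n l) := by
  have hC : CC t n l = ((fun q : ℝ × (↥(TT n l) → ℝ) => q.1) ⁻¹' Icc t 1) ∩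
      ⋂ u : ↥(TT n l),
      (({q : ℝ × (↥(TT n l) → ℝ) | t ≤ q.2 u} ∩ {q | q.2 u < q.1}) ∩
        (⋃ v : ↥(TT n l), ⋃ (_ : v.1.1 = u.1.1 ∧ (u.1.2 : ℕ) ≤ (v.1.2 : ℕ)),
          {q : ℝ × (↥(TT n l) → ℝ) | q.2 v < q.2 u})ᶜ)ᶜ := by
    ext q
    simp only [CC, mem_setOf_eq, mem_inter_iff, mem_preimage, mem_iInter, mem_compl_iff,
      mem_iUnion, not_and, not_not, exists_prop]
    constructor
    · rintro ⟨hq1, h⟩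
      refine ⟨hq1, fun u hu => ?_⟩
      obtain ⟨v, hv1, hv2, hv3⟩ := h u hu.1 hu.2
      exact ⟨v, ⟨hv1, hv2⟩, hv3⟩
    · rintro ⟨hq1, h⟩
      refine ⟨hq1, fun u h1 h2 => ?_⟩
      obtain ⟨v, ⟨hv1, hv2⟩, hv3⟩ := h u ⟨h1, h2⟩
      exact ⟨v, hv1, hv2, hv3⟩
  rw [hC]
  apply MeasurableSet.inter
  · exact measurable_fst measurableSet_Icc
  apply MeasurableSet.iInter
  intro u
  apply MeasurableSet.compl
  apply MeasurableSet.inter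
  · exact (measurableSet_le measurable_const
      (measurable_snd.eval)).inter
      (measurableSet_lt (measurable_snd.eval) measurable_fst)
  · apply MeasurableSet.compl
    apply MeasurableSet.iUnion
    intro v
    apply MeasurableSet.iUnion
    intro _
    exact measurableSet_lt (measurable_snd.eval) (measurable_snd.eval)

variable [MeasurableSpace Ω] {μ : Measure Ω} [IsProbabilityMeasure μ]
  {X : Idx n → Ω → ℝ}

lemma AA_eq_preimage (t : ℝ) (X : Idx n → Ω → ℝ) (l : Fin k) :
    AA t X l = (fun ω => (X (pp n l) ω, ZZ X l ω)) ⁻¹' CC t n l := rfl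

lemma measurable_AA (hXm : ∀ idx, Measurable (X idx)) (t : ℝ) (l : Fin k) :
    MeasurableSet (AA t X l) := by
  rw [AA_eq_preimage]
  exact ((hXm _).prodMk (measurable_pi_lambda _ (fun u => hXm u.1))) (measurableSet_CC t l)

lemma AA_measure (hXm : ∀ idx, Measurable (X idx))
    (hXd : ∀ idx, μ.map (X idx) = volume.restrict (Icc (0 : ℝ) 1))
    (hXi : iIndepFun X μ)
    {t : ℝ} (ht0 : 0 < t) (ht1 : t ≤ 1) (l : Fin k) :
    μ (AA t X l) = ∫⁻ s in Icc t 1, ENNReal.ofReal (∏ c, phi t (mm n l c) s) := by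
  classical
  have hZm : Measurable (ZZ X l) := measurable_pi_lambda _ (fun u => hXm u.1)
  have hYm : Measurable (X (pp n l)) := hXm _
  have hdisj : Disjoint ({pp n l} : Finset (Idx n)) (TT n l) := by
    rw [Finset.disjoint_left]
    intro a ha
    rw [Finset.mem_singleton] at ha
    subst ha
    rw [mem_TT]
    simp
  have hind0 := hXi.indepFun_finset {pp n l} (TT n l) hdisj hXm
  have hind : IndepFun (X (pp n l)) (ZZ X l) μ := by
    have h2 := hind0.comp (φ := fun g : (↥({pp n l} : Finset (Idx n)) → ℝ) =>
      g ⟨pp n l, Finset.mem_singleton_self _⟩) (ψ := id) (_mγ := Real.measurableSpace) (measurable_pi_apply _) measurable_id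
    exact h2
  have hmap : μ.map (fun ω => (X (pp n l) ω, ZZ X l ω))
      = (μ.map (X (pp n l))).prod (μ.map (ZZ X l)) :=
    (indepFun_iff_map_prod_eq_prod_map_map hYm.aemeasurable hZm.aemeasurable).mp hind
  haveI : IsProbabilityMeasure (μ.map (ZZ X l)) := Measure.isProbabilityMeasure_map hZm.aemeasurable
  rw [AA_eq_preimage, ← Measure.map_apply (hYm.prodMk hZm) (measurableSet_CC t l), hmap,
    hXd _, show volume.restrict (Icc (0:ℝ) 1) = unif from rfl,
    Measure.prod_apply (measurableSet_CC t l)]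
  have hsec : ∀ s ∈ Icc (0:ℝ) 1, (μ.map (ZZ X l)) (Prod.mk s ⁻¹' CC t n l)
      = (Icc t 1).indicator (fun s => ENNReal.ofReal (∏ c, phi t (mm n l c) s)) s := by
    intro s _
    by_cases hsI : s ∈ Icc t 1
    · rw [indicator_of_mem hsI]
      have hsect : Prod.mk s ⁻¹' CC t n l = DD t s n l := by
        ext z
        simp only [CC, DD, mem_preimage, mem_setOf_eq, hsI, true_and]
      rw [hsect, Measure.map_apply hZm (measurableSet_DD t s l),
        show ZZ X l ⁻¹' DD t s n l = ES t s X l from rfl,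
        ES_measure hXm hXd hXi ht0.le hsI.1 hsI.2 l]
      rw [← ENNReal.ofReal_prod_of_nonneg]
      intro c _
      have := phi_lb ht0 hsI.1 hsI.2 (mm n l c)
      have h0 : 0 ≤ t / s := div_nonneg ht0.le (le_trans ht0.le hsI.1)
      linarith
    · rw [indicator_of_notMem hsI]
      have hsect : Prod.mk s ⁻¹' CC t n l = ∅ := by
        ext z
        simp only [CC, mem_preimage, mem_setOf_eq, mem_empty_iff_false, iff_false, not_and]
        intro h1
        exact absurd h1 hsI
      rw [hsect]
      simp
  rw [show (∫⁻ s, (μ.map (ZZ X l)) (Prod.mk s ⁻¹' CC t n l) ∂unif)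
      = ∫⁻ s in Icc (0:ℝ) 1, (μ.map (ZZ X l)) (Prod.mk s ⁻¹' CC t n l) ∂volume from rfl,
    setLIntegral_congr_fun measurableSet_Icc hsec,
    lintegral_indicator measurableSet_Icc, Measure.restrict_restrict measurableSet_Icc,
    inter_eq_left.mpr (Icc_subset_Icc ht0.le le_rfl)]

lemma AA_inter_subset (t : ℝ) (X : Idx n → Ω → ℝ) {l l' : Fin k} (h : l ≠ l') :
    AA t X l ∩ AA t X l' ⊆ {ω | X (pp n l) ω = X (pp n l') ω} := by
  rintro ω ⟨⟨h1mem, h1no⟩, ⟨h2mem, h2no⟩⟩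
  have key : ∀ a b : Fin k, a ≠ b → X (pp n a) ω ∈ Icc t 1 →
      (∀ u : ↥(TT n b), t ≤ X u.1 ω → X u.1 ω < X (pp n b) ω → ∃ v : ↥(TT n b),
        v.1.1 = u.1.1 ∧ (u.1.2 : ℕ) ≤ (v.1.2 : ℕ) ∧ X v.1 ω < X u.1 ω) →
      X (pp n b) ω ≤ X (pp n a) ω := by
    intro a b hab hmem hno
    have hmemT : pp n a ∈ TT n b := by
      rw [mem_TT]
      intro hEq
      exact hab (congrArg Sigma.fst hEq)
    by_contra hlt
    push_neg at hlt
    obtain ⟨⟨⟨c, j⟩, hv⟩, hc1, hc2, hc3⟩ := hno ⟨pp n a, hmemT⟩ hmem.1 hlt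
    dsimp only at hc1 hc2 hc3
    subst hc1
    have hj : (⟨c, j⟩ : Idx n) = pp n c := by
      rw [idx_eq_pp_iff]
      refine ⟨rfl, ?_⟩
      have := j.isLt
      simp only [Fin.val_last] at hc2
      omega
    rw [hj] at hc3
    exact absurd hc3 (lt_irrefl _)
  exact le_antisymm (key l' l (Ne.symm h) h2mem h1no) (key l l' h h1mem h2no)

lemma success_measure (hXm : ∀ idx, Measurable (X idx))
    (hXd : ∀ idx, μ.map (X idx) = volume.restrict (Icc (0 : ℝ) 1))
    (hXi : iIndepFun X μ)
    {t : ℝ} (ht0 : 0 < t) (ht1 : t ≤ 1) :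
    μ (SuccessSet t X) = ∫⁻ s in Icc t 1,
      ENNReal.ofReal (∑ l, ∏ c, phi t (mm n l c) s) := by
  classical
  rw [success_eq_iUnion, measure_iUnion₀ ?hdisj ?hnull]
  case hdisj =>
    intro l l' hne
    have hppne : pp n l ≠ pp n l' := fun hEq => hne (congrArg Sigma.fst hEq)
    exact measure_mono_null (AA_inter_subset t X hne) (tie_null hXm hXd hXi hppne)
  case hnull =>
    exact fun l => (measurable_AA hXm t l).nullMeasurableSet
  rw [tsum_fintype]
  rw [Finset.sum_congr rfl (fun l _ => AA_measure hXm hXd hXi ht0 ht1 l)]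
  rw [← lintegral_finset_sum']
  · apply setLIntegral_congr_fun measurableSet_Icc
    intro s hs
    dsimp only
    rw [← ENNReal.ofReal_sum_of_nonneg]
    intro l _
    apply Finset.prod_nonneg
    intro c _
    have := phi_lb ht0 hs.1 hs.2 (mm n l c)
    have h0 : 0 ≤ t / s := div_nonneg ht0.le (le_trans ht0.le hs.1)
    linarith
  · intro l _
    exact ((continuous_finset_prod Finset.univ
      (fun c _ => continuous_phi t (mm n l c))).measurable.ennreal_ofReal).aemeasurable

end L9

end SP

/-- **Theorem (sharpness of the bound `t_k`).**  With `k ≥ 2` classes and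
`t_k = k^(-1/(k-1))`, the success probability of the strategy `σ_{t_k}`, seen as a
function of the class sizes, converges to `t_k` as the minimum of the class sizes tends
to infinity: for every `ε > 0` there is an `N` such that for any model (probability
space carrying independent uniform-`[0,1]` arrival times) whose class sizes `n l + 1`
all exceed `N`, the success probability is within `ε` of `t_k`.  In particular it is at
least `t_k`, so that bound is sharp. -/
theorem success_prob_tendsto_tk
    (k : ℕ) (hk : 2 ≤ k) :
    ∀ ε : ℝ, 0 < ε → ∃ N : ℕ, ∀ (n : Fin k → ℕ), (∀ l, N ≤ n l) →
      ∀ (Ω : Type) (_ : MeasurableSpace Ω) (μ : Measure Ω) (_ : IsProbabilityMeasure μ)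
        (X : (Σ l : Fin k, Fin (n l + 1)) → Ω → ℝ),
        (∀ idx, Measurable (X idx)) →
        (∀ idx, μ.map (X idx) = volume.restrict (Icc (0 : ℝ) 1)) →
        iIndepFun X μ →
        (k : ℝ) ^ (-(1 : ℝ) / ((k : ℝ) - 1)) ≤
            (μ (SuccessSet ((k : ℝ) ^ (-(1 : ℝ) / ((k : ℝ) - 1))) X)).toReal ∧
          |(μ (SuccessSet ((k : ℝ) ^ (-(1 : ℝ) / ((k : ℝ) - 1))) X)).toReal -
              (k : ℝ) ^ (-(1 : ℝ) / ((k : ℝ) - 1))| < ε := by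
  classical
  obtain ⟨ht0, ht1, htk⟩ := SP.tk_facts k hk
  set t : ℝ := (k : ℝ) ^ (-(1 : ℝ) / ((k : ℝ) - 1)) with htdef
  intro ε hε
  have hkR : (2:ℝ) ≤ (k:ℝ) := by exact_mod_cast hk
  have hK2 : (0:ℝ) < (k:ℝ)^2 + 1 := by positivity
  obtain ⟨N, hN⟩ := exists_pow_lt_of_lt_one (div_pos hε hK2) (by linarith : 1 - t < 1)
  refine ⟨N, ?_⟩
  intro n hn Ω mΩ μ hμprob X hXm hXd hXi
  -- the error term
  set err : ℝ := (k:ℝ) * ((k:ℝ) * (1 - t)^N) * (1 - t) with herrdef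
  have h1t0 : (0:ℝ) ≤ 1 - t := by linarith
  have herr0 : 0 ≤ err := by positivity
  have herrlt : err < ε := by
    have h1 : (1 - t)^N * (1 - t) ≤ (1 - t)^N := mul_le_of_le_one_right (by positivity) (by linarith)
    have h2 : (k:ℝ) * ((k:ℝ) * (1 - t)^N) * (1 - t) = (k:ℝ)^2 * ((1-t)^N * (1-t)) := by ring
    have h3 : (k:ℝ)^2 * ((1-t)^N * (1-t)) ≤ (k:ℝ)^2 * (1-t)^N :=
      mul_le_mul_of_nonneg_left h1 (by positivity)
    have h4 : (k:ℝ)^2 * (1-t)^N < (k:ℝ)^2 * (ε / ((k:ℝ)^2 + 1)) :=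
      mul_lt_mul_of_pos_left hN (by positivity)
    have h5 : (k:ℝ)^2 * (ε / ((k:ℝ)^2 + 1)) < ε := by
      rw [mul_div_assoc']
      rw [div_lt_iff₀ hK2]
      nlinarith
    rw [herrdef, h2]
    linarith
  -- the success probability formula
  have hform := SP.success_measure (n := n) (μ := μ) (X := X) hXm hXd hXi ht0 ht1.le
  set g : ℝ → ℝ := fun s => ∑ l, ∏ c, SP.phi t (SP.mm n l c) s with hgdef
  have hg_cont : Continuous g :=
    continuous_finset_sum _ (fun l _ => continuous_finset_prod _
      (fun c _ => SP.continuous_phi t (SP.mm n l c)))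
  have hg_int : IntegrableOn g (Icc t 1) volume :=
    ContinuousOn.integrableOn_compact isCompact_Icc hg_cont.continuousOn
  have hg_nonneg : ∀ s ∈ Icc t 1, 0 ≤ g s := by
    intro s hs
    apply Finset.sum_nonneg
    intro l _
    apply Finset.prod_nonneg
    intro c _
    have := SP.phi_lb ht0 hs.1 hs.2 (SP.mm n l c)
    have h0 : 0 ≤ t / s := div_nonneg ht0.le (le_trans ht0.le hs.1)
    linarith
  have htoReal : (μ (SuccessSet t X)).toReal = ∫ s in Icc t 1, g s := by
    rw [hform, ← integral_eq_lintegral_of_nonneg_ae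
      (ae_restrict_of_forall_mem measurableSet_Icc hg_nonneg)
      hg_cont.aestronglyMeasurable.restrict]
  -- pointwise bounds
  have hcard : (Finset.univ : Finset (Fin k)).card = k := by simp
  have hlow : ∀ s ∈ Icc t 1, (k:ℝ) * (t/s)^k ≤ g s := by
    intro s hs
    have hone : ∀ l : Fin k, (t/s)^k ≤ ∏ c, SP.phi t (SP.mm n l c) s := by
      intro l
      have := Finset.prod_le_prod (s := Finset.univ)
        (f := fun _ : Fin k => t/s) (g := fun c => SP.phi t (SP.mm n l c) s)
        (fun c _ => div_nonneg ht0.le (le_trans ht0.le hs.1))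
        (fun c _ => SP.phi_lb ht0 hs.1 hs.2 (SP.mm n l c))
      rwa [Finset.prod_const, hcard] at this
    calc (k:ℝ) * (t/s)^k = ∑ _l : Fin k, (t/s)^k := by
          rw [Finset.sum_const, hcard, nsmul_eq_mul]
      _ ≤ g s := Finset.sum_le_sum (fun l _ => hone l)
  have hup : ∀ s ∈ Icc t 1, g s ≤ (k:ℝ) * (t/s)^k + (k:ℝ) * ((k:ℝ) * (1-t)^N) := by
    intro s hs
    have hA0 : 0 ≤ t/s := div_nonneg ht0.le (le_trans ht0.le hs.1)
    have hA1 : t/s ≤ 1 := (div_le_one (lt_of_lt_of_le ht0 hs.1)).2 hs.1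
    have he0 : (0:ℝ) ≤ (1-t)^N := by positivity
    have hone : ∀ l : Fin k, ∏ c, SP.phi t (SP.mm n l c) s ≤ (t/s)^k + (k:ℝ) * (1-t)^N := by
      intro l
      have hNle : ∀ c : Fin k, N ≤ SP.mm n l c := by
        intro c
        have := hn c
        unfold SP.mm
        split <;> omega
      have := SP.prod_le_pow_add (Finset.univ : Finset (Fin k)) hA0 hA1 he0
        (f := fun c => SP.phi t (SP.mm n l c) s)
        (fun c _ => by
          have := SP.phi_lb ht0 hs.1 hs.2 (SP.mm n l c); linarith)
        (fun c _ => SP.phi_ub_one ht0 hs.1 hs.2 (SP.mm n l c))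
        (fun c _ => SP.phi_ub ht0 hs.1 hs.2 (hNle c) ht1.le)
      rwa [hcard] at this
    calc g s ≤ ∑ _l : Fin k, ((t/s)^k + (k:ℝ) * (1-t)^N) :=
          Finset.sum_le_sum (fun l _ => hone l)
      _ = (k:ℝ) * (t/s)^k + (k:ℝ) * ((k:ℝ) * (1-t)^N) := by
          rw [Finset.sum_const, hcard, nsmul_eq_mul]; ring
  -- integral bounds
  have hmain : ∫ s in Icc t 1, ((k:ℝ) * (t/s)^k) = t := SP.integral_main k hk ht0 ht1 htk
  have hflow_int : IntegrableOn (fun s => (k:ℝ) * (t/s)^k) (Icc t 1) volume := by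
    have h0 := SP.integrable_flow k ht0 0
    simpa using h0
  have hfup_int : IntegrableOn (fun s => (k:ℝ) * (t/s)^k + (k:ℝ) * ((k:ℝ) * (1-t)^N))
      (Icc t 1) volume := SP.integrable_flow k ht0 _
  have hlowI : t ≤ ∫ s in Icc t 1, g s := by
    calc t = ∫ s in Icc t 1, ((k:ℝ) * (t/s)^k) := hmain.symm
      _ ≤ ∫ s in Icc t 1, g s :=
        setIntegral_mono_on hflow_int hg_int measurableSet_Icc hlow
  have hupI : (∫ s in Icc t 1, g s) ≤ t + err := by
    have h1 : (∫ s in Icc t 1, g s) ≤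
        ∫ s in Icc t 1, ((k:ℝ) * (t/s)^k + (k:ℝ) * ((k:ℝ) * (1-t)^N)) :=
      setIntegral_mono_on hg_int hfup_int measurableSet_Icc hup
    have h2 : (∫ s in Icc t 1, ((k:ℝ) * (t/s)^k + (k:ℝ) * ((k:ℝ) * (1-t)^N)))
        = t + err := by
      rw [integral_add hflow_int (integrableOn_const (by
        rw [Real.volume_Icc]; exact ENNReal.ofReal_ne_top))]
      rw [hmain, SP.integral_const_Icc ht1.le]
    linarith [h2 ▸ h1]
  constructor
  · rw [htoReal]; exact hlowI
  · rw [htoReal, abs_lt]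
    constructor
    · linarith
    · linarith
end

section
/- Let n ≥ 0 and let X_1, …, X_n be independent random variables uniformly distributed on [0,1], interpreted as the arrival times of n uniquely ranked options (option i is better than option j iff i > j). For all 0 < t ≤ s ≤ 1, the probability that no record arrives in the interval [t,s) — i.e., the probability of the event that for every i with t ≤ X_i < s there exists j > i with X_j < X_i — is at least t/s. -/
open MeasureTheory ProbabilityTheory Set

/-- The event that no record (relative maximum) of the stream `X` arrives in the
interval `[t, s)`: every option `i` arriving in `[t, s)` is beaten by a better option
`j > i` that arrived strictly earlier. -/
def NoRecordIn {n : ℕ} {Ω : Type*} (X : Fin n → Ω → ℝ) (t s : ℝ) : Set Ω :=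
  {ω | ∀ i : Fin n, t ≤ X i ω → X i ω < s → ∃ j : Fin n, i < j ∧ X j ω < X i ω}

/-- **Lemma.**  If `n ≥ 0` uniquely ranked options (option `i` is better than option
`j` iff `i > j`) arrive at independent uniform-`[0,1]` times, then for all
`0 < t ≤ s ≤ 1` the probability that no record arrives in `[t, s)` is at least
`t / s`. -/
theorem prob_no_record_ge
    {Ω : Type*} [MeasurableSpace Ω] (μ : Measure Ω) [IsProbabilityMeasure μ]
    (n : ℕ) (X : Fin n → Ω → ℝ)
    (hmeas : ∀ i, Measurable (X i))
    (hunif : ∀ i, μ.map (X i) = volume.restrict (Icc (0 : ℝ) 1))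
    (hindep : iIndepFun X μ)
    (t s : ℝ) (ht : 0 < t) (hts : t ≤ s) (hs : s ≤ 1) :
    ENNReal.ofReal (t / s) ≤ μ (NoRecordIn X t s) := by
  classical
  have hs0 : 0 < s := ht.trans_le hts
  set r : ℝ := 1 - s with hrdef
  have hr0 : 0 ≤ r := by simp only [hrdef]; linarith
  -- marginal probabilities
  have hIio : ∀ j : Fin n, μ (X j ⁻¹' Iio t) = ENNReal.ofReal t := by
    intro j
    rw [← Measure.map_apply (hmeas j) measurableSet_Iio, hunif j,
      Measure.restrict_apply measurableSet_Iio]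
    have hset : Iio t ∩ Icc (0 : ℝ) 1 = Ico 0 t := by
      ext x
      simp only [mem_inter_iff, mem_Iio, mem_Icc, mem_Ico]
      constructor
      · rintro ⟨h1, h2, _⟩; exact ⟨h2, h1⟩
      · rintro ⟨h1, h2⟩; exact ⟨h2, h1, h2.le.trans (hts.trans hs)⟩
    rw [hset, Real.volume_Ico]
    simp
  have hIci : ∀ j : Fin n, μ (X j ⁻¹' Ici s) = ENNReal.ofReal r := by
    intro j
    rw [← Measure.map_apply (hmeas j) measurableSet_Ici, hunif j,
      Measure.restrict_apply measurableSet_Ici]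
    have hset : Ici s ∩ Icc (0 : ℝ) 1 = Icc s 1 := by
      ext x
      simp only [mem_inter_iff, mem_Ici, mem_Icc]
      constructor
      · rintro ⟨h1, _, h3⟩; exact ⟨h1, h3⟩
      · rintro ⟨h1, h2⟩; exact ⟨h1, hs0.le.trans h1, h2⟩
    rw [hset, Real.volume_Icc]
  -- the events
  set g : Fin n → Fin n → Set Ω :=
    fun i j => X j ⁻¹' (if j = i then Iio t else Ici s) with hg
  set A : Fin n → Set Ω :=
    fun i => X i ⁻¹' Iio t ∩ ⋂ j ∈ Finset.Ioi i, X j ⁻¹' Ici s with hA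
  set B : Set Ω := ⋂ j, X j ⁻¹' Ici s with hB
  have hAmem : ∀ i ω, ω ∈ A i ↔ X i ω < t ∧ ∀ j, i < j → s ≤ X j ω := by
    intro i ω
    simp [hA, Set.mem_iInter, Finset.mem_Ioi]
  have hBmem : ∀ ω, ω ∈ B ↔ ∀ j, s ≤ X j ω := by
    intro ω; simp [hB, Set.mem_iInter]
  -- A i as a big intersection for independence
  have hAeq : ∀ i, A i = ⋂ j ∈ insert i (Finset.Ioi i), g i j := by
    intro i
    rw [Finset.set_biInter_insert]
    have h1 : g i i = X i ⁻¹' Iio t := by simp [hg]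
    have h2 : (⋂ j ∈ Finset.Ioi i, g i j) = ⋂ j ∈ Finset.Ioi i, X j ⁻¹' Ici s := by
      refine Set.iInter₂_congr fun j hj => ?_
      have : j ≠ i := (Finset.mem_Ioi.mp hj).ne'
      simp [hg, this]
    rw [h1, h2, hA]
  -- measurability of sets in the comap σ-algebras
  have hcomap : ∀ (i j : Fin n),
      MeasurableSet[MeasurableSpace.comap (X j) inferInstance] (g i j) := by
    intro i j
    refine ⟨if j = i then Iio t else Ici s, ?_, rfl⟩
    split <;> [exact measurableSet_Iio; exact measurableSet_Ici]
  -- measure of A i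
  have hAval : ∀ i : Fin n,
      μ (A i) = ENNReal.ofReal t * ENNReal.ofReal r ^ (n - 1 - (i : ℕ)) := by
    intro i
    rw [hAeq i, hindep.meas_biInter (fun j _ => hcomap i j)]
    rw [Finset.prod_insert (by simp)]
    have h1 : μ (g i i) = ENNReal.ofReal t := by
      have : g i i = X i ⁻¹' Iio t := by simp [hg]
      rw [this]; exact hIio i
    have h2 : ∀ j ∈ Finset.Ioi i, μ (g i j) = ENNReal.ofReal r := by
      intro j hj
      have : j ≠ i := (Finset.mem_Ioi.mp hj).ne'
      have hgj : g i j = X j ⁻¹' Ici s := by simp [hg, this]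
      rw [hgj]; exact hIci j
    rw [h1, Finset.prod_congr rfl h2, Finset.prod_const, Fin.card_Ioi]
  -- measure of B
  have hBval : μ B = ENNReal.ofReal r ^ n := by
    have := hindep.meas_iInter (s := fun j => X j ⁻¹' Ici s)
      (fun j => ⟨Ici s, measurableSet_Ici, rfl⟩)
    rw [hB, this]
    simp [hIci]
  -- measurability of the events
  have hmeasA : ∀ i, MeasurableSet (A i) := by
    intro i
    exact ((hmeas i) measurableSet_Iio).inter
      (MeasurableSet.biInter (Finset.countable_toSet _)
        (fun j _ => (hmeas j) measurableSet_Ici))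
  -- pairwise disjointness
  have hdisjlt : ∀ i k : Fin n, i < k → Disjoint (A i) (A k) := by
    intro i k hik
    rw [Set.disjoint_left]
    intro ω hωi hωk
    have h1 : s ≤ X k ω := ((hAmem i ω).mp hωi).2 k hik
    have h2 : X k ω < t := ((hAmem k ω).mp hωk).1
    linarith
  have hdisjA : Pairwise (Function.onFun Disjoint A) := by
    intro i k hik
    rcases lt_or_gt_of_ne hik with h | h
    · exact hdisjlt i k h
    · exact (hdisjlt k i h).symm
  have hdisjB : Disjoint B (⋃ i, A i) := by
    rw [Set.disjoint_left]
    intro ω hωB hωA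
    obtain ⟨i, hωi⟩ := Set.mem_iUnion.mp hωA
    have h1 : s ≤ X i ω := (hBmem ω).mp hωB i
    have h2 : X i ω < t := ((hAmem i ω).mp hωi).1
    linarith
  -- the union is contained in NoRecordIn
  have hsub : B ∪ ⋃ i, A i ⊆ NoRecordIn X t s := by
    rintro ω (hω | hω)
    · intro i hti his
      exact absurd ((hBmem ω).mp hω i) (by linarith)
    · obtain ⟨i0, hωi⟩ := Set.mem_iUnion.mp hω
      obtain ⟨hlt, hge⟩ := (hAmem i0 ω).mp hωi
      intro i hti his
      have hii0 : i < i0 := by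
        rcases lt_trichotomy i i0 with h | h | h
        · exact h
        · exfalso; rw [h] at hti; linarith
        · exact absurd (hge i h) (by linarith)
      exact ⟨i0, hii0, by linarith⟩
  -- measure of the union
  have hunion : μ (B ∪ ⋃ i, A i)
      = ENNReal.ofReal r ^ n
        + ∑ i : Fin n, ENNReal.ofReal t * ENNReal.ofReal r ^ (n - 1 - (i : ℕ)) := by
    rw [measure_union hdisjB (MeasurableSet.iUnion hmeasA),
      measure_iUnion hdisjA hmeasA, hBval, tsum_fintype]
    congr 1
    exact Finset.sum_congr rfl fun i _ => hAval i
  -- the key real inequality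
  have hreal : t / s ≤ r ^ n + ∑ i : Fin n, t * r ^ (n - 1 - (i : ℕ)) := by
    have hsum : ∑ i : Fin n, t * r ^ (n - 1 - (i : ℕ))
        = t * ∑ k ∈ Finset.range n, r ^ k := by
      rw [Fin.sum_univ_eq_sum_range (fun k => t * r ^ (n - 1 - k)) n,
        Finset.sum_range_reflect (fun k => t * r ^ k) n, Finset.mul_sum]
    rw [hsum]
    have hgeom : (∑ k ∈ Finset.range n, r ^ k) * (r - 1) = r ^ n - 1 := geom_sum_mul r n
    have hrn : 0 ≤ r ^ n := pow_nonneg hr0 n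
    have hGs : (∑ k ∈ Finset.range n, r ^ k) * s = 1 - r ^ n := by
      have : r - 1 = -s := by rw [hrdef]; ring
      rw [this] at hgeom; linarith
    have h1 : t * ((∑ k ∈ Finset.range n, r ^ k) * s) = t * (1 - r ^ n) := by rw [hGs]
    rw [div_le_iff₀ hs0]
    nlinarith [mul_nonneg (sub_nonneg.mpr hts) hrn, h1]
  -- put everything together
  calc ENNReal.ofReal (t / s)
      ≤ ENNReal.ofReal (r ^ n + ∑ i : Fin n, t * r ^ (n - 1 - (i : ℕ))) :=
        ENNReal.ofReal_le_ofReal hreal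
    _ = ENNReal.ofReal r ^ n
        + ∑ i : Fin n, ENNReal.ofReal t * ENNReal.ofReal r ^ (n - 1 - (i : ℕ)) := by
        rw [ENNReal.ofReal_add (pow_nonneg hr0 n)
          (Finset.sum_nonneg fun i _ => mul_nonneg ht.le (pow_nonneg hr0 _)),
          ENNReal.ofReal_sum_of_nonneg (fun i _ => mul_nonneg ht.le (pow_nonneg hr0 _)),
          ENNReal.ofReal_pow hr0]
        congr 1
        exact Finset.sum_congr rfl fun i _ => by
          rw [ENNReal.ofReal_mul ht.le, ENNReal.ofReal_pow hr0]
    _ = μ (B ∪ ⋃ i, A i) := hunion.symm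
    _ ≤ μ (NoRecordIn X t s) := measure_mono hsub
end

section
/- Consider k ≥ 1 independent classes of options, where class l contains n_l ≥ 0 uniquely ranked options with independent Uniform[0,1] arrival times, all arrival times across all classes being independent. For all 0 < t ≤ s ≤ 1, the probability that no record of any class arrives in the interval [t,s) is at least (t/s)^k. -/
open MeasureTheory ProbabilityTheory Set

/-- The event that no record of any of the `k` classes arrives in the interval
`[t, s)`. -/
def NoRecordAnyClassIn {k : ℕ} {n : Fin k → ℕ} {Ω : Type*}
    (X : (Σ l : Fin k, Fin (n l)) → Ω → ℝ) (t s : ℝ) : Set Ω :=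
  {ω | ∀ (l : Fin k) (i : Fin (n l)),
    IsRecord X ω l i → ¬(t ≤ X ⟨l, i⟩ ω ∧ X ⟨l, i⟩ ω < s)}

namespace NoRecordAux

/-- The coordinate constraint set: for choice `none`, every option arrives at or
after `s`; for choice `some i0`, option `i0` arrives before `t` and all better
options arrive at or after `s`. -/
def A (t s : ℝ) {m : ℕ} (o : Option (Fin m)) (i : Fin m) : Set ℝ :=
  match o with
  | none => Ici s
  | some i0 => if i = i0 then Iio t else if i0 < i then Ici s else univ

lemma measurableSet_A (t s : ℝ) {m : ℕ} (o : Option (Fin m)) (i : Fin m) :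
    MeasurableSet (A t s o i) := by
  cases o with
  | none => exact measurableSet_Ici
  | some i0 =>
    simp only [A]
    split_ifs <;>
      first
        | exact measurableSet_Iio
        | exact measurableSet_Ici
        | exact MeasurableSet.univ

lemma disjoint_A {t s : ℝ} (hts : t ≤ s) {m : ℕ} {o o' : Option (Fin m)} (h : o ≠ o') :
    ∃ i, Disjoint (A t s o i) (A t s o' i) := by
  have hIci_Iio : ∀ i : Fin m, Disjoint (Ici s) (Iio t) := by
    intro _
    rw [Set.disjoint_left]
    intro x hx hx'
    exact absurd (lt_of_lt_of_le hx' hts) (not_lt.mpr hx)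
  cases o with
  | none =>
    cases o' with
    | none => exact absurd rfl h
    | some i0 =>
      refine ⟨i0, ?_⟩
      simp only [A, if_pos rfl]
      exact hIci_Iio i0
  | some i0 =>
    cases o' with
    | none =>
      refine ⟨i0, ?_⟩
      simp only [A, if_pos rfl]
      exact (hIci_Iio i0).symm
    | some i1 =>
      have hne : i0 ≠ i1 := by
        intro hh; exact h (by rw [hh])
      rcases lt_or_gt_of_ne hne with hlt | hgt
      · refine ⟨i1, ?_⟩
        simp only [A, if_neg hlt.ne', if_pos hlt, if_pos rfl]
        exact hIci_Iio i1
      · refine ⟨i0, ?_⟩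
        simp only [A, if_pos rfl, if_neg hgt.ne', if_pos hgt]
        exact (hIci_Iio i0).symm

lemma key_real {t s : ℝ} (ht : 0 < t) (hts : t ≤ s) (hs : s ≤ 1) (m : ℕ) :
    t / s ≤ (1 - s) ^ m + t * ∑ j ∈ Finset.range m, (1 - s) ^ j := by
  have hs0 : 0 < s := lt_of_lt_of_le ht hts
  have h1s : (0 : ℝ) ≤ 1 - s := by linarith
  have hne : (1 : ℝ) - s ≠ 1 := by
    intro hh; nlinarith
  have hgeom : ∑ j ∈ Finset.range m, (1 - s) ^ j = (1 - (1 - s) ^ m) / s := by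
    rw [eq_div_iff hs0.ne']
    linear_combination -geom_sum_mul (1 - s) m
  rw [hgeom]
  have hp : (0 : ℝ) ≤ (1 - s) ^ m := pow_nonneg h1s m
  rw [div_le_iff₀ hs0]
  have h2 : ((1 - s) ^ m + t * ((1 - (1 - s) ^ m) / s)) * s
      = t + (1 - s) ^ m * (s - t) := by
    field_simp
    ring
  rw [h2]
  nlinarith

/-- Measure of the constraint sets under the uniform distribution on `[0,1]`. -/
lemma measure_A {t s : ℝ} (ht : 0 < t) (hts : t ≤ s) (hs : s ≤ 1) :
    ((volume.restrict (Icc (0 : ℝ) 1)) (Ici s) = ENNReal.ofReal (1 - s)) ∧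
    ((volume.restrict (Icc (0 : ℝ) 1)) (Iio t) = ENNReal.ofReal t) ∧
    ((volume.restrict (Icc (0 : ℝ) 1)) (univ : Set ℝ) = 1) := by
  have hs0 : 0 < s := lt_of_lt_of_le ht hts
  have hIci : (volume.restrict (Icc (0 : ℝ) 1)) (Ici s) = ENNReal.ofReal (1 - s) := by
    rw [Measure.restrict_apply measurableSet_Ici]
    have : Ici s ∩ Icc (0 : ℝ) 1 = Icc s 1 := by
      ext x
      simp only [mem_inter_iff, mem_Ici, mem_Icc]
      constructor
      · rintro ⟨h1, _, h3⟩; exact ⟨h1, h3⟩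
      · rintro ⟨h1, h2⟩; exact ⟨h1, le_trans hs0.le h1, h2⟩
    rw [this, Real.volume_Icc]
  have hIio : (volume.restrict (Icc (0 : ℝ) 1)) (Iio t) = ENNReal.ofReal t := by
    rw [Measure.restrict_apply measurableSet_Iio]
    have : Iio t ∩ Icc (0 : ℝ) 1 = Ico 0 t := by
      ext x
      simp only [mem_inter_iff, mem_Iio, mem_Icc, mem_Ico]
      constructor
      · rintro ⟨h1, h2, _⟩; exact ⟨h2, h1⟩
      · rintro ⟨h1, h2⟩; exact ⟨h2, h1, le_trans h2.le (le_trans hts hs)⟩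
    rw [this, Real.volume_Ico, sub_zero]
  have huniv : (volume.restrict (Icc (0 : ℝ) 1)) univ = 1 := by
    rw [Measure.restrict_apply MeasurableSet.univ, univ_inter, Real.volume_Icc]
    norm_num
  exact ⟨hIci, hIio, huniv⟩

lemma measure_A_none {t s : ℝ} (ht : 0 < t) (hts : t ≤ s) (hs : s ≤ 1) {m : ℕ}
    (i : Fin m) :
    (volume.restrict (Icc (0 : ℝ) 1)) (A t s none i) = ENNReal.ofReal (1 - s) :=
  (measure_A ht hts hs).1

lemma measure_A_some {t s : ℝ} (ht : 0 < t) (hts : t ≤ s) (hs : s ≤ 1) {m : ℕ}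
    (i0 i : Fin m) :
    (volume.restrict (Icc (0 : ℝ) 1)) (A t s (some i0) i)
      = if i = i0 then ENNReal.ofReal t
          else if i0 < i then ENNReal.ofReal (1 - s) else 1 := by
  show (volume.restrict (Icc (0 : ℝ) 1))
      (if i = i0 then Iio t else if i0 < i then Ici s else univ) = _
  split_ifs
  · exact (measure_A ht hts hs).2.1
  · exact (measure_A ht hts hs).1
  · exact (measure_A ht hts hs).2.2

/-- Per-class lower bound on the sum of the measures of the cylinder pieces. -/
lemma class_sum_ge {t s : ℝ} (ht : 0 < t) (hts : t ≤ s) (hs : s ≤ 1) (m : ℕ) :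
    ENNReal.ofReal (t / s)
      ≤ ∑ o : Option (Fin m), ∏ i : Fin m,
          (volume.restrict (Icc (0 : ℝ) 1)) (A t s o i) := by
  have hs0 : 0 < s := lt_of_lt_of_le ht hts
  have h1s : (0 : ℝ) ≤ 1 - s := by linarith
  set b : ENNReal := ENNReal.ofReal (1 - s) with hb
  set a : ENNReal := ENNReal.ofReal t with ha
  have hprod_none : (∏ i : Fin m, (volume.restrict (Icc (0 : ℝ) 1)) (A t s none i))
      = b ^ m := by
    rw [Finset.prod_congr rfl (fun i _ => measure_A_none ht hts hs i)]
    simp [hb]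
  have hprod_some : ∀ i0 : Fin m,
      (∏ i : Fin m, (volume.restrict (Icc (0 : ℝ) 1)) (A t s (some i0) i))
        = a * b ^ (m - 1 - (i0 : ℕ)) := by
    intro i0
    rw [Finset.prod_congr rfl (fun i _ => measure_A_some ht hts hs i0 i)]
    rw [← Finset.mul_prod_erase Finset.univ _ (Finset.mem_univ i0), if_pos rfl]
    congr 1
    have : ∀ i ∈ Finset.univ.erase i0,
        (if i = i0 then a else if i0 < i then b else 1)
          = (if i0 < i then b else 1) := by
      intro i hi
      rw [if_neg (Finset.ne_of_mem_erase hi)]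
    rw [Finset.prod_congr rfl this, Finset.prod_ite, Finset.prod_const,
      Finset.prod_const, one_pow, mul_one]
    congr 1
    have hf : (Finset.univ.erase i0).filter (fun i => i0 < i) = Finset.Ioi i0 := by
      ext i
      simp only [Finset.mem_filter, Finset.mem_erase, Finset.mem_univ, Finset.mem_Ioi]
      constructor
      · rintro ⟨_, h⟩; exact h
      · intro h; exact ⟨⟨h.ne', trivial⟩, h⟩
    rw [hf, Fin.card_Ioi]
  have hsum : (∑ o : Option (Fin m), ∏ i : Fin m,
      (volume.restrict (Icc (0 : ℝ) 1)) (A t s o i))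
        = b ^ m + ∑ i0 : Fin m, a * b ^ (m - 1 - (i0 : ℕ)) := by
    rw [Fintype.sum_option, hprod_none]
    congr 1
    exact Finset.sum_congr rfl fun i0 _ => hprod_some i0
  rw [hsum]
  have hre : (∑ i0 : Fin m, a * b ^ (m - 1 - (i0 : ℕ)))
      = a * ∑ j ∈ Finset.range m, b ^ j := by
    rw [← Finset.mul_sum]
    congr 1
    rw [Fin.sum_univ_eq_sum_range (fun j => b ^ (m - 1 - j)) m]
    exact Finset.sum_range_reflect (fun j => b ^ j) m
  rw [hre]
  have hofr : b ^ m + a * ∑ j ∈ Finset.range m, b ^ j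
      = ENNReal.ofReal ((1 - s) ^ m + t * ∑ j ∈ Finset.range m, (1 - s) ^ j) := by
    rw [ENNReal.ofReal_add (pow_nonneg h1s m)
        (mul_nonneg ht.le (Finset.sum_nonneg fun j _ => pow_nonneg h1s j))]
    congr 1
    · rw [hb, ← ENNReal.ofReal_pow h1s]
    · rw [ENNReal.ofReal_mul ht.le, ha]
      congr 1
      rw [ENNReal.ofReal_sum_of_nonneg (fun j _ => pow_nonneg h1s j)]
      exact Finset.sum_congr rfl fun j _ => by rw [hb, ← ENNReal.ofReal_pow h1s]
  rw [hofr]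
  exact ENNReal.ofReal_le_ofReal (key_real ht hts hs m)

end NoRecordAux

/-- **Lemma.**  With `k ≥ 1` classes of uniquely ranked options of arbitrary sizes
`n l ≥ 0`, all arrival times independent and uniform on `[0,1]`, for all
`0 < t ≤ s ≤ 1` the probability that no record of any class arrives in `[t, s)` is at
least `(t / s) ^ k`. -/
theorem prob_no_record_any_class_ge
    {Ω : Type*} [MeasurableSpace Ω] (μ : Measure Ω) [IsProbabilityMeasure μ]
    (k : ℕ) (hk : 1 ≤ k) (n : Fin k → ℕ)
    (X : (Σ l : Fin k, Fin (n l)) → Ω → ℝ)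
    (hmeas : ∀ idx, Measurable (X idx))
    (hunif : ∀ idx, μ.map (X idx) = volume.restrict (Icc (0 : ℝ) 1))
    (hindep : iIndepFun X μ)
    (t s : ℝ) (ht : 0 < t) (hts : t ≤ s) (hs : s ≤ 1) :
    ENNReal.ofReal ((t / s) ^ k) ≤ μ (NoRecordAnyClassIn X t s) := by
  classical
  open NoRecordAux in
  set ν : Measure ℝ := volume.restrict (Icc (0 : ℝ) 1) with hν
  have hs0 : 0 < s := lt_of_lt_of_le ht hts
  have hXA : ∀ (idx : Σ l : Fin k, Fin (n l)) (B : Set ℝ), MeasurableSet B →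
      μ (X idx ⁻¹' B) = ν B := by
    intro idx B hB
    rw [← hunif idx, Measure.map_apply (hmeas idx) hB]
  set D : (∀ l : Fin k, Option (Fin (n l))) → Set Ω := fun c =>
    ⋂ idx : (Σ l : Fin k, Fin (n l)), X idx ⁻¹' A t s (c idx.1) idx.2 with hD
  have hDmeas : ∀ c, MeasurableSet (D c) := fun c =>
    MeasurableSet.iInter fun idx => (hmeas idx) (measurableSet_A t s _ _)
  have hDmeasure : ∀ c, μ (D c) = ∏ idx : (Σ l : Fin k, Fin (n l)),
      ν (A t s (c idx.1) idx.2) := by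
    intro c
    rw [hD]
    rw [hindep.meas_iInter (fun idx =>
      ⟨A t s (c idx.1) idx.2, measurableSet_A t s _ _, rfl⟩)]
    exact Finset.prod_congr rfl fun idx _ =>
      hXA idx _ (measurableSet_A t s _ _)
  have hsub : (⋃ c, D c) ⊆ NoRecordAnyClassIn X t s := by
    intro ω hω
    obtain ⟨c, hc⟩ := mem_iUnion.mp hω
    intro l i hrec hint
    obtain ⟨hti, his⟩ := hint
    have hmem : ∀ idx : (Σ l : Fin k, Fin (n l)),
        X idx ω ∈ A t s (c idx.1) idx.2 := fun idx => mem_iInter.mp hc idx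
    cases hcl : c l with
    | none =>
      have h := hmem ⟨l, i⟩
      rw [hcl] at h
      exact absurd (lt_of_lt_of_le his (le_refl s)) (not_lt.mpr h)
    | some i0 =>
      have h0 := hmem ⟨l, i0⟩
      rw [hcl] at h0
      simp only [A, if_pos rfl] at h0
      have hlt : X ⟨l, i0⟩ ω < X ⟨l, i⟩ ω := lt_of_lt_of_le h0 hti
      have hio : i0 < i := hrec i0 hlt
      have h1 := hmem ⟨l, i⟩
      rw [hcl] at h1
      simp only [A, if_neg hio.ne', if_pos hio] at h1
      exact absurd his (not_lt.mpr h1)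
  have hdisj : Pairwise (Function.onFun Disjoint D) := by
    intro c c' hne
    obtain ⟨l, hl⟩ := Function.ne_iff.mp hne
    obtain ⟨i, hdis⟩ := disjoint_A hts hl
    exact Set.disjoint_of_subset
      (iInter_subset _ (⟨l, i⟩ : Σ l : Fin k, Fin (n l)))
      (iInter_subset _ (⟨l, i⟩ : Σ l : Fin k, Fin (n l)))
      (hdis.preimage _)
  calc ENNReal.ofReal ((t / s) ^ k)
      = ∏ _l : Fin k, ENNReal.ofReal (t / s) := by
        rw [ENNReal.ofReal_pow (div_nonneg ht.le hs0.le), Finset.prod_const,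
          Finset.card_univ, Fintype.card_fin]
    _ ≤ ∏ l : Fin k, ∑ o : Option (Fin (n l)), ∏ i : Fin (n l), ν (A t s o i) :=
        Finset.prod_le_prod' fun l _ => class_sum_ge ht hts hs (n l)
    _ = ∑ c : (∀ l : Fin k, Option (Fin (n l))), ∏ l : Fin k,
          ∏ i : Fin (n l), ν (A t s (c l) i) := Fintype.prod_sum _
    _ = ∑ c : (∀ l : Fin k, Option (Fin (n l))), μ (D c) := by
        refine Finset.sum_congr rfl fun c _ => ?_
        rw [hDmeasure c, ← Finset.univ_sigma_univ, Finset.prod_sigma]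
    _ = μ (⋃ c, D c) := by rw [measure_iUnion hdisj hDmeas, tsum_fintype]
    _ ≤ μ (NoRecordAnyClassIn X t s) := measure_mono hsub
end
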